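/- arXiv:2112.14945 — 7 statements merged into one kernel-verified Lean document; each statement's English description precedes it below -/
import Mathlib

section
/- Let n ≥ 1 and let σ and τ be permutations of {1,…,n}. Then the multiset of unordered pairs {i, σ(i)}, as i ranges over {1,…,n}, equals the multiset of unordered pairs {i, τ(i)} if and only if σ and τ are cycle-similar. Consequently, an n×n real symmetric matrix A is symmetrically tropically singular if and only if there exist two cycle-distinct permutations that both attain the minimum of ∑_i A_{i,σ(i)} over all permutations σ. -/
/-!
Common definitions for tropical geometry of symmetric matrices, following
Develin–Santos–Sturmfels and the paper under formalization.
-/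

open Matrix

noncomputable section

/-- The field `K` of Hahn series over `ℂ` with value group `ℝ`. -/
abbrev K : Type := HahnSeries ℝ ℂ

/-- The multiset of unordered pairs `{row s, col (σ s)}` (the "monomial") associated to the
bijection, from the row indices to the column indices, determined by the permutation `σ`. -/
def tropPairs {n r : ℕ} (row col : Fin r → Fin n) (σ : Equiv.Perm (Fin r)) :
    Multiset (Sym2 (Fin n)) :=
  Finset.univ.val.map fun s => Sym2.mk (row s) (col (σ s))

/-- The value `∑ s, A (row s) (col (σ s))` of the bijection determined by `σ` on the
submatrix of `A` with row indices `row` and column indices `col`. -/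
def tropVal {n r : ℕ} (A : Matrix (Fin n) (Fin n) ℝ) (row col : Fin r → Fin n)
    (σ : Equiv.Perm (Fin r)) : ℝ :=
  ∑ s, A (row s) (col (σ s))

/-- The bijection determined by `σ` is minimizing for the submatrix of `A` given by
`row`, `col`. -/
def Minimizing {n r : ℕ} (A : Matrix (Fin n) (Fin n) ℝ) (row col : Fin r → Fin n)
    (σ : Equiv.Perm (Fin r)) : Prop :=
  ∀ τ : Equiv.Perm (Fin r), tropVal A row col σ ≤ tropVal A row col τ

/-- The submatrix of `A` given by `row`, `col` is tropically singular: at least two distinct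
bijections are minimizing. -/
def TropSing {n r : ℕ} (A : Matrix (Fin n) (Fin n) ℝ) (row col : Fin r → Fin n) : Prop :=
  ∃ σ τ : Equiv.Perm (Fin r), σ ≠ τ ∧ Minimizing A row col σ ∧ Minimizing A row col τ

/-- The submatrix of `A` given by `row`, `col` is symmetrically tropically singular:
two bijections with distinct monomials (multisets of unordered pairs) are both minimizing. -/
def SymTropSing {n r : ℕ} (A : Matrix (Fin n) (Fin n) ℝ) (row col : Fin r → Fin n) : Prop :=
  ∃ σ τ : Equiv.Perm (Fin r), tropPairs row col σ ≠ tropPairs row col τ ∧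
    Minimizing A row col σ ∧ Minimizing A row col τ

/-- The tropical rank of `A`: the largest `r` such that some `r × r` submatrix of `A`
(given by strictly increasing row and column indices) is not tropically singular. -/
def tropicalRank {n : ℕ} (A : Matrix (Fin n) (Fin n) ℝ) : ℕ :=
  sSup {r | ∃ row col : Fin r → Fin n, StrictMono row ∧ StrictMono col ∧ ¬ TropSing A row col}

/-- The symmetric tropical rank of `A`: the largest `r` such that some `r × r` submatrix of `A`
is not symmetrically tropically singular. -/
def symTropicalRank {n : ℕ} (A : Matrix (Fin n) (Fin n) ℝ) : ℕ :=
  sSup {r | ∃ row col : Fin r → Fin n, StrictMono row ∧ StrictMono col ∧ ¬ SymTropSing A row col}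

/-- `B` is a lift of the real matrix `A` over the Hahn series field `K`: all entries of `B`
are nonzero and the degree (least exponent of the support, `HahnSeries.order`) of `B i j`
equals `A i j`. -/
def IsLift {n : ℕ} (A : Matrix (Fin n) (Fin n) ℝ) (B : Matrix (Fin n) (Fin n) K) : Prop :=
  ∀ i j, B i j ≠ 0 ∧ (B i j).order = A i j

/-- The Kapranov rank of `A`: the minimum rank of a lift of `A`. -/
def kapranovRank {n : ℕ} (A : Matrix (Fin n) (Fin n) ℝ) : ℕ :=
  sInf {r | ∃ B : Matrix (Fin n) (Fin n) K, IsLift A B ∧ B.rank = r}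

/-- The symmetric Kapranov rank of `A`: the minimum rank of a symmetric lift of `A`. -/
def symKapranovRank {n : ℕ} (A : Matrix (Fin n) (Fin n) ℝ) : ℕ :=
  sInf {r | ∃ B : Matrix (Fin n) (Fin n) K, IsLift A B ∧ B.IsSymm ∧ B.rank = r}

/-- Two permutations are cycle-similar if every cycle factor of either one is a cycle factor
of the other or the inverse of such. -/
def CycleSimilar {α : Type*} [Fintype α] [DecidableEq α] (σ τ : Equiv.Perm α) : Prop :=
  (∀ c ∈ σ.cycleFactorsFinset, c ∈ τ.cycleFactorsFinset ∨ c⁻¹ ∈ τ.cycleFactorsFinset) ∧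
  (∀ c ∈ τ.cycleFactorsFinset, c ∈ σ.cycleFactorsFinset ∨ c⁻¹ ∈ σ.cycleFactorsFinset)

/-- The multiset of unordered pairs `{i, σ i}` of a permutation `σ` of `Fin n`. -/
def permPairs {n : ℕ} (σ : Equiv.Perm (Fin n)) : Multiset (Sym2 (Fin n)) :=
  Finset.univ.val.map fun i => Sym2.mk i (σ i)

/-- The value `∑ i, A i (σ i)` of a permutation `σ` on the full matrix `A`. -/
def permVal {n : ℕ} (A : Matrix (Fin n) (Fin n) ℝ) (σ : Equiv.Perm (Fin n)) : ℝ :=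
  ∑ i, A i (σ i)

/-- `σ` attains the minimum of `∑ i, A i (σ i)` over all permutations. -/
def PermMinimizing {n : ℕ} (A : Matrix (Fin n) (Fin n) ℝ) (σ : Equiv.Perm (Fin n)) : Prop :=
  ∀ τ : Equiv.Perm (Fin n), permVal A σ ≤ permVal A τ

section PairsLemmas

set_option linter.unusedSectionVars false

variable {α : Type*} [Fintype α] [DecidableEq α]

/-- pairs of a permutation -/
def pPairs (σ : Equiv.Perm α) : Multiset (Sym2 α) :=
  Finset.univ.val.map fun i => s(i, σ i)

lemma map_val_stable (π : Equiv.Perm α) (s : Finset α) (hs : ∀ i ∈ s, π i ∈ s) :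
    s.val.map ⇑π = s.val := by
  have hnd : (s.val.map ⇑π).Nodup := s.nodup.map π.injective
  have hle : s.val.map ⇑π ≤ s.val := by
    rw [Multiset.le_iff_subset hnd]
    intro x hx
    obtain ⟨i, hi, rfl⟩ := Multiset.mem_map.mp hx
    exact hs i hi
  exact Multiset.eq_of_le_of_card_le hle (by simp)

lemma pairsOn_inv (π : Equiv.Perm α) (s : Finset α) (hs : ∀ i ∈ s, π i ∈ s) :
    s.val.map (fun i => s(i, π i)) = s.val.map (fun i => s(i, π⁻¹ i)) := by
  conv_rhs => rw [← map_val_stable π s hs, Multiset.map_map]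
  apply Multiset.map_congr rfl
  intro j _
  simp [Sym2.eq_swap]

lemma pPairs_inv (σ : Equiv.Perm α) : pPairs σ⁻¹ = pPairs σ := by
  unfold pPairs
  rw [pairsOn_inv σ Finset.univ (by simp)]

lemma count_pPairs (σ : Equiv.Perm α) (e : Sym2 α) :
    Multiset.count e (pPairs σ) =
      (Finset.univ.filter (fun j => e = s(j, σ j))).card := by
  unfold pPairs
  rw [Multiset.count_map]
  rfl

lemma countP_pPairs (σ : Equiv.Perm α) (x : α) :
    Multiset.countP (fun p => x ∈ p) (pPairs σ) =
      (Finset.univ.filter (fun j => x ∈ s(j, σ j))).card := by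
  unfold pPairs
  rw [Multiset.countP_map]
  rfl

lemma keystep {σ τ : Equiv.Perm α} (h : pPairs σ = pPairs τ) {y : α} (hy : σ y ≠ y)
    (h1 : τ y = σ y) : τ (σ y) = σ (σ y) := by
  have hcount := congrArg (Multiset.count (s(y, σ y))) h
  rw [count_pPairs, count_pPairs] at hcount
  by_cases hA : σ (σ y) = y
  · rw [hA]
    have hfσ : Finset.univ.filter (fun j => s(y, σ y) = s(j, σ j)) = {y, σ y} := by
      ext j
      simp only [Finset.mem_filter, Finset.mem_univ, true_and, Finset.mem_insert,
        Finset.mem_singleton, Sym2.eq_iff]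
      constructor
      · rintro (⟨rfl, -⟩ | ⟨-, rfl⟩) <;> simp
      · rintro (rfl | rfl)
        · exact Or.inl ⟨rfl, rfl⟩
        · exact Or.inr ⟨hA.symm, rfl⟩
    have hsub : Finset.univ.filter (fun j => s(y, σ y) = s(j, τ j)) ⊆ {y, σ y} := by
      intro j hj
      simp only [Finset.mem_filter, Finset.mem_univ, true_and, Sym2.eq_iff] at hj
      rcases hj with ⟨rfl, -⟩ | ⟨-, rfl⟩ <;> simp
    have hcard2 : ({y, σ y} : Finset α).card = 2 := by
      rw [Finset.card_insert_of_notMem (by simpa using Ne.symm hy), Finset.card_singleton]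
    have heq : Finset.univ.filter (fun j => s(y, σ y) = s(j, τ j)) = {y, σ y} := by
      apply Finset.eq_of_subset_of_card_le hsub
      rw [← hcount, hfσ, hcard2]
    have : σ y ∈ Finset.univ.filter (fun j => s(y, σ y) = s(j, τ j)) := by
      rw [heq]; simp
    simp only [Finset.mem_filter, Finset.mem_univ, true_and, Sym2.eq_iff] at this
    rcases this with ⟨hc1, -⟩ | ⟨hc1, -⟩
    · exact absurd hc1.symm hy
    · exact hc1.symm
  · -- σ (σ y) ≠ y
    have hfσ : Finset.univ.filter (fun j => s(y, σ y) = s(j, σ j)) = {y} := by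
      ext j
      simp only [Finset.mem_filter, Finset.mem_univ, true_and, Finset.mem_singleton, Sym2.eq_iff]
      constructor
      · rintro (⟨rfl, -⟩ | ⟨h1', rfl⟩)
        · rfl
        · exact absurd h1'.symm hA
      · rintro rfl
        exact Or.inl ⟨rfl, rfl⟩
    have hne : τ (σ y) ≠ y := by
      intro hcon
      have : ({y, σ y} : Finset α) ⊆
          Finset.univ.filter (fun j => s(y, σ y) = s(j, τ j)) := by
        intro j hj
        simp only [Finset.mem_insert, Finset.mem_singleton] at hj
        rcases hj with rfl | rfl
        · simp [h1]
        · simp [Sym2.eq_iff, hcon]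
      have hle := Finset.card_le_card this
      rw [← hcount, hfσ, Finset.card_singleton,
        Finset.card_insert_of_notMem (by simpa using Ne.symm hy), Finset.card_singleton] at hle
      omega
    by_contra hcon
    -- derive τ (σ (σ y)) = σ y
    have hmem : s(σ y, σ (σ y)) ∈ pPairs τ := by
      rw [← h]
      exact Multiset.mem_map.mpr ⟨σ y, by simp, rfl⟩
    obtain ⟨j, -, hj⟩ := Multiset.mem_map.mp hmem
    rcases Sym2.eq_iff.mp hj with ⟨rfl, hj2⟩ | ⟨hj1, hj2⟩
    · exact hcon hj2
    · subst hj1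
      -- hj2 : τ (σ (σ y)) = σ y ; degree of σ y contradiction
      have hdeg := congrArg (Multiset.countP (fun p => σ y ∈ p)) h
      rw [countP_pPairs, countP_pPairs] at hdeg
      have hfσ' : Finset.univ.filter (fun j => σ y ∈ s(j, σ j)) = {y, σ y} := by
        ext j
        simp only [Finset.mem_filter, Finset.mem_univ, true_and, Finset.mem_insert,
          Finset.mem_singleton, Sym2.mem_iff]
        constructor
        · rintro (rfl | hj')
          · simp
          · exact Or.inl (σ.injective hj').symm
        · rintro (rfl | rfl) <;> simp
      have hsub3 : ({y, σ y, σ (σ y)} : Finset α) ⊆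
          Finset.univ.filter (fun j => σ y ∈ s(j, τ j)) := by
        intro j hj'
        simp only [Finset.mem_insert, Finset.mem_singleton] at hj'
        rcases hj' with rfl | rfl | rfl
        · simp [h1]
        · simp
        · simp [hj2]
      have hcard3 : ({y, σ y, σ (σ y)} : Finset α).card = 3 := by
        rw [Finset.card_insert_of_notMem, Finset.card_insert_of_notMem, Finset.card_singleton]
        · simpa using fun h' => hy (σ.injective h').symm
        · simp only [Finset.mem_insert, Finset.mem_singleton]
          push_neg
          exact ⟨Ne.symm hy, fun h' => hA h'.symm⟩
      have hle := Finset.card_le_card hsub3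
      rw [hcard3, ← hdeg, hfσ'] at hle
      have : ({y, σ y} : Finset α).card = 2 := by
        rw [Finset.card_insert_of_notMem (by simpa using Ne.symm hy), Finset.card_singleton]
      omega

lemma orbit_agree {σ τ : Equiv.Perm α} (h : pPairs σ = pPairs τ) {x : α} (hx : σ x ≠ x)
    (h1 : τ x = σ x) : ∀ k : ℕ, τ ((σ ^ k) x) = σ ((σ ^ k) x) := by
  intro k
  induction k with
  | zero => simpa using h1
  | succ k ih =>
    have hsup : σ ((σ ^ k) x) ≠ (σ ^ k) x := by
      intro hcon
      apply hx
      have h2 : (σ ^ k) (σ x) = (σ ^ k) x := by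
        rw [← Equiv.Perm.mul_apply, ← pow_succ, pow_succ', Equiv.Perm.mul_apply, hcon]
      exact (σ ^ k).injective h2
    have hs : (σ ^ (k + 1)) x = σ ((σ ^ k) x) := by
      rw [pow_succ', Equiv.Perm.mul_apply]
    rw [hs]
    exact keystep h hsup ih

lemma pow_agree {σ τ : Equiv.Perm α} (h : pPairs σ = pPairs τ) {x : α} (hx : σ x ≠ x)
    (h1 : τ x = σ x) : ∀ k : ℕ, (τ ^ k) x = (σ ^ k) x := by
  intro k
  induction k with
  | zero => rfl
  | succ k ih =>
    rw [pow_succ', pow_succ', Equiv.Perm.mul_apply, Equiv.Perm.mul_apply, ih]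
    exact orbit_agree h hx h1 k

lemma cycleOf_agree {σ τ : Equiv.Perm α} (h : pPairs σ = pPairs τ) {x : α} (hx : σ x ≠ x)
    (h1 : τ x = σ x) : σ.cycleOf x = τ.cycleOf x := by
  have hsc : ∀ y, σ.SameCycle x y ↔ τ.SameCycle x y := by
    intro y
    constructor
    · intro hy
      obtain ⟨k, -, rfl⟩ := hy.exists_pow_eq'
      exact ⟨k, by rw [zpow_natCast, pow_agree h hx h1]⟩
    · intro hy
      obtain ⟨k, -, rfl⟩ := hy.exists_pow_eq'
      rw [pow_agree h hx h1]
      exact ⟨k, by rw [zpow_natCast]⟩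
  ext y
  rw [Equiv.Perm.cycleOf_apply, Equiv.Perm.cycleOf_apply]
  by_cases hy : σ.SameCycle x y
  · rw [if_pos hy, if_pos ((hsc y).mp hy)]
    obtain ⟨k, -, rfl⟩ := hy.exists_pow_eq'
    exact (orbit_agree h hx h1 k).symm
  · rw [if_neg hy, if_neg (fun h' => hy ((hsc y).mpr h'))]

lemma inv_mem_factors {c σ : Equiv.Perm α} (hc : c ∈ σ.cycleFactorsFinset) :
    c⁻¹ ∈ (σ⁻¹).cycleFactorsFinset := by
  rw [Equiv.Perm.mem_cycleFactorsFinset_iff] at hc ⊢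
  refine ⟨hc.1.inv, ?_⟩
  intro a ha
  rw [Equiv.Perm.support_inv] at ha
  have hmem : c⁻¹ a ∈ c.support := by
    rw [← Equiv.Perm.support_inv, Equiv.Perm.apply_mem_support, Equiv.Perm.support_inv]
    exact ha
  have h2 : σ (c⁻¹ a) = a := by
    rw [← hc.2 _ hmem]; simp
  rw [Equiv.Perm.eq_inv_iff_eq]
  exact h2

lemma forward_half {σ τ : Equiv.Perm α} (h : pPairs σ = pPairs τ) :
    ∀ c ∈ σ.cycleFactorsFinset, c ∈ τ.cycleFactorsFinset ∨ c⁻¹ ∈ τ.cycleFactorsFinset := by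
  intro c hc
  obtain ⟨x, hx⟩ := (Equiv.Perm.mem_cycleFactorsFinset_iff.mp hc).1.nonempty_support
  have hcx : c = σ.cycleOf x := Equiv.Perm.cycle_is_cycleOf hx hc
  have hxσ : σ x ≠ x :=
    Equiv.Perm.mem_support.mp (Equiv.Perm.mem_cycleFactorsFinset_support_le hc hx)
  have hmem : s(x, σ x) ∈ pPairs τ := by
    rw [← h]
    exact Multiset.mem_map.mpr ⟨x, by simp, rfl⟩
  obtain ⟨j, -, hj⟩ := Multiset.mem_map.mp hmem
  rcases Sym2.eq_iff.mp hj with ⟨rfl, h1⟩ | ⟨hj1, hj2⟩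
  · left
    rw [hcx, cycleOf_agree h hxσ h1]
    exact Equiv.Perm.cycleOf_mem_cycleFactorsFinset_iff.mpr
      (Equiv.Perm.mem_support.mpr (by rw [h1]; exact hxσ))
  · subst hj1
    right
    have h1' : τ⁻¹ x = σ x := by rw [Equiv.Perm.inv_eq_iff_eq]; exact hj2.symm
    have h' : pPairs σ = pPairs τ⁻¹ := h.trans (pPairs_inv τ).symm
    have hτx : τ⁻¹ x ≠ x := by rw [h1']; exact hxσ
    have hmem' : c ∈ (τ⁻¹).cycleFactorsFinset := by
      rw [hcx, cycleOf_agree h' hxσ h1']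
      exact Equiv.Perm.cycleOf_mem_cycleFactorsFinset_iff.mpr (Equiv.Perm.mem_support.mpr hτx)
    have := inv_mem_factors hmem'
    rwa [inv_inv] at this

lemma pPairs_split (σ : Equiv.Perm α) (s : Finset α) :
    pPairs σ = s.val.map (fun i => s(i, σ i)) + sᶜ.val.map (fun i => s(i, σ i)) := by
  unfold pPairs
  rw [← Multiset.map_add]
  congr 1
  have : (Finset.univ : Finset α) = s.disjUnion sᶜ disjoint_compl_right := by
    rw [Finset.disjUnion_eq_union, Finset.union_compl]
  rw [this]
  rfl

lemma factor_inv_eq {σ c e : Equiv.Perm α} (hc : c ∈ σ.cycleFactorsFinset)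
    (he : e ∈ σ.cycleFactorsFinset) (h : e = c⁻¹) : e = c := by
  by_contra hne
  have hd : Equiv.Perm.Disjoint c e :=
    Equiv.Perm.cycleFactorsFinset_pairwise_disjoint σ hc he (Ne.symm hne)
  have hds := hd.disjoint_support
  have hsupp : e.support = c.support := by rw [h, Equiv.Perm.support_inv]
  obtain ⟨x, hx⟩ := (Equiv.Perm.mem_cycleFactorsFinset_iff.mp hc).1.nonempty_support
  exact Finset.disjoint_left.mp hds hx (hsupp ▸ hx)

lemma main_step {N : ℕ}
    (ih : ∀ σ τ : Equiv.Perm α, σ.cycleFactorsFinset.card ≤ N → CycleSimilar σ τ →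
      pPairs σ = pPairs τ)
    (σ τ : Equiv.Perm α) (hcard : σ.cycleFactorsFinset.card ≤ N + 1) (hcs : CycleSimilar σ τ)
    (c : Equiv.Perm α) (hc : c ∈ σ.cycleFactorsFinset) (d : Equiv.Perm α)
    (hd : d ∈ τ.cycleFactorsFinset) (hdd : d = c ∨ d = c⁻¹) :
    pPairs σ = pPairs τ := by
  have hsuppd : d.support = c.support := by
    rcases hdd with rfl | rfl
    · rfl
    · exact Equiv.Perm.support_inv c
  have hdisjσ := Equiv.Perm.disjoint_mul_inv_of_mem_cycleFactorsFinset hc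
  have hdisjτ := Equiv.Perm.disjoint_mul_inv_of_mem_cycleFactorsFinset hd
  have hfσ' := Equiv.Perm.cycleFactorsFinset_mul_inv_mem_eq_sdiff hc
  have hfτ' := Equiv.Perm.cycleFactorsFinset_mul_inv_mem_eq_sdiff hd
  -- cycle similarity of the reduced permutations
  have hcs' : CycleSimilar (σ * c⁻¹) (τ * d⁻¹) := by
    constructor
    · intro e he
      rw [hfσ', Finset.mem_sdiff, Finset.mem_singleton] at he
      obtain ⟨heσ, hec⟩ := he
      rcases hcs.1 e heσ with h' | h'
      · left
        rw [hfτ', Finset.mem_sdiff, Finset.mem_singleton]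
        refine ⟨h', ?_⟩
        intro hed
        rcases hdd with rfl | rfl
        · exact hec hed
        · exact hec (factor_inv_eq hc heσ hed)
      · right
        rw [hfτ', Finset.mem_sdiff, Finset.mem_singleton]
        refine ⟨h', ?_⟩
        intro hed
        rcases hdd with rfl | rfl
        · exact hec (factor_inv_eq hc heσ (by rw [← hed, inv_inv]))
        · exact hec (inv_injective hed)
    · intro f hf
      rw [hfτ', Finset.mem_sdiff, Finset.mem_singleton] at hf
      obtain ⟨hfτ, hfd⟩ := hf
      rcases hcs.2 f hfτ with h' | h'
      · left
        rw [hfσ', Finset.mem_sdiff, Finset.mem_singleton]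
        refine ⟨h', ?_⟩
        intro hfc
        rcases hdd with rfl | rfl
        · exact hfd hfc
        · exact hfd (factor_inv_eq hfτ hd (by rw [hfc])).symm
      · right
        rw [hfσ', Finset.mem_sdiff, Finset.mem_singleton]
        refine ⟨h', ?_⟩
        intro hfc
        have hfc' : f = c⁻¹ := by rw [← hfc, inv_inv]
        rcases hdd with rfl | rfl
        · exact hfd (factor_inv_eq hd hfτ hfc')
        · exact hfd (hfc' ▸ rfl)
  have hcard' : (σ * c⁻¹).cycleFactorsFinset.card ≤ N := by
    rw [hfσ', Finset.card_sdiff_of_subset (Finset.singleton_subset_iff.mpr hc), Finset.card_singleton]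
    omega
  have hIH := ih _ _ hcard' hcs'
  -- pointwise facts
  have hσ_in : ∀ i ∈ c.support, σ i = c i :=
    fun i hi => ((Equiv.Perm.mem_cycleFactorsFinset_iff.mp hc).2 i hi).symm
  have hτ_in : ∀ i ∈ c.support, τ i = d i :=
    fun i hi => ((Equiv.Perm.mem_cycleFactorsFinset_iff.mp hd).2 i (hsuppd ▸ hi)).symm
  have hσ'_in : ∀ i ∈ c.support, (σ * c⁻¹) i = i := by
    intro i hi
    rcases hdisjσ i with h' | h'
    · exact h'
    · exact absurd h' (Equiv.Perm.mem_support.mp hi)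
  have hτ'_in : ∀ i ∈ c.support, (τ * d⁻¹) i = i := by
    intro i hi
    rcases hdisjτ i with h' | h'
    · exact h'
    · exact absurd h' (Equiv.Perm.mem_support.mp (hsuppd ▸ hi))
  have hσ'_out : ∀ i ∈ c.supportᶜ, (σ * c⁻¹) i = σ i := by
    intro i hi
    have : c⁻¹ i = i := by
      rw [Equiv.Perm.inv_eq_iff_eq]
      exact (Equiv.Perm.notMem_support.mp (Finset.mem_compl.mp hi)).symm
    rw [Equiv.Perm.mul_apply, this]
  have hτ'_out : ∀ i ∈ c.supportᶜ, (τ * d⁻¹) i = τ i := by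
    intro i hi
    have : d⁻¹ i = i := by
      rw [Equiv.Perm.inv_eq_iff_eq]
      exact (Equiv.Perm.notMem_support.mp (by rw [hsuppd]; exact Finset.mem_compl.mp hi)).symm
    rw [Equiv.Perm.mul_apply, this]
  -- decompositions
  have key_σ : pPairs σ = c.support.val.map (fun i => s(i, c i)) +
      c.supportᶜ.val.map (fun i => s(i, (σ * c⁻¹) i)) := by
    rw [pPairs_split σ c.support]
    congr 1
    · exact Multiset.map_congr rfl fun i hi => by rw [hσ_in i hi]
    · exact Multiset.map_congr rfl fun i hi => by rw [hσ'_out i hi]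
  have key_τ : pPairs τ = c.support.val.map (fun i => s(i, d i)) +
      c.supportᶜ.val.map (fun i => s(i, (τ * d⁻¹) i)) := by
    rw [pPairs_split τ c.support]
    congr 1
    · exact Multiset.map_congr rfl fun i hi => by rw [hτ_in i hi]
    · exact Multiset.map_congr rfl fun i hi => by rw [hτ'_out i hi]
  have key_σ' : pPairs (σ * c⁻¹) = c.support.val.map (fun i => s(i, i)) +
      c.supportᶜ.val.map (fun i => s(i, (σ * c⁻¹) i)) := by
    rw [pPairs_split (σ * c⁻¹) c.support]
    congr 1
    exact Multiset.map_congr rfl fun i hi => by rw [hσ'_in i hi]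
  have key_τ' : pPairs (τ * d⁻¹) = c.support.val.map (fun i => s(i, i)) +
      c.supportᶜ.val.map (fun i => s(i, (τ * d⁻¹) i)) := by
    rw [pPairs_split (τ * d⁻¹) c.support]
    congr 1
    exact Multiset.map_congr rfl fun i hi => by rw [hτ'_in i hi]
  rw [key_σ', key_τ'] at hIH
  have hXY := add_left_cancel hIH
  rw [key_σ, key_τ, hXY]
  congr 1
  rcases hdd with rfl | rfl
  · rfl
  · exact pairsOn_inv c c.support fun i hi => Equiv.Perm.apply_mem_support.mpr hi

lemma backward_aux : ∀ (N : ℕ) (σ τ : Equiv.Perm α), σ.cycleFactorsFinset.card ≤ N →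
    CycleSimilar σ τ → pPairs σ = pPairs τ := by
  intro N
  induction N with
  | zero =>
    intro σ τ hcard hcs
    have hσ : σ = 1 := by
      rw [← Equiv.Perm.cycleFactorsFinset_eq_empty_iff]
      exact Finset.card_eq_zero.mp (Nat.le_zero.mp hcard)
    have hτ : τ = 1 := by
      rw [← Equiv.Perm.cycleFactorsFinset_eq_empty_iff]
      rw [Finset.eq_empty_iff_forall_notMem]
      intro c hc
      rcases hcs.2 c hc with h' | h' <;>
        simp [hσ, Equiv.Perm.cycleFactorsFinset_eq_empty_iff.mpr rfl] at h'
    rw [hσ, hτ]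
  | succ N ih =>
    intro σ τ hcard hcs
    by_cases hempty : σ.cycleFactorsFinset = ∅
    · exact ih σ τ (by simp [hempty]) hcs
    obtain ⟨c, hc⟩ := Finset.nonempty_iff_ne_empty.mpr hempty
    -- choose d
    by_cases hdc : c ∈ τ.cycleFactorsFinset
    case pos =>
      exact main_step ih σ τ hcard hcs c hc c hdc (Or.inl rfl)
    case neg =>
      have hd : c⁻¹ ∈ τ.cycleFactorsFinset := (hcs.1 c hc).resolve_left hdc
      exact main_step ih σ τ hcard hcs c hc c⁻¹ hd (Or.inr rfl)

lemma pPairs_eq_iff (σ τ : Equiv.Perm α) : pPairs σ = pPairs τ ↔ CycleSimilar σ τ :=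
  ⟨fun h => ⟨forward_half h, forward_half h.symm⟩,
    fun h => backward_aux σ.cycleFactorsFinset.card σ τ le_rfl h⟩

lemma permPairs_eq_iff {n : ℕ} (σ τ : Equiv.Perm (Fin n)) :
    permPairs σ = permPairs τ ↔ CycleSimilar σ τ :=
  pPairs_eq_iff σ τ

end PairsLemmas

/-- For `n ≥ 1` and permutations `σ`, `τ` of `{1,…,n}`, the multiset of unordered
pairs `{i, σ i}` equals that of `τ` iff `σ` and `τ` are cycle-similar. Consequently, a symmetric
matrix `A` is symmetrically tropically singular iff two cycle-distinct permutations both attain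
the minimum of `∑ i, A i (σ i)`. -/
theorem stmt0 (n : ℕ) (hn : 1 ≤ n) (σ τ : Equiv.Perm (Fin n))
    (A : Matrix (Fin n) (Fin n) ℝ) (hA : A.IsSymm) :
    (permPairs σ = permPairs τ ↔ CycleSimilar σ τ) ∧
    ((∃ σ' τ' : Equiv.Perm (Fin n), permPairs σ' ≠ permPairs τ' ∧
        PermMinimizing A σ' ∧ PermMinimizing A τ') ↔
      (∃ σ' τ' : Equiv.Perm (Fin n), ¬ CycleSimilar σ' τ' ∧
        PermMinimizing A σ' ∧ PermMinimizing A τ')) := by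
  refine ⟨permPairs_eq_iff σ τ, ?_⟩
  constructor
  · rintro ⟨σ', τ', h1, h2, h3⟩
    exact ⟨σ', τ', fun hcs => h1 ((permPairs_eq_iff σ' τ').mpr hcs), h2, h3⟩
  · rintro ⟨σ', τ', h1, h2, h3⟩
    exact ⟨σ', τ', fun hp => h1 ((permPairs_eq_iff σ' τ').mp hp), h2, h3⟩

end
end

section
/- An n×n real symmetric matrix A has tropical rank one if and only if it has symmetric tropical rank one; equivalently, for n ≥ 2, every 2×2 submatrix of A is tropically singular if and only if every 2×2 submatrix of A is symmetrically tropically singular. -/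
/-!
Common definitions for tropical geometry of symmetric matrices, following
Develin–Santos–Sturmfels and the paper under formalization.
-/

open Matrix

noncomputable section

lemma perm2 : ∀ σ : Equiv.Perm (Fin 2), σ = 1 ∨ σ = Equiv.swap (0:Fin 2) (1:Fin 2) := by decide

lemma swap_pairs_ne {n r : ℕ} {row col : Fin r → Fin n}
    (hrow : Function.Injective row) (hcol : Function.Injective col)
    {a b : Fin r} (hab : a ≠ b) :
    tropPairs row col 1 ≠ tropPairs row col (Equiv.swap a b) := by
  classical
  intro h
  set R : Multiset (Fin r) := (Finset.univ.val.erase a).erase b with hR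
  have ham : a ∈ (Finset.univ.val : Multiset (Fin r)) := Finset.mem_univ_val a
  have hbmem : b ∈ Finset.univ.val.erase a :=
    (Multiset.mem_erase_of_ne (Ne.symm hab)).2 (Finset.mem_univ_val b)
  have hsplit : (Finset.univ.val : Multiset (Fin r)) = a ::ₘ b ::ₘ R := by
    rw [hR, Multiset.cons_erase hbmem, Multiset.cons_erase ham]
  have hnd1 : (Finset.univ.val : Multiset (Fin r)).Nodup := Finset.univ.nodup
  have hnd2 : (Finset.univ.val.erase a).Nodup := hnd1.erase a
  have key : tropPairs row col 1
      = Sym2.mk (row a) (col a) ::ₘ Sym2.mk (row b) (col b) ::ₘ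
        R.map (fun u => Sym2.mk (row u) (col u)) := by
    unfold tropPairs
    rw [hsplit]
    simp [Multiset.map_cons]
  have key2 : tropPairs row col (Equiv.swap a b)
      = Sym2.mk (row a) (col b) ::ₘ Sym2.mk (row b) (col a) ::ₘ
        R.map (fun u => Sym2.mk (row u) (col u)) := by
    unfold tropPairs
    rw [hsplit, Multiset.map_cons, Multiset.map_cons,
      Equiv.swap_apply_left, Equiv.swap_apply_right]
    congr 1
    congr 1
    refine Multiset.map_congr rfl ?_
    intro u hu
    have hub : u ≠ b := by
      rintro rfl
      exact hnd2.not_mem_erase hu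
    have hua : u ≠ a := by
      rintro rfl
      exact hnd1.not_mem_erase (Multiset.mem_of_mem_erase hu)
    rw [Equiv.swap_apply_of_ne_of_ne hua hub]
  rw [key, key2] at h
  have h2 : ({Sym2.mk (row a) (col a), Sym2.mk (row b) (col b)} : Multiset (Sym2 (Fin n)))
      + R.map (fun u => Sym2.mk (row u) (col u))
      = ({Sym2.mk (row a) (col b), Sym2.mk (row b) (col a)} : Multiset (Sym2 (Fin n)))
      + R.map (fun u => Sym2.mk (row u) (col u)) := by
    simpa [Multiset.insert_eq_cons, Multiset.cons_add, Multiset.singleton_add] using h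
  have h3 := add_right_cancel h2
  have hm : Sym2.mk (row a) (col a)
      ∈ ({Sym2.mk (row a) (col b), Sym2.mk (row b) (col a)} : Multiset (Sym2 (Fin n))) := by
    rw [← h3]; simp
  simp only [Multiset.insert_eq_cons, Multiset.mem_cons, Multiset.mem_singleton] at hm
  rcases hm with hm | hm <;> rw [Sym2.eq_iff] at hm <;>
    rcases hm with ⟨h1', h2'⟩ | ⟨h1', h2'⟩ <;>
    exact hab (by first
      | exact hcol h2'
      | exact hcol (h2'.trans h1')
      | exact hrow h1'
      | exact hrow (h1'.trans h2'))

lemma symImpTrop {n r : ℕ} {A : Matrix (Fin n) (Fin n) ℝ} {row col : Fin r → Fin n} :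
    SymTropSing A row col → TropSing A row col := by
  rintro ⟨σ, τ, hne, h1, h2⟩
  exact ⟨σ, τ, fun h => hne (by rw [h]), h1, h2⟩

lemma trop2_to_sym2 {n : ℕ} {A : Matrix (Fin n) (Fin n) ℝ} {row col : Fin 2 → Fin n}
    (hrow : Function.Injective row) (hcol : Function.Injective col) :
    TropSing A row col → SymTropSing A row col := by
  rintro ⟨σ, τ, hne, h1, h2⟩
  have h01 : (0 : Fin 2) ≠ 1 := by decide
  rcases perm2 σ with rfl | rfl <;> rcases perm2 τ with rfl | rfl
  · exact absurd rfl hne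
  · exact ⟨1, Equiv.swap 0 1, swap_pairs_ne hrow hcol h01, h1, h2⟩
  · exact ⟨1, Equiv.swap 0 1, swap_pairs_ne hrow hcol h01, h2, h1⟩
  · exact absurd rfl hne

lemma quad_of_all2 {n : ℕ} {A : Matrix (Fin n) (Fin n) ℝ}
    (H : ∀ row col : Fin 2 → Fin n, StrictMono row → StrictMono col → TropSing A row col) :
    ∀ i j k l : Fin n, A i k + A j l = A i l + A j k := by
  have base : ∀ i j k l : Fin n, i < j → k < l → A i k + A j l = A i l + A j k := by
    intro i j k l hij hkl
    have hr : StrictMono ![i, j] := by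
      intro a b hab
      fin_cases a <;> fin_cases b <;> simp_all
    have hc : StrictMono ![k, l] := by
      intro a b hab
      fin_cases a <;> fin_cases b <;> simp_all
    obtain ⟨σ, τ, hne, h1, h2⟩ := H _ _ hr hc
    have hv : tropVal A ![i,j] ![k,l] 1 = tropVal A ![i,j] ![k,l] (Equiv.swap 0 1) := by
      rcases perm2 σ with rfl | rfl <;> rcases perm2 τ with rfl | rfl
      · exact absurd rfl hne
      · exact le_antisymm (h1 _) (h2 _)
      · exact le_antisymm (h2 _) (h1 _)
      · exact absurd rfl hne
    unfold tropVal at hv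
    rw [Fin.sum_univ_two, Fin.sum_univ_two] at hv
    simpa [Equiv.swap_apply_left, Equiv.swap_apply_right] using hv
  intro i j k l
  rcases lt_trichotomy i j with h | rfl | h
  · rcases lt_trichotomy k l with h' | rfl | h'
    · exact base i j k l h h'
    · rfl
    · have := base i j l k h h'; linarith
  · exact add_comm _ _
  · rcases lt_trichotomy k l with h' | rfl | h'
    · have := base j i k l h h'; linarith
    · rfl
    · have := base j i l k h h'; linarith

lemma tropVal_const {n r : ℕ} (A : Matrix (Fin n) (Fin n) ℝ)
    (H : ∀ i j k l : Fin n, A i k + A j l = A i l + A j k) (e : Fin n)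
    (row col : Fin r → Fin n) (σ : Equiv.Perm (Fin r)) :
    tropVal A row col σ = tropVal A row col 1 := by
  have expand : ∀ τ : Equiv.Perm (Fin r), tropVal A row col τ
      = (∑ s, A (row s) e) + (∑ s, A e (col s)) - ∑ _s : Fin r, A e e := by
    intro τ
    unfold tropVal
    calc ∑ s, A (row s) (col (τ s))
        = ∑ s, (A (row s) e + A e (col (τ s)) - A e e) :=
          Finset.sum_congr rfl (fun s _ => by have := H (row s) e (col (τ s)) e; linarith)
      _ = (∑ s, A (row s) e) + (∑ s, A e (col (τ s))) - ∑ _s : Fin r, A e e := by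
          rw [Finset.sum_sub_distrib, Finset.sum_add_distrib]
      _ = (∑ s, A (row s) e) + (∑ s, A e (col s)) - ∑ _s : Fin r, A e e := by
          rw [Equiv.sum_comp τ (fun s => A e (col s))]
  rw [expand σ, expand 1]

lemma bigSym {n r : ℕ} (A : Matrix (Fin n) (Fin n) ℝ)
    (H : ∀ i j k l : Fin n, A i k + A j l = A i l + A j k) (hr : 2 ≤ r)
    {row col : Fin r → Fin n} (hrow : Function.Injective row)
    (hcol : Function.Injective col) : SymTropSing A row col := by
  have e : Fin n := row ⟨0, by omega⟩
  have hab : (⟨0, by omega⟩ : Fin r) ≠ ⟨1, by omega⟩ := by simp [Fin.ext_iff]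
  refine ⟨1, Equiv.swap ⟨0, by omega⟩ ⟨1, by omega⟩, swap_pairs_ne hrow hcol hab, ?_, ?_⟩
  · intro τ
    rw [tropVal_const A H e row col τ]
  · intro τ
    rw [tropVal_const A H e row col τ, tropVal_const A H e row col (Equiv.swap _ _)]

lemma not_tropSing_of_subsingleton {n r : ℕ} [Subsingleton (Fin r)]
    (A : Matrix (Fin n) (Fin n) ℝ) (row col : Fin r → Fin n) : ¬ TropSing A row col := by
  rintro ⟨σ, τ, hne, -⟩
  exact hne (Equiv.ext fun x => Subsingleton.elim _ _)

lemma not_symTropSing_of_subsingleton {n r : ℕ} [Subsingleton (Fin r)]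
    (A : Matrix (Fin n) (Fin n) ℝ) (row col : Fin r → Fin n) : ¬ SymTropSing A row col := by
  rintro ⟨σ, τ, hne, -⟩
  exact hne (by rw [show σ = τ from Equiv.ext fun x => Subsingleton.elim _ _])

lemma strictMono_subsingleton {n r : ℕ} [Subsingleton (Fin r)] (f : Fin r → Fin n) :
    StrictMono f := fun a b h => absurd (Subsingleton.elim a b) (ne_of_lt h)

lemma sSup_eq_one_iff (S : Set ℕ) (hbdd : BddAbove S) (hne : S.Nonempty) :
    sSup S = 1 ↔ 1 ∈ S ∧ ∀ r ∈ S, r ≤ 1 :=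
  ⟨fun h => ⟨h ▸ Nat.sSup_mem hne hbdd, fun r hr => h ▸ le_csSup hbdd hr⟩,
   fun ⟨h1, hle⟩ => le_antisymm (csSup_le hne hle) (le_csSup hbdd h1)⟩

/-- A symmetric matrix has tropical rank one iff it has symmetric tropical rank one;
equivalently, for `n ≥ 2`, every `2 × 2` submatrix is tropically singular iff every `2 × 2`
submatrix is symmetrically tropically singular. -/
theorem stmt1 (n : ℕ) (A : Matrix (Fin n) (Fin n) ℝ) (hA : A.IsSymm) :
    (tropicalRank A = 1 ↔ symTropicalRank A = 1) ∧
    (2 ≤ n →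
      ((∀ row col : Fin 2 → Fin n, StrictMono row → StrictMono col → TropSing A row col) ↔
        (∀ row col : Fin 2 → Fin n, StrictMono row → StrictMono col → SymTropSing A row col))) := by
  have hbddT : BddAbove {r | ∃ row col : Fin r → Fin n,
      StrictMono row ∧ StrictMono col ∧ ¬ TropSing A row col} := by
    refine ⟨n, fun r hr => ?_⟩
    obtain ⟨row, col, hrow, -, -⟩ := hr
    simpa using Fintype.card_le_of_injective row hrow.injective
  have hbddS : BddAbove {r | ∃ row col : Fin r → Fin n,
      StrictMono row ∧ StrictMono col ∧ ¬ SymTropSing A row col} := by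
    refine ⟨n, fun r hr => ?_⟩
    obtain ⟨row, col, hrow, -, -⟩ := hr
    simpa using Fintype.card_le_of_injective row hrow.injective
  have h0T : 0 ∈ {r | ∃ row col : Fin r → Fin n,
      StrictMono row ∧ StrictMono col ∧ ¬ TropSing A row col} :=
    ⟨Fin.elim0, Fin.elim0, strictMono_subsingleton _, strictMono_subsingleton _,
      not_tropSing_of_subsingleton A _ _⟩
  have h0S : 0 ∈ {r | ∃ row col : Fin r → Fin n,
      StrictMono row ∧ StrictMono col ∧ ¬ SymTropSing A row col} :=
    ⟨Fin.elim0, Fin.elim0, strictMono_subsingleton _, strictMono_subsingleton _,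
      not_symTropSing_of_subsingleton A _ _⟩
  constructor
  · constructor
    · intro hT
      unfold tropicalRank at hT
      rw [sSup_eq_one_iff _ hbddT ⟨0, h0T⟩] at hT
      obtain ⟨⟨row1, col1, -, -, -⟩, hboundT⟩ := hT
      have e : Fin n := row1 0
      have all2 : ∀ row col : Fin 2 → Fin n, StrictMono row → StrictMono col →
          TropSing A row col := by
        intro row col hrow hcol
        by_contra hns
        have := hboundT 2 ⟨row, col, hrow, hcol, hns⟩
        omega
      have Hq := quad_of_all2 all2
      unfold symTropicalRank
      rw [sSup_eq_one_iff _ hbddS ⟨0, h0S⟩]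
      refine ⟨⟨fun _ => e, fun _ => e, strictMono_subsingleton _, strictMono_subsingleton _,
        not_symTropSing_of_subsingleton A _ _⟩, ?_⟩
      rintro r ⟨row, col, hrow, hcol, hns⟩
      by_contra hr
      push_neg at hr
      exact hns (bigSym A Hq (by omega) hrow.injective hcol.injective)
    · intro hS
      unfold symTropicalRank at hS
      rw [sSup_eq_one_iff _ hbddS ⟨0, h0S⟩] at hS
      obtain ⟨⟨row1, col1, -, -, -⟩, hboundS⟩ := hS
      have e : Fin n := row1 0
      unfold tropicalRank
      rw [sSup_eq_one_iff _ hbddT ⟨0, h0T⟩]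
      refine ⟨⟨fun _ => e, fun _ => e, strictMono_subsingleton _, strictMono_subsingleton _,
        not_tropSing_of_subsingleton A _ _⟩, ?_⟩
      rintro r ⟨row, col, hrow, hcol, hns⟩
      exact hboundS r ⟨row, col, hrow, hcol, fun h => hns (symImpTrop h)⟩
  · intro _
    constructor
    · intro H row col hrow hcol
      exact trop2_to_sym2 hrow.injective hcol.injective (H row col hrow hcol)
    · intro H row col hrow hcol
      exact symImpTrop (H row col hrow hcol)

end
end

section
/- If an n×n real symmetric matrix has symmetric tropical rank two, then it has tropical rank two. -/
/-!
Common definitions for tropical geometry of symmetric matrices, following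
Develin–Santos–Sturmfels and the paper under formalization.
-/

open Matrix

noncomputable section

lemma perm_fin_two (σ : Equiv.Perm (Fin 2)) : σ = 1 ∨ σ = Equiv.swap 0 1 := by
  revert σ; decide

lemma tropPairs_ne_of_ne {n : ℕ} (row col : Fin 2 → Fin n)
    (hrow : StrictMono row) (hcol : StrictMono col)
    (σ τ : Equiv.Perm (Fin 2)) (hne : σ ≠ τ) :
    tropPairs row col σ ≠ tropPairs row col τ := by
  have hc : col 0 < col 1 := hcol (by decide)
  have hr : row 0 < row 1 := hrow (by decide)
  have key : tropPairs row col 1 ≠ tropPairs row col (Equiv.swap 0 1) := by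
    intro hEq
    have hmem : Sym2.mk (row 0) (col 0) ∈ tropPairs row col (Equiv.swap 0 1) := by
      rw [← hEq]
      exact Multiset.mem_map.2 ⟨0, Finset.mem_univ_val 0, rfl⟩
    obtain ⟨s, -, hs⟩ := Multiset.mem_map.1 hmem
    fin_cases s
    · simp only [show (Equiv.swap 0 1 : Equiv.Perm (Fin 2)) 0 = 1 from rfl] at hs
      rcases Sym2.eq_iff.1 hs with ⟨-, h2⟩ | ⟨h1, h2⟩
      · exact absurd h2 hc.ne'
      · exact absurd (h1.symm.trans h2.symm) hc.ne
    · simp only [show (Equiv.swap 0 1 : Equiv.Perm (Fin 2)) 1 = 0 from rfl] at hs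
      rcases Sym2.eq_iff.1 hs with ⟨h1, -⟩ | ⟨h1, h2⟩
      · exact absurd h1 hr.ne'
      · exact absurd (h1.trans h2) hr.ne'
  rcases perm_fin_two σ with rfl | rfl <;> rcases perm_fin_two τ with rfl | rfl
  · exact absurd rfl hne
  · exact key
  · exact fun hEq => key hEq.symm
  · exact absurd rfl hne

/-- If a symmetric matrix has symmetric tropical rank two, then it has tropical
rank two. -/
theorem stmt2 (n : ℕ) (A : Matrix (Fin n) (Fin n) ℝ) (hA : A.IsSymm)
    (h : symTropicalRank A = 2) :
    tropicalRank A = 2 := by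
  set S := {r | ∃ row col : Fin r → Fin n, StrictMono row ∧ StrictMono col ∧ ¬ SymTropSing A row col} with hS
  set T := {r | ∃ row col : Fin r → Fin n, StrictMono row ∧ StrictMono col ∧ ¬ TropSing A row col} with hT
  have hTS : T ⊆ S := by
    rintro r ⟨row, col, hrow, hcol, hns⟩
    refine ⟨row, col, hrow, hcol, fun ⟨σ, τ, hne, h1, h2⟩ => hns ⟨σ, τ, ?_, h1, h2⟩⟩
    intro heq; exact hne (by rw [heq])
  have h0S : (0 : ℕ) ∈ S := by
    refine ⟨Fin.elim0, Fin.elim0, fun i => i.elim0, fun i => i.elim0, ?_⟩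
    rintro ⟨σ, τ, hne, -, -⟩
    exact hne (by rw [Subsingleton.elim σ τ])
  have h0T : (0 : ℕ) ∈ T := by
    refine ⟨Fin.elim0, Fin.elim0, fun i => i.elim0, fun i => i.elim0, ?_⟩
    rintro ⟨σ, τ, hne, -, -⟩
    exact hne (Subsingleton.elim σ τ)
  have hbddS : BddAbove S := by
    refine ⟨n, fun r ⟨row, _, hrow, _⟩ => ?_⟩
    simpa using Fintype.card_le_of_injective row hrow.injective
  have hbddT : BddAbove T := by
    refine ⟨n, fun r ⟨row, _, hrow, _⟩ => ?_⟩
    simpa using Fintype.card_le_of_injective row hrow.injective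
  have h2S : (2 : ℕ) ∈ S := by
    have := Nat.sSup_mem ⟨0, h0S⟩ hbddS
    rwa [show sSup S = 2 from h] at this
  obtain ⟨row, col, hrow, hcol, hns⟩ := h2S
  have h2T : (2 : ℕ) ∈ T := by
    refine ⟨row, col, hrow, hcol, ?_⟩
    rintro ⟨σ, τ, hne, h1, h2⟩
    exact hns ⟨σ, τ, tropPairs_ne_of_ne row col hrow hcol σ τ hne, h1, h2⟩
  have hle : tropicalRank A ≤ 2 := by
    calc tropicalRank A = sSup T := rfl
      _ ≤ sSup S := csSup_le_csSup hbddS ⟨0, h0T⟩ hTS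
      _ = 2 := h
  have hge : 2 ≤ tropicalRank A := le_csSup hbddT h2T
  omega

end
end

section
/- Let A be an n×n real symmetric matrix with tropical rank two. Then A has symmetric tropical rank greater than two if and only if some principal 3×3 submatrix of A is not symmetrically tropically singular. In particular, every 3×3 submatrix of a real symmetric matrix that is not a principal submatrix is symmetrically tropically singular whenever it is tropically singular. -/
/-!
Common definitions for tropical geometry of symmetric matrices, following
Develin–Santos–Sturmfels and the paper under formalization.
-/

open Matrix

noncomputable section

/-! ### Auxiliary lemmas for the proof of `stmt3` -/

section StmtThreeAux

open Classical

/-- If two maps have equal multiset images over a fintype, there is a permutation matching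
them pointwise. -/
lemma aux_exists_perm_of_map_eq {α β : Type*} [Fintype α] [DecidableEq α] [DecidableEq β]
    {f g : α → β} (h : Finset.univ.val.map f = Finset.univ.val.map g) :
    ∃ π : Equiv.Perm α, ∀ i, f i = g (π i) := by
  have hcard : ∀ b, Fintype.card {a // f a = b} = Fintype.card {a // g a = b} := by
    intro b
    have := congrArg (Multiset.count b) h
    rw [Multiset.count_map, Multiset.count_map] at this
    simpa [Fintype.card_subtype, Finset.card_def, Finset.filter_val, eq_comm] using this
  let E : ∀ b, {a // f a = b} ≃ {a // g a = b} := fun b => Fintype.equivOfCardEq (hcard b)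
  refine ⟨((Equiv.sigmaFiberEquiv f).symm.trans ((Equiv.sigmaCongrRight E).trans
    (Equiv.sigmaFiberEquiv g))), fun i => ?_⟩
  simp only [Equiv.trans_apply, Equiv.sigmaFiberEquiv, Equiv.sigmaCongrRight]
  exact ((E (f i) ⟨i, rfl⟩).2).symm

lemma aux_matching_facts {n r : ℕ} {row col : Fin r → Fin n} (hrow : Function.Injective row)
    (hcol : Function.Injective col) {σ τ π : Equiv.Perm (Fin r)}
    (hm : ∀ i, Sym2.mk (row i) (col (σ i)) = Sym2.mk (row (π i)) (col (τ (π i)))) :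
    (∀ i, π i = i → σ i = τ i) ∧
    (∀ i, π i ≠ i → col (σ i) = row (π i) ∧ col (τ (π i)) = row i) := by
  constructor
  · intro i hfix
    rcases Sym2.eq_iff.1 (hm i) with ⟨h1, h2⟩ | ⟨h1, h2⟩
    · rw [hfix] at h2; exact hcol h2
    · rw [hfix] at h1 h2
      exact hcol (h2.trans h1)
  · intro i hmov
    rcases Sym2.eq_iff.1 (hm i) with ⟨h1, h2⟩ | ⟨h1, h2⟩
    · exact absurd (hrow h1).symm hmov
    · exact ⟨h2, h1.symm⟩

/-- From two distinct minimizers with the same monomial, extract a "chain" of indices. -/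
lemma aux_chain {n r : ℕ} {row col : Fin r → Fin n} (hrow : Function.Injective row)
    (hcol : Function.Injective col) {σ τ : Equiv.Perm (Fin r)} (hne : σ ≠ τ)
    (hpairs : tropPairs row col σ = tropPairs row col τ) :
    ∃ i j k l : Fin r, i ≠ j ∧ i ≠ k ∧ j ≠ k ∧ l ≠ j ∧ l ≠ k ∧
      col (σ i) = row j ∧ col (σ j) = row k ∧ col (σ k) = row l := by
  obtain ⟨π, hπ⟩ := aux_exists_perm_of_map_eq (f := fun s => Sym2.mk (row s) (col (σ s)))
    (g := fun s => Sym2.mk (row s) (col (τ s))) hpairs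
  obtain ⟨hfix, hmov⟩ := aux_matching_facts hrow hcol hπ
  have hex : ∃ i, σ i ≠ τ i := by
    by_contra hc
    push_neg at hc
    exact hne (Equiv.ext hc)
  obtain ⟨i, hi⟩ := hex
  have hπi : π i ≠ i := fun h => hi (hfix i h)
  set j := π i with hj
  have hij : i ≠ j := fun h => hπi h.symm
  have hπj : π j ≠ j := fun h => hij (π.injective (by rw [h, hj]))
  have hjk : j ≠ π j := fun h => hπj h.symm
  have hik : i ≠ π j := by
    intro h
    obtain ⟨h1, h2⟩ := hmov i hπi
    obtain ⟨h3, h4⟩ := hmov j hπj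
    rw [← h] at h4
    have : col (τ i) = row j := h4
    exact hi (hcol (h1.trans this.symm))
  set k := π j with hk
  have hπk : π k ≠ k := fun h => hjk (π.injective (by rw [h, hk]))
  set l := π k with hl
  have hlk : l ≠ k := fun h => hπk h
  have hlj : l ≠ j := fun h => hik (π.injective h).symm
  refine ⟨i, j, k, l, hij, hik, hjk, hlj, hlk, (hmov i hπi).1, ?_, ?_⟩
  · have := (hmov j hπj).1
    rw [← hk] at this; exact this
  · have := (hmov k hπk).1
    rw [← hl] at this; exact this

lemma aux_fin3_cover : ∀ i j k s : Fin 3, i ≠ j → i ≠ k → j ≠ k → s = i ∨ s = j ∨ s = k := by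
  decide

/-- Two distinct permutations of a `3 × 3` submatrix with equal monomials force the column
index set to equal the row index set. -/
lemma aux_key3 {m : ℕ} {row col : Fin 3 → Fin m} (hrow : Function.Injective row)
    (hcol : Function.Injective col) {σ τ : Equiv.Perm (Fin 3)} (hne : σ ≠ τ)
    (hpairs : tropPairs row col σ = tropPairs row col τ) :
    Finset.image col Finset.univ = Finset.image row Finset.univ := by
  obtain ⟨i, j, k, l, hij, hik, hjk, _, _, h1, h2, h3⟩ := aux_chain hrow hcol hne hpairs
  have hsub : Finset.image col Finset.univ ⊆ Finset.image row Finset.univ := by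
    intro x hx
    obtain ⟨s, _, rfl⟩ := Finset.mem_image.1 hx
    have hs : σ⁻¹ s = i ∨ σ⁻¹ s = j ∨ σ⁻¹ s = k := aux_fin3_cover i j k _ hij hik hjk
    have hcs : col s = col (σ (σ⁻¹ s)) := by simp
    rcases hs with h | h | h <;> rw [hcs, h] <;> simp [h1, h2, h3]
  refine Finset.eq_of_subset_of_card_le hsub (le_of_eq ?_)
  rw [Finset.card_image_of_injective _ hrow, Finset.card_image_of_injective _ hcol]

section subst
variable {n r : ℕ} (A : Matrix (Fin n) (Fin n) ℝ) (row col : Fin r → Fin n)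
  (σ : Equiv.Perm (Fin r)) (emb : Fin 3 ↪ Fin r)

lemma aux_filter_range_eq : Finset.univ.filter (fun i => i ∈ Set.range emb) =
    Finset.map emb Finset.univ := by
  ext i; simp

lemma aux_val_decomp (β : Equiv.Perm (Fin 3)) :
    tropVal A row col (σ * β.viaEmbedding emb) =
      tropVal A (row ∘ emb) (col ∘ ⇑σ ∘ emb) β +
      ∑ i ∈ Finset.univ.filter (fun i => i ∉ Set.range emb), A (row i) (col (σ i)) := by
  unfold tropVal
  rw [← Finset.sum_filter_add_sum_filter_not Finset.univ (fun i => i ∈ Set.range emb)]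
  congr 1
  · rw [aux_filter_range_eq, Finset.sum_map]
    refine Finset.sum_congr rfl fun s _ => ?_
    simp [Equiv.Perm.viaEmbedding_apply]
  · refine Finset.sum_congr rfl fun i hi => ?_
    rw [Finset.mem_filter] at hi
    simp [Equiv.Perm.viaEmbedding_apply_of_notMem _ _ _ hi.2]

lemma aux_pairs_decomp (β : Equiv.Perm (Fin 3)) :
    tropPairs row col (σ * β.viaEmbedding emb) =
      tropPairs (row ∘ emb) (col ∘ ⇑σ ∘ emb) β +
      (Finset.univ.filter (fun i => i ∉ Set.range emb)).val.map
        (fun i => Sym2.mk (row i) (col (σ i))) := by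
  unfold tropPairs
  have hsplit : (Finset.univ : Finset (Fin r)).val =
      (Finset.univ.filter (fun i => i ∈ Set.range emb)).val +
      (Finset.univ.filter (fun i => i ∉ Set.range emb)).val := by
    simp only [Finset.filter_val]
    exact (Multiset.filter_add_not _ _).symm
  rw [hsplit, Multiset.map_add]
  congr 1
  · rw [aux_filter_range_eq, Finset.map_val, Multiset.map_map]
    refine Multiset.map_congr rfl fun s _ => ?_
    simp [Equiv.Perm.viaEmbedding_apply]
  · refine Multiset.map_congr rfl fun i hi => ?_
    rw [Finset.mem_val, Finset.mem_filter] at hi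
    simp [Equiv.Perm.viaEmbedding_apply_of_notMem _ _ _ hi.2]

lemma aux_gamma_one : ((1 : Equiv.Perm (Fin 3)).viaEmbedding emb) = 1 := by
  rw [← Equiv.Perm.viaEmbeddingHom_apply]; exact map_one _

lemma aux_block_min_id (hσ : Minimizing A row col σ) :
    Minimizing A (row ∘ emb) (col ∘ ⇑σ ∘ emb) 1 := by
  intro β
  have h1 := aux_val_decomp A row col σ emb 1
  rw [aux_gamma_one, mul_one] at h1
  have h2 := aux_val_decomp A row col σ emb β
  have := hσ (σ * β.viaEmbedding emb)
  rw [h1, h2] at this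
  linarith

lemma aux_min_of_block {β : Equiv.Perm (Fin 3)} (hσ : Minimizing A row col σ)
    (hβ : Minimizing A (row ∘ emb) (col ∘ ⇑σ ∘ emb) β) :
    Minimizing A row col (σ * β.viaEmbedding emb) := by
  intro ρ
  have h1 := aux_val_decomp A row col σ emb 1
  rw [aux_gamma_one, mul_one] at h1
  have h2 := aux_val_decomp A row col σ emb β
  have hb1 := hβ 1
  have hb2 := aux_block_min_id A row col σ emb hσ β
  have hval : tropVal A (row ∘ emb) (col ∘ ⇑σ ∘ emb) β =
      tropVal A (row ∘ emb) (col ∘ ⇑σ ∘ emb) 1 := le_antisymm hb1 hb2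
  rw [h2, hval, ← h1]
  exact hσ ρ

lemma aux_symTropSing_of_block (hσ : Minimizing A row col σ)
    (h : ∃ β₁ β₂ : Equiv.Perm (Fin 3),
      tropPairs (row ∘ emb) (col ∘ ⇑σ ∘ emb) β₁ ≠ tropPairs (row ∘ emb) (col ∘ ⇑σ ∘ emb) β₂ ∧
      Minimizing A (row ∘ emb) (col ∘ ⇑σ ∘ emb) β₁ ∧
      Minimizing A (row ∘ emb) (col ∘ ⇑σ ∘ emb) β₂) :
    SymTropSing A row col := by
  obtain ⟨β₁, β₂, hne, hm1, hm2⟩ := h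
  refine ⟨σ * β₁.viaEmbedding emb, σ * β₂.viaEmbedding emb, ?_,
    aux_min_of_block A row col σ emb hσ hm1, aux_min_of_block A row col σ emb hσ hm2⟩
  rw [aux_pairs_decomp, aux_pairs_decomp]
  intro hcontra
  exact hne (add_right_cancel hcontra)

end subst

section reindex
variable {n r : ℕ} (A : Matrix (Fin n) (Fin n) ℝ) (R C : Fin r → Fin n) (u : Equiv.Perm (Fin r))

lemma aux_val_reindex (β : Equiv.Perm (Fin r)) :
    tropVal A R (C ∘ u) β = tropVal A R C (u * β) := rfl

lemma aux_pairs_reindex (β : Equiv.Perm (Fin r)) :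
    tropPairs R (C ∘ u) β = tropPairs R C (u * β) := rfl

lemma aux_min_reindex (β : Equiv.Perm (Fin r)) :
    Minimizing A R (C ∘ u) β ↔ Minimizing A R C (u * β) := by
  constructor
  · intro h ρ
    have := h (u⁻¹ * ρ)
    rw [aux_val_reindex, aux_val_reindex, ← mul_assoc, mul_inv_cancel, one_mul] at this
    exact this
  · intro h ρ
    rw [aux_val_reindex, aux_val_reindex]
    exact h (u * ρ)

lemma aux_tropSing_reindex : TropSing A R (C ∘ u) ↔ TropSing A R C := by
  constructor
  · rintro ⟨σ, τ, hne, h1, h2⟩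
    exact ⟨u * σ, u * τ, by simp [mul_right_cancel_iff, hne],
      (aux_min_reindex A R C u σ).1 h1, (aux_min_reindex A R C u τ).1 h2⟩
  · rintro ⟨σ, τ, hne, h1, h2⟩
    refine ⟨u⁻¹ * σ, u⁻¹ * τ, by simp [hne], ?_, ?_⟩
    · rw [aux_min_reindex, ← mul_assoc, mul_inv_cancel, one_mul]; exact h1
    · rw [aux_min_reindex, ← mul_assoc, mul_inv_cancel, one_mul]; exact h2

end reindex

lemma aux_exists_perm_strictMono_comp {m r : ℕ} {C : Fin r → Fin m}
    (hC : Function.Injective C) : ∃ u : Equiv.Perm (Fin r), StrictMono (C ∘ u) := by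
  have hcard : (Finset.image C Finset.univ).card = r := by
    rw [Finset.card_image_of_injective _ hC, Finset.card_univ, Fintype.card_fin]
  set s := Finset.image C Finset.univ with hs
  have hmem : ∀ t, s.orderEmbOfFin hcard t ∈ s := fun t => Finset.orderEmbOfFin_mem _ _ _
  have hv : ∀ t, ∃ v, C v = s.orderEmbOfFin hcard t := by
    intro t
    obtain ⟨v, _, hv⟩ := Finset.mem_image.1 (hmem t)
    exact ⟨v, hv⟩
  choose v hv using hv
  have hvinj : Function.Injective v := by
    intro a b hab
    have : C (v a) = C (v b) := by rw [hab]
    rw [hv, hv] at this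
    exact (Finset.orderEmbOfFin _ _).injective this
  have hvbij : Function.Bijective v := (Finite.injective_iff_bijective).1 hvinj
  refine ⟨Equiv.ofBijective v hvbij, ?_⟩
  have heq : C ∘ (Equiv.ofBijective v hvbij) = fun t => s.orderEmbOfFin hcard t := by
    funext t; exact hv t
  rw [heq]
  exact (s.orderEmbOfFin hcard).strictMono

/-- If the images agree and both maps are injective, the columns are a permutation of the
rows. -/
lemma aux_exists_perm_comp_eq {m r : ℕ} {R C : Fin r → Fin m} (hR : Function.Injective R)
    (hC : Function.Injective C)
    (h : Finset.image C Finset.univ = Finset.image R Finset.univ) :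
    ∃ w : Equiv.Perm (Fin r), R ∘ w = C := by
  have hv : ∀ t, ∃ v, R v = C t := by
    intro t
    have : C t ∈ Finset.image R Finset.univ := by
      rw [← h]; exact Finset.mem_image_of_mem _ (Finset.mem_univ t)
    obtain ⟨v, _, hv⟩ := Finset.mem_image.1 this
    exact ⟨v, hv⟩
  choose v hv using hv
  have hvinj : Function.Injective v := by
    intro a b hab
    have : R (v a) = R (v b) := by rw [hab]
    rw [hv, hv] at this
    exact hC this
  have hvbij : Function.Bijective v := (Finite.injective_iff_bijective).1 hvinj
  exact ⟨Equiv.ofBijective v hvbij, funext fun t => hv t⟩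

/-- Boundedness of the defining sets of the rank functions. -/
lemma aux_bdd {n : ℕ} {P : ∀ r : ℕ, (Fin r → Fin n) → (Fin r → Fin n) → Prop} :
    BddAbove {r | ∃ row col : Fin r → Fin n, StrictMono row ∧ StrictMono col ∧ P r row col} := by
  refine ⟨n, fun r hr => ?_⟩
  obtain ⟨row, col, hrow, _, _⟩ := hr
  simpa using Fintype.card_le_of_injective row hrow.injective

/-- If the tropical rank is `2`, every submatrix of size at least `3` (with strictly monotone
index maps) is tropically singular. -/
lemma aux_all_tropSing {n : ℕ} {A : Matrix (Fin n) (Fin n) ℝ} (htrop : tropicalRank A = 2)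
    {r : ℕ} (hr : 3 ≤ r) (row col : Fin r → Fin n) (hrow : StrictMono row)
    (hcol : StrictMono col) : TropSing A row col := by
  by_contra hc
  have hmem : r ∈ {r | ∃ row col : Fin r → Fin n,
      StrictMono row ∧ StrictMono col ∧ ¬ TropSing A row col} := ⟨row, col, hrow, hcol, hc⟩
  have := le_csSup aux_bdd hmem
  rw [tropicalRank] at htrop
  omega

/-- The main step: a non-symmetrically-tropically-singular submatrix of size at least 3 in a
matrix of tropical rank 2, all of whose principal `3×3` submatrices are symmetrically
tropically singular, is impossible. -/
lemma aux_main {n : ℕ} {A : Matrix (Fin n) (Fin n) ℝ} (htrop : tropicalRank A = 2)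
    (hprin : ∀ idx : Fin 3 → Fin n, StrictMono idx → SymTropSing A idx idx)
    {r : ℕ} (hr : 3 ≤ r) (row col : Fin r → Fin n) (hrow : StrictMono row)
    (hcol : StrictMono col) : SymTropSing A row col := by
  obtain ⟨σ, τ, hστ, hminσ, hminτ⟩ := aux_all_tropSing htrop hr row col hrow hcol
  by_cases hpairs : tropPairs row col σ = tropPairs row col τ
  swap
  · exact ⟨σ, τ, hpairs, hminσ, hminτ⟩
  obtain ⟨i, j, k, l, hij, hik, hjk, hlj, hlk, h1, h2, h3⟩ :=
    aux_chain hrow.injective hcol.injective hστ hpairs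
  -- the sorted embedding of {i, j, k}
  have htcard : ({i, j, k} : Finset (Fin r)).card = 3 := by
    rw [Finset.card_insert_of_notMem (by simp [hij, hik]),
      Finset.card_insert_of_notMem (by simp [hjk]), Finset.card_singleton]
  set t : Finset (Fin r) := {i, j, k} with ht
  set e := t.orderEmbOfFin htcard with he
  set emb : Fin 3 ↪ Fin r := e.toEmbedding with hemb
  have hrange : ∀ x, x ∈ t ↔ x ∈ Set.range emb := by
    intro x
    rw [hemb]
    have := Finset.range_orderEmbOfFin t htcard
    rw [he]
    constructor
    · intro hx
      have : x ∈ Set.range (t.orderEmbOfFin htcard) := by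
        rw [Finset.range_orderEmbOfFin]; exact hx
      exact this
    · intro hx
      have : x ∈ (t : Set (Fin r)) := by
        rw [← Finset.range_orderEmbOfFin t htcard]; exact hx
      exact this
  obtain ⟨si, hsi⟩ := (hrange i).1 (by simp [ht])
  obtain ⟨sj, hsj⟩ := (hrange j).1 (by simp [ht])
  obtain ⟨sk, hsk⟩ := (hrange k).1 (by simp [ht])
  set R : Fin 3 → Fin n := row ∘ emb with hR
  set C : Fin 3 → Fin n := col ∘ ⇑σ ∘ emb with hC
  have hRsm : StrictMono R := hrow.comp (Finset.orderEmbOfFin t htcard).strictMono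
  have hRinj : Function.Injective R := hRsm.injective
  have hCinj : Function.Injective C :=
    hcol.injective.comp (σ.injective.comp emb.injective)
  -- the block has the identity as a minimizing permutation
  have hblock1 : Minimizing A R C 1 := aux_block_min_id A row col σ emb hminσ
  -- the block is tropically singular (tropical rank 2)
  have hblocksing : TropSing A R C := by
    obtain ⟨u, hu⟩ := aux_exists_perm_strictMono_comp hCinj
    exact (aux_tropSing_reindex A R C u).1
      (aux_all_tropSing htrop (le_refl 3) R (C ∘ u) hRsm hu)
  obtain ⟨β₁, β₂, hβne, hβ1, hβ2⟩ := hblocksing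
  by_cases hbp : tropPairs R C β₁ = tropPairs R C β₂
  swap
  · exact aux_symTropSing_of_block A row col σ emb hminσ ⟨β₁, β₂, hbp, hβ1, hβ2⟩
  -- equal monomials in the block: ranges coincide, so l = i and the block is principal
  have himg : Finset.image C Finset.univ = Finset.image R Finset.univ :=
    aux_key3 hRinj hCinj hβne hbp
  -- identify the C values
  have hCsi : C si = row j := by rw [hC]; simp only [Function.comp_apply]; rw [hsi]; exact h1
  have hCsj : C sj = row k := by rw [hC]; simp only [Function.comp_apply]; rw [hsj]; exact h2
  have hCsk : C sk = row l := by rw [hC]; simp only [Function.comp_apply]; rw [hsk]; exact h3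
  have hli : l = i := by
    have hmem : row l ∈ Finset.image R Finset.univ := by
      rw [← himg, ← hCsk]
      exact Finset.mem_image_of_mem _ (Finset.mem_univ sk)
    obtain ⟨s, _, hs⟩ := Finset.mem_image.1 hmem
    have : emb s ∈ t := (hrange (emb s)).2 ⟨s, rfl⟩
    have hlmem : l = emb s := hrow.injective hs.symm
    rw [hlmem]
    rcases Finset.mem_insert.1 this with h | h
    · exact h
    rcases Finset.mem_insert.1 h with h' | h'
    · exact absurd (hlmem ▸ h' : l = j) hlj
    · exact absurd (hlmem ▸ (Finset.mem_singleton.1 h') : l = k) hlk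
  -- now the block is principal; use the hypothesis on principal blocks
  obtain ⟨w, hw⟩ := aux_exists_perm_comp_eq hRinj hCinj himg
  obtain ⟨α₁, α₂, hαne, hα1, hα2⟩ := hprin R hRsm
  refine aux_symTropSing_of_block A row col σ emb hminσ ⟨w⁻¹ * α₁, w⁻¹ * α₂, ?_, ?_, ?_⟩
  · rw [show (col ∘ ⇑σ ∘ ⇑emb) = C from rfl, ← hw]
    rw [aux_pairs_reindex, aux_pairs_reindex, ← mul_assoc, mul_inv_cancel, one_mul,
      ← mul_assoc, mul_inv_cancel, one_mul]
    exact hαne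
  · rw [show (col ∘ ⇑σ ∘ ⇑emb) = C from rfl, ← hw, aux_min_reindex, ← mul_assoc,
      mul_inv_cancel, one_mul]
    exact hα1
  · rw [show (col ∘ ⇑σ ∘ ⇑emb) = C from rfl, ← hw, aux_min_reindex, ← mul_assoc,
      mul_inv_cancel, one_mul]
    exact hα2

end StmtThreeAux

/-- A symmetric matrix of tropical rank two has symmetric tropical rank greater than
two iff some principal `3 × 3` submatrix is not symmetrically tropically singular. In particular,
a non-principal `3 × 3` submatrix of a real symmetric matrix is symmetrically tropically singular
whenever it is tropically singular. -/
theorem stmt3 (n : ℕ) (A : Matrix (Fin n) (Fin n) ℝ) (hA : A.IsSymm)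
    (htrop : tropicalRank A = 2) :
    (2 < symTropicalRank A ↔
      ∃ idx : Fin 3 → Fin n, StrictMono idx ∧ ¬ SymTropSing A idx idx) ∧
    (∀ (m : ℕ) (B : Matrix (Fin m) (Fin m) ℝ), B.IsSymm →
      ∀ row col : Fin 3 → Fin m, StrictMono row → StrictMono col → row ≠ col →
        TropSing B row col → SymTropSing B row col) := by
  have part2 : ∀ (m : ℕ) (B : Matrix (Fin m) (Fin m) ℝ), B.IsSymm →
      ∀ row col : Fin 3 → Fin m, StrictMono row → StrictMono col → row ≠ col →
        TropSing B row col → SymTropSing B row col := by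
    intro m B _ row col hrow hcol hrc hts
    obtain ⟨σ, τ, hne, h1, h2⟩ := hts
    by_cases hpairs : tropPairs row col σ = tropPairs row col τ
    swap
    · exact ⟨σ, τ, hpairs, h1, h2⟩
    exfalso
    have himg := aux_key3 hrow.injective hcol.injective hne hpairs
    have hcard : (Finset.image row Finset.univ).card = 3 := by
      rw [Finset.card_image_of_injective _ hrow.injective, Finset.card_univ, Fintype.card_fin]
    have hrmem : ∀ s, row s ∈ Finset.image row Finset.univ :=
      fun s => Finset.mem_image_of_mem _ (Finset.mem_univ s)
    have hcmem : ∀ s, col s ∈ Finset.image row Finset.univ := by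
      intro s; rw [← himg]; exact Finset.mem_image_of_mem _ (Finset.mem_univ s)
    have hre := Finset.orderEmbOfFin_unique hcard hrmem hrow
    have hce := Finset.orderEmbOfFin_unique hcard hcmem hcol
    exact hrc (hre.trans hce.symm)
  refine ⟨⟨?_, ?_⟩, part2⟩
  · intro h
    by_contra hc
    push_neg at hc
    have hprin : ∀ idx : Fin 3 → Fin n, StrictMono idx → SymTropSing A idx idx := hc
    -- the set defining the symmetric tropical rank
    set S := {r | ∃ row col : Fin r → Fin n,
      StrictMono row ∧ StrictMono col ∧ ¬ SymTropSing A row col} with hS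
    have h0 : (0 : ℕ) ∈ S := by
      refine ⟨Fin.elim0, Fin.elim0, fun a => a.elim0, fun a => a.elim0, ?_⟩
      rintro ⟨σ, τ, hne, -, -⟩
      exact hne (by simp [tropPairs])
    have hmem : sSup S ∈ S := Nat.sSup_mem ⟨0, h0⟩ aux_bdd
    have h3 : 3 ≤ sSup S := h
    obtain ⟨row, col, hrow, hcol, hns⟩ := hmem
    exact hns (aux_main htrop hprin h3 row col hrow hcol)
  · rintro ⟨idx, hidx, hns⟩
    have hmem : (3 : ℕ) ∈ {r | ∃ row col : Fin r → Fin n,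
        StrictMono row ∧ StrictMono col ∧ ¬ SymTropSing A row col} :=
      ⟨idx, idx, hidx, hidx, hns⟩
    have := le_csSup aux_bdd hmem
    rw [symTropicalRank]
    omega


end
end

section
/- Let A be an n×n real symmetric matrix and consider the r×r submatrix of A with strictly increasing row indices i₁,…,i_r and column indices j₁,…,j_r. If there exist a ≠ b and a real constant c such that A_{i_a, j} = c + A_{i_b, j} for every column index j ∈ {j₁,…,j_r}, then this submatrix is symmetrically tropically singular. The same conclusion holds if one column of the submatrix equals a constant plus another column. -/
/-!
Common definitions for tropical geometry of symmetric matrices, following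
Develin–Santos–Sturmfels and the paper under formalization.
-/

open Matrix

noncomputable section

section Aux

variable {n r : ℕ}

/-- Decompose `Finset.univ.val` as `a ::ₘ b ::ₘ t` where no element of `t` is `a` or `b`. -/
lemma univ_val_decomp {a b : Fin r} (hab : a ≠ b) :
    Finset.univ.val = a ::ₘ b ::ₘ ((Finset.univ.erase a).erase b).val := by
  have hb : b ∈ Finset.univ.erase a := Finset.mem_erase.mpr ⟨hab.symm, Finset.mem_univ b⟩
  have h1 : b ::ₘ ((Finset.univ.erase a).erase b).val = (Finset.univ.erase a).val := by
    rw [Finset.erase_val]; exact Multiset.cons_erase hb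
  have h2 : a ::ₘ (Finset.univ.erase a).val = (Finset.univ : Finset (Fin r)).val := by
    rw [Finset.erase_val]; exact Multiset.cons_erase (Finset.mem_univ a)
  rw [h1, h2]

lemma pair_multiset_eq {α : Type*} {x y u v : α} {M : Multiset α}
    (h : x ::ₘ y ::ₘ M = u ::ₘ v ::ₘ M) :
    (x = u ∧ y = v) ∨ (x = v ∧ y = u) := by
  have h' : ({x, y} : Multiset α) + M = ({u, v} : Multiset α) + M := by
    simpa [Multiset.insert_eq_cons, Multiset.cons_add] using h
  have h2 : ({x, y} : Multiset α) = ({u, v} : Multiset α) := by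
    exact add_right_cancel h'
  have h3 := Multiset.cons_eq_cons.mp h2
  rcases h3 with ⟨hx, hy⟩ | ⟨-, cs, hcs1, hcs2⟩
  · left
    exact ⟨hx, by simpa using hy⟩
  · right
    have hcs : cs = 0 := by
      have := congrArg Multiset.card hcs1
      simp at this
      simpa using this
    subst hcs
    simp at hcs1 hcs2
    exact ⟨hcs2.symm, hcs1⟩

lemma trop_sum_decomp (A : Matrix (Fin n) (Fin n) ℝ) (row col : Fin r → Fin n)
    {a b : Fin r} (hab : a ≠ b) (σ : Equiv.Perm (Fin r)) :
    tropVal A row col σ =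
      (∑ s ∈ (Finset.univ.erase a).erase b, A (row s) (col (σ s)))
        + A (row b) (col (σ b)) + A (row a) (col (σ a)) := by
  have hb : b ∈ Finset.univ.erase a := Finset.mem_erase.mpr ⟨hab.symm, Finset.mem_univ b⟩
  unfold tropVal
  rw [Finset.sum_erase_add _ _ hb, Finset.sum_erase_add _ _ (Finset.mem_univ a)]

lemma symTropSing_of_row (A : Matrix (Fin n) (Fin n) ℝ)
    {row col : Fin r → Fin n} (hrow : Function.Injective row)
    (hcol : Function.Injective col) {a b : Fin r} (hab : a ≠ b) {c : ℝ}
    (h : ∀ s, A (row a) (col s) = c + A (row b) (col s)) :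
    SymTropSing A row col := by
  obtain ⟨σ, -, hσ⟩ := Finset.exists_min_image Finset.univ (tropVal A row col)
    ⟨1, Finset.mem_univ 1⟩
  set τ : Equiv.Perm (Fin r) := σ * Equiv.swap a b with hτ
  have hτa : τ a = σ b := by simp [hτ, Equiv.Perm.mul_apply]
  have hτb : τ b = σ a := by simp [hτ, Equiv.Perm.mul_apply]
  have hτs : ∀ s, s ≠ a → s ≠ b → τ s = σ s := by
    intro s hsa hsb
    simp [hτ, Equiv.Perm.mul_apply, Equiv.swap_apply_of_ne_of_ne hsa hsb]
  have hval : tropVal A row col τ = tropVal A row col σ := by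
    rw [trop_sum_decomp A row col hab τ, trop_sum_decomp A row col hab σ,
      hτa, hτb]
    have hsum : (∑ s ∈ (Finset.univ.erase a).erase b, A (row s) (col (τ s)))
        = ∑ s ∈ (Finset.univ.erase a).erase b, A (row s) (col (σ s)) := by
      refine Finset.sum_congr rfl fun s hs => ?_
      simp only [Finset.mem_erase] at hs
      rw [hτs s hs.2.1 hs.1]
    rw [hsum]
    have h1 := h (σ a)
    have h2 := h (σ b)
    linarith
  refine ⟨σ, τ, ?_, fun ρ => hσ ρ (Finset.mem_univ ρ),
    fun ρ => hval ▸ hσ ρ (Finset.mem_univ ρ)⟩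
  intro heq
  unfold tropPairs at heq
  rw [univ_val_decomp hab, Multiset.map_cons, Multiset.map_cons,
    Multiset.map_cons, Multiset.map_cons] at heq
  have hMeq : (((Finset.univ.erase a).erase b).val.map
      fun s => Sym2.mk (row s) (col (σ s)))
      = ((Finset.univ.erase a).erase b).val.map fun s => Sym2.mk (row s) (col (τ s)) := by
    refine Multiset.map_congr rfl fun s hs => ?_
    have hs' : s ∈ (Finset.univ.erase a).erase b := hs
    simp only [Finset.mem_erase] at hs'
    rw [hτs s hs'.2.1 hs'.1]
  rw [← hMeq, hτa, hτb] at heq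
  have hcases := pair_multiset_eq heq
  have hσab : σ a ≠ σ b := fun hh => hab (σ.injective hh)
  rcases hcases with ⟨h1, -⟩ | ⟨h1, -⟩
  · rw [Sym2.eq_iff] at h1
    rcases h1 with ⟨-, h2⟩ | ⟨h2, h3⟩
    · exact hσab (hcol h2)
    · exact hσab (hcol (h3.trans h2))
  · rw [Sym2.eq_iff] at h1
    rcases h1 with ⟨h2, -⟩ | ⟨h2, h3⟩
    · exact hab (hrow h2)
    · exact hab (hrow (h2.trans h3))

lemma symTropSing_of_col (A : Matrix (Fin n) (Fin n) ℝ)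
    {row col : Fin r → Fin n} (hrow : Function.Injective row)
    (hcol : Function.Injective col) {a b : Fin r} (hab : a ≠ b) {c : ℝ}
    (h : ∀ s, A (row s) (col a) = c + A (row s) (col b)) :
    SymTropSing A row col := by
  obtain ⟨σ, -, hσ⟩ := Finset.exists_min_image Finset.univ (tropVal A row col)
    ⟨1, Finset.mem_univ 1⟩
  set τ : Equiv.Perm (Fin r) := Equiv.swap a b * σ with hτ
  set a' : Fin r := σ⁻¹ a with ha'
  set b' : Fin r := σ⁻¹ b with hb'
  have hab' : a' ≠ b' := fun hh => hab (by
    have := congrArg σ hh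
    simpa [ha', hb'] using this)
  have hσa' : σ a' = a := by simp [ha']
  have hσb' : σ b' = b := by simp [hb']
  have hτa : τ a' = b := by simp [hτ, Equiv.Perm.mul_apply, hσa']
  have hτb : τ b' = a := by simp [hτ, Equiv.Perm.mul_apply, hσb']
  have hτs : ∀ s, s ≠ a' → s ≠ b' → τ s = σ s := by
    intro s hsa hsb
    have h1 : σ s ≠ a := fun hh => hsa (by rw [ha', ← hh]; simp)
    have h2 : σ s ≠ b := fun hh => hsb (by rw [hb', ← hh]; simp)
    simp [hτ, Equiv.Perm.mul_apply, Equiv.swap_apply_of_ne_of_ne h1 h2]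
  have hval : tropVal A row col τ = tropVal A row col σ := by
    rw [trop_sum_decomp A row col hab' τ, trop_sum_decomp A row col hab' σ,
      hτa, hτb, hσa', hσb']
    have hsum : (∑ s ∈ (Finset.univ.erase a').erase b', A (row s) (col (τ s)))
        = ∑ s ∈ (Finset.univ.erase a').erase b', A (row s) (col (σ s)) := by
      refine Finset.sum_congr rfl fun s hs => ?_
      simp only [Finset.mem_erase] at hs
      rw [hτs s hs.2.1 hs.1]
    rw [hsum]
    have h1 := h a'
    have h2 := h b'
    linarith
  refine ⟨σ, τ, ?_, fun ρ => hσ ρ (Finset.mem_univ ρ),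
    fun ρ => hval ▸ hσ ρ (Finset.mem_univ ρ)⟩
  intro heq
  unfold tropPairs at heq
  rw [univ_val_decomp hab', Multiset.map_cons, Multiset.map_cons,
    Multiset.map_cons, Multiset.map_cons] at heq
  have hMeq : (((Finset.univ.erase a').erase b').val.map
      fun s => Sym2.mk (row s) (col (σ s)))
      = ((Finset.univ.erase a').erase b').val.map fun s => Sym2.mk (row s) (col (τ s)) := by
    refine Multiset.map_congr rfl fun s hs => ?_
    have hs' : s ∈ (Finset.univ.erase a').erase b' := hs
    simp only [Finset.mem_erase] at hs'
    rw [hτs s hs'.2.1 hs'.1]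
  rw [← hMeq, hτa, hτb, hσa', hσb'] at heq
  have hcases := pair_multiset_eq heq
  have hcab : col a ≠ col b := fun hh => hab (hcol hh)
  have hrab : row a' ≠ row b' := fun hh => hab' (hrow hh)
  rcases hcases with ⟨h1, -⟩ | ⟨h1, -⟩
  · rw [Sym2.eq_iff] at h1
    rcases h1 with ⟨-, h2⟩ | ⟨h2, h3⟩
    · exact hcab h2
    · exact hcab (h3.trans h2)
  · rw [Sym2.eq_iff] at h1
    rcases h1 with ⟨h2, -⟩ | ⟨h2, h3⟩
    · exact hrab h2
    · exact hrab (h2.trans h3)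

end Aux

/-- If one row of an `r × r` submatrix of a symmetric matrix equals a constant plus
another row, the submatrix is symmetrically tropically singular; likewise for columns. -/
theorem stmt4 (n r : ℕ) (A : Matrix (Fin n) (Fin n) ℝ) (hA : A.IsSymm)
    (row col : Fin r → Fin n) (hrow : StrictMono row) (hcol : StrictMono col) :
    (∀ a b : Fin r, a ≠ b → ∀ c : ℝ,
      (∀ s : Fin r, A (row a) (col s) = c + A (row b) (col s)) →
        SymTropSing A row col) ∧
    (∀ a b : Fin r, a ≠ b → ∀ c : ℝ,
      (∀ s : Fin r, A (row s) (col a) = c + A (row s) (col b)) →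
        SymTropSing A row col) := by
  constructor
  · intro a b hab c h
    exact symTropSing_of_row A hrow.injective hcol.injective hab h
  · intro a b hab c h
    exact symTropSing_of_col A hrow.injective hcol.injective hab h

end
end

section
/- Let k, l ≥ 1 and let C be a k×l real matrix with all entries nonnegative and no column identically zero. Let A be the (k+1+l)×(k+1+l) real symmetric matrix whose top-right k×l block is C, whose bottom-left l×k block is Cᵀ, and all of whose other entries are 0. If A has symmetric tropical rank two, then A has symmetric Kapranov rank two. -/
/-!
Common definitions for tropical geometry of symmetric matrices, following
Develin–Santos–Sturmfels and the paper under formalization.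
-/

open Matrix

noncomputable section

/-! ### Auxiliary machinery for the proof -/

section StmtTenAux

lemma aux_sum_pow2_succ (m : ℕ) : (∑ j ∈ Finset.range m, 2^j) + 1 = 2^m := by
  induction m with
  | zero => simp
  | succ m ih => rw [Finset.sum_range_succ, pow_succ]; omega

lemma aux_sum_pow2_lt {U : Finset ℕ} {m : ℕ} (h : U ⊆ Finset.range m) :
    ∑ j ∈ U, 2^j < 2^m := by
  have h1 : ∑ j ∈ U, 2^j ≤ ∑ j ∈ Finset.range m, 2^j :=
    Finset.sum_le_sum_of_subset h
  have := aux_sum_pow2_succ m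
  omega

lemma aux_pow2_inj_aux : ∀ (m : ℕ) (U1 U2 : Finset ℕ), U1 ⊆ Finset.range m →
    U2 ⊆ Finset.range m → (∑ j ∈ U1, 2^j) = ∑ j ∈ U2, 2^j → U1 = U2 := by
  intro m
  induction m with
  | zero => intro U1 U2 h1 h2 _; simp only [Finset.range_zero, Finset.subset_empty] at h1 h2
            rw [h1, h2]
  | succ m ih =>
    intro U1 U2 h1 h2 hs
    have key : ∀ U : Finset ℕ, U ⊆ Finset.range (m+1) → m ∉ U → U ⊆ Finset.range m := by
      intro U hU hm j hj
      have := hU hj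
      simp only [Finset.mem_range] at this ⊢
      rcases Nat.lt_succ_iff_lt_or_eq.1 this with h | h
      · exact h
      · exact absurd (h ▸ hj) hm
    have erasesub : ∀ U : Finset ℕ, U ⊆ Finset.range (m+1) → U.erase m ⊆ Finset.range m := by
      intro U hU j hj
      have hne := Finset.ne_of_mem_erase hj
      have := hU (Finset.mem_of_mem_erase hj)
      simp only [Finset.mem_range] at this ⊢
      omega
    by_cases hm1 : m ∈ U1 <;> by_cases hm2 : m ∈ U2
    · have e1 : ∑ j ∈ U1, 2^j = 2^m + ∑ j ∈ U1.erase m, 2^j :=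
        (Finset.add_sum_erase _ _ hm1).symm
      have e2 : ∑ j ∈ U2, 2^j = 2^m + ∑ j ∈ U2.erase m, 2^j :=
        (Finset.add_sum_erase _ _ hm2).symm
      have : U1.erase m = U2.erase m := by
        apply ih _ _ (erasesub _ h1) (erasesub _ h2)
        omega
      rw [← Finset.insert_erase hm1, ← Finset.insert_erase hm2, this]
    · exfalso
      have e1 : 2^m ≤ ∑ j ∈ U1, 2^j := Finset.single_le_sum (f := fun j => 2^j)
        (fun _ _ => Nat.zero_le _) hm1
      have e2 : ∑ j ∈ U2, 2^j < 2^m := aux_sum_pow2_lt (key _ h2 hm2)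
      omega
    · exfalso
      have e1 : 2^m ≤ ∑ j ∈ U2, 2^j := Finset.single_le_sum (f := fun j => 2^j)
        (fun _ _ => Nat.zero_le _) hm2
      have e2 : ∑ j ∈ U1, 2^j < 2^m := aux_sum_pow2_lt (key _ h1 hm1)
      omega
    · exact ih _ _ (key _ h1 hm1) (key _ h2 hm2) hs

lemma aux_pow2_inj {U1 U2 : Finset ℕ} (h : (∑ j ∈ U1, 2^j) = ∑ j ∈ U2, 2^j) : U1 = U2 := by
  refine aux_pow2_inj_aux ((U1 ∪ U2).sup id + 1) U1 U2 ?_ ?_ h <;>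
  · intro j hj
    simp only [Finset.mem_range]
    have : j ≤ (U1 ∪ U2).sup id := Finset.le_sup (f := id) (by simp [hj])
    omega

/- ### HahnSeries helpers -/

lemma aux_coeff_sum {α : Type*} (u : Finset α) (g : α → K) (r : ℝ) :
    (∑ b ∈ u, g b).coeff r = ∑ b ∈ u, (g b).coeff r :=
  map_sum (HahnSeries.coeff.addMonoidHom r) g u

lemma aux_order_eq {x : K} {γ : ℝ} (h0 : x.coeff γ ≠ 0)
    (hlt : ∀ δ : ℝ, δ < γ → x.coeff δ = 0) : x ≠ 0 ∧ x.order = γ := by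
  have hx : x ≠ 0 := by
    intro h; rw [h] at h0; simp at h0
  refine ⟨hx, ?_⟩
  have hle : x.order ≤ γ := HahnSeries.order_le_of_coeff_ne_zero h0
  rcases lt_or_eq_of_le hle with h | h
  · exact absurd (hlt _ h) (fun h => hx (HahnSeries.coeff_order_eq_zero.mp h))
  · exact h

def MinTwice (a b c d : ℝ) : Prop :=
  ∃ M : ℝ, (M ≤ a ∧ M ≤ b ∧ M ≤ c ∧ M ≤ d) ∧
    ((M = a ∧ M = b) ∨ (M = a ∧ M = c) ∨ (M = a ∧ M = d) ∨
     (M = b ∧ M = c) ∨ (M = b ∧ M = d) ∨ (M = c ∧ M = d))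

lemma minTwice_swap_mid {a b c d : ℝ} (h : MinTwice a b c d) : MinTwice a c b d := by
  obtain ⟨M, ⟨h1, h2, h3, h4⟩, h6⟩ := h
  exact ⟨M, ⟨h1, h3, h2, h4⟩, by tauto⟩

lemma minTwice_swap_rows {a b c d : ℝ} (h : MinTwice a b c d) : MinTwice c d a b := by
  obtain ⟨M, ⟨h1, h2, h3, h4⟩, h6⟩ := h
  exact ⟨M, ⟨h3, h4, h1, h2⟩, by tauto⟩

lemma minTwice_swap_cols {a b c d : ℝ} (h : MinTwice a b c d) : MinTwice b a d c := by
  obtain ⟨M, ⟨h1, h2, h3, h4⟩, h6⟩ := h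
  exact ⟨M, ⟨h2, h1, h4, h3⟩, by tauto⟩

lemma aux_min_eq {x y M : ℝ} (hx : M ≤ x) (hy : M ≤ y) (h : M = x ∨ M = y) :
    min x y = M := by
  rcases h with rfl | rfl
  · exact min_eq_left hy
  · exact min_eq_right hx

lemma minTwice_L1 {a b c d : ℝ} (h : MinTwice a b c d) (h1 : a ≠ c) (h2 : b ≠ d) :
    min a c = min b d := by
  obtain ⟨M, ⟨hA, hB, hC, hD⟩, h6⟩ := h
  rcases h6 with ⟨e1, e2⟩ | ⟨e1, e2⟩ | ⟨e1, e2⟩ | ⟨e1, e2⟩ | ⟨e1, e2⟩ | ⟨e1, e2⟩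
  · rw [aux_min_eq hA hC (Or.inl e1), aux_min_eq hB hD (Or.inl e2)]
  · exact absurd (e1 ▸ e2) h1
  · rw [aux_min_eq hA hC (Or.inl e1), aux_min_eq hB hD (Or.inr e2)]
  · rw [aux_min_eq hA hC (Or.inr e2), aux_min_eq hB hD (Or.inl e1)]
  · exact absurd (e1 ▸ e2) h2
  · rw [aux_min_eq hA hC (Or.inr e1), aux_min_eq hB hD (Or.inr e2)]

lemma minTwice_L2 {a b c d : ℝ} (h : MinTwice a b c d) (h1 : a ≠ c) (h2 : b = d) :
    b ≤ min a c := by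
  obtain ⟨M, ⟨hA, hB, hC, hD⟩, h6⟩ := h
  rcases h6 with ⟨e1, e2⟩ | ⟨e1, e2⟩ | ⟨e1, e2⟩ | ⟨e1, e2⟩ | ⟨e1, e2⟩ | ⟨e1, e2⟩
  · exact le_min (by linarith) (by linarith)
  · exact absurd (e1 ▸ e2) h1
  · exact le_min (by linarith) (by linarith)
  · exact le_min (by linarith) (by linarith)
  · exact le_min (by linarith) (by linarith)
  · exact le_min (by linarith) (by linarith)


def W6 (c a bc d ad b : ℝ) : Fin 6 → ℝ := fun p =>
  if p.val = 0 then c else if p.val = 1 then a else if p.val = 2 then bc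
  else if p.val = 3 then d else if p.val = 4 then ad else b

lemma minTwice_core (a b c d m : ℝ) (ha : 0 ≤ a) (hb : 0 ≤ b) (hc : 0 ≤ c) (hd : 0 ≤ d)
    (h1 : m ≤ c) (h2 : m ≤ a) (h3 : m ≤ b + c) (h4 : m ≤ d) (h5 : m ≤ a + d) (h6 : m ≤ b)
    (p q : Fin 6) (hpq : p ≠ q)
    (hp : W6 c a (b+c) d (a+d) b p = m) (hq : W6 c a (b+c) d (a+d) b q = m) :
    MinTwice a b c d := by
  unfold MinTwice
  fin_cases p <;> fin_cases q <;> simp [W6] at hp hq <;>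
    first
      | exact absurd rfl hpq
      | (refine ⟨m, ⟨by linarith, by linarith, by linarith, by linarith⟩, ?_⟩
         first
          | exact Or.inl ⟨by linarith, by linarith⟩
          | exact Or.inr (Or.inl ⟨by linarith, by linarith⟩)
          | exact Or.inr (Or.inr (Or.inl ⟨by linarith, by linarith⟩))
          | exact Or.inr (Or.inr (Or.inr (Or.inl ⟨by linarith, by linarith⟩)))
          | exact Or.inr (Or.inr (Or.inr (Or.inr (Or.inl ⟨by linarith, by linarith⟩))))
          | exact Or.inr (Or.inr (Or.inr (Or.inr (Or.inr ⟨by linarith, by linarith⟩)))))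


def iEmb (k l : ℕ) (i : Fin k) : Fin (k+1+l) := ⟨i, by omega⟩
def mEmb (k l : ℕ) : Fin (k+1+l) := ⟨k, by omega⟩
def sEmb (k l : ℕ) (s : Fin l) : Fin (k+1+l) := ⟨k+1+s, by omega⟩
@[simp] lemma iEmb_val (k l : ℕ) (i : Fin k) : (iEmb k l i : ℕ) = i := rfl
@[simp] lemma mEmb_val (k l : ℕ) : (mEmb k l : ℕ) = k := rfl
@[simp] lemma sEmb_val (k l : ℕ) (s : Fin l) : (sEmb k l s : ℕ) = k+1+s := rfl

def perm3vec : Fin 6 → (Fin 3 → Fin 3) := fun p =>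
  if p.val = 0 then ![0,1,2] else if p.val = 1 then ![1,0,2] else if p.val = 2 then ![2,1,0]
  else if p.val = 3 then ![0,2,1] else if p.val = 4 then ![1,2,0] else ![2,0,1]

def perm3inv : Fin 6 → (Fin 3 → Fin 3) := fun p =>
  if p.val = 0 then ![0,1,2] else if p.val = 1 then ![1,0,2] else if p.val = 2 then ![2,1,0]
  else if p.val = 3 then ![0,2,1] else if p.val = 4 then ![2,0,1] else ![1,2,0]

def perm3 (p : Fin 6) : Equiv.Perm (Fin 3) :=
  ⟨perm3vec p, perm3inv p, by fin_cases p <;> decide, by fin_cases p <;> decide⟩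

lemma perm3_surj : ∀ ρ : Equiv.Perm (Fin 3), ∃ p : Fin 6, perm3 p = ρ := by decide

/-- value table for the 3×3 submatrix `[0 a b; 0 c d; 0 0 0]` -/
def V9 (a b c d : ℝ) : Fin 3 → Fin 3 → ℝ := fun p q =>
  if p.val = 0 then (if q.val = 0 then 0 else if q.val = 1 then a else b)
  else if p.val = 1 then (if q.val = 0 then 0 else if q.val = 1 then c else d)
  else 0

lemma sm3 {n : ℕ} (x y z : Fin n) (h1 : x < y) (h2 : y < z) : StrictMono ![x,y,z] := by
  intro a b hab
  fin_cases a <;> fin_cases b <;>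
    first
      | exact absurd hab (by decide)
      | simpa using h1
      | simpa using h2
      | simpa using h1.trans h2

lemma P2_from_trop {k l : ℕ} (C : Matrix (Fin k) (Fin l) ℝ) (hC0 : ∀ i s, 0 ≤ C i s)
    (A : Matrix (Fin (k+1+l)) (Fin (k+1+l)) ℝ)
    (hAim : ∀ i, A (iEmb k l i) (mEmb k l) = 0)
    (hAis : ∀ i s, A (iEmb k l i) (sEmb k l s) = C i s)
    (hAsm : ∀ s, A (sEmb k l s) (mEmb k l) = 0)
    (hAss : ∀ s s', A (sEmb k l s) (sEmb k l s') = 0)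
    (hsing : ∀ row col : Fin 3 → Fin (k+1+l), StrictMono row → StrictMono col →
      SymTropSing A row col) :
    ∀ i i' s s', i ≠ i' → s ≠ s' → MinTwice (C i s) (C i s') (C i' s) (C i' s') := by
  have hcore : ∀ i i' s s', i < i' → s < s' →
      MinTwice (C i s) (C i s') (C i' s) (C i' s') := by
    intro i i' s s' hii hss
    set a := C i s with ha
    set b := C i s' with hb
    set c := C i' s with hc
    set d := C i' s' with hd
    set row : Fin 3 → Fin (k+1+l) := ![iEmb k l i, iEmb k l i', sEmb k l s] with hrow
    set col : Fin 3 → Fin (k+1+l) := ![mEmb k l, sEmb k l s, sEmb k l s'] with hcol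
    have hrowSM : StrictMono row := by
      apply sm3
      · simp only [Fin.lt_def, iEmb_val]; exact hii
      · simp only [Fin.lt_def, iEmb_val, sEmb_val]; omega
    have hcolSM : StrictMono col := by
      apply sm3
      · simp only [Fin.lt_def, mEmb_val, sEmb_val]; omega
      · simp only [Fin.lt_def, sEmb_val]; omega
    obtain ⟨σ, τ, hpair, hσ, hτ⟩ := hsing row col hrowSM hcolSM
    have hστ : σ ≠ τ := fun h => hpair (by rw [h])
    have hEntry : ∀ p q : Fin 3, A (row p) (col q) = V9 a b c d p q := by
      intro p q
      fin_cases p <;> fin_cases q <;>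
        simp [hrow, hcol, V9, hAim, hAis, hAsm, hAss, ha, hb, hc, hd]
    have hval : ∀ ρ : Equiv.Perm (Fin 3), tropVal A row col ρ =
        V9 a b c d 0 (ρ 0) + V9 a b c d 1 (ρ 1) + V9 a b c d 2 (ρ 2) := by
      intro ρ
      rw [tropVal, Fin.sum_univ_three, hEntry, hEntry, hEntry]
    have hW : ∀ p : Fin 6, W6 c a (b+c) d (a+d) b p = tropVal A row col (perm3 p) := by
      intro p
      fin_cases p <;>
        (rw [hval] <;> simp [W6, perm3, Equiv.coe_fn_mk, perm3vec, V9] <;> ring)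
    set m := tropVal A row col σ with hm
    have hbound : ∀ p : Fin 6, m ≤ W6 c a (b+c) d (a+d) b p := by
      intro p; rw [hW p]; exact hσ (perm3 p)
    obtain ⟨pσ, hpσ⟩ := perm3_surj σ
    obtain ⟨pτ, hpτ⟩ := perm3_surj τ
    have hpq : pσ ≠ pτ := fun h => hστ (by rw [← hpσ, ← hpτ, h])
    have hp : W6 c a (b+c) d (a+d) b pσ = m := by rw [hW pσ, hpσ]
    have hq : W6 c a (b+c) d (a+d) b pτ = m := by
      rw [hW pτ, hpτ]; exact le_antisymm (hτ σ) (hσ τ)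
    exact minTwice_core a b c d m (hC0 _ _) (hC0 _ _) (hC0 _ _) (hC0 _ _)
      (hbound 0) (hbound 1) (hbound 2) (hbound 3) (hbound 4) (hbound 5) pσ pτ hpq hp hq
  intro i i' s s' hii hss
  rcases hii.lt_or_gt with h | h <;> rcases hss.lt_or_gt with h' | h'
  · exact hcore i i' s s' h h'
  · exact minTwice_swap_cols (hcore i i' s' s h h')
  · exact minTwice_swap_rows (hcore i' i s s' h h')
  · exact minTwice_swap_rows (minTwice_swap_cols (hcore i' i s' s h h'))

section Construction

variable {k l : ℕ} (C : Matrix (Fin k) (Fin l) ℝ) (M : ℝ)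

open Classical in
/-- distance between two row-points -/
def dpF : Fin k → Fin k → ℝ := fun i i' =>
  if h : ∃ s, C i s ≠ C i' s then min (C i h.choose) (C i' h.choose) else M

open Classical in
/-- distance between two column-points -/
def dqF : Fin l → Fin l → ℝ := fun s s' =>
  if h : ∃ i, C i s ≠ C i s' then min (C h.choose s) (C h.choose s') else M

/-- the ultrametric-like exponent function -/
def eF : (Fin k ⊕ Fin l) → (Fin k ⊕ Fin l) → ℝ
  | .inl i, .inl i' => if i = i' then M else dpF C M i i'
  | .inl i, .inr s => C i s
  | .inr s, .inl i => C i s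
  | .inr s, .inr s' => if s = s' then M else dqF C M s s'

def idxF : (Fin k ⊕ Fin l) → ℕ := Sum.elim Fin.val fun s => k + s.val

lemma idxF_inj : Function.Injective (idxF (k := k) (l := l)) := by
  rintro (i|s) (i'|s') h <;> simp only [idxF, Sum.elim_inl, Sum.elim_inr] at h
  · exact congrArg Sum.inl (Fin.ext h)
  · exact absurd h (by have := i.isLt; omega)
  · exact absurd h (by have := i'.isLt; omega)
  · exact congrArg Sum.inr (Fin.ext (by omega))

/-- the Hahn series attached to each point -/
def fF : (Fin k ⊕ Fin l) → K := fun a =>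
  ∑ b : Fin k ⊕ Fin l, HahnSeries.single (eF C M a b) ((2^(idxF b) : ℕ) : ℂ)

variable (hC0 : ∀ i s, 0 ≤ C i s) (hM : ∀ i s, C i s < M) (hM0 : 0 ≤ M)
variable (hP2 : ∀ i i' s s', i ≠ i' → s ≠ s' →
  MinTwice (C i s) (C i s') (C i' s) (C i' s'))

section
include hP2

lemma dpF_diff : ∀ i i' s, C i s ≠ C i' s → dpF C M i i' = min (C i s) (C i' s) := by
  intro i i' s hs
  have hex : ∃ s, C i s ≠ C i' s := ⟨s, hs⟩
  rw [dpF, dif_pos hex]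
  by_cases heq : hex.choose = s
  · rw [heq]
  · have hii : i ≠ i' := fun h => hs (by rw [h])
    exact minTwice_L1 (hP2 i i' hex.choose s hii heq) hex.choose_spec hs

lemma dqF_diff : ∀ s s' i, C i s ≠ C i s' → dqF C M s s' = min (C i s) (C i s') := by
  intro s s' i hi
  have hex : ∃ i, C i s ≠ C i s' := ⟨i, hi⟩
  rw [dqF, dif_pos hex]
  by_cases heq : hex.choose = i
  · rw [heq]
  · have hss : s ≠ s' := fun h => hi (by rw [h])
    exact minTwice_L1 (minTwice_swap_mid (hP2 hex.choose i s s' heq hss))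
      hex.choose_spec hi

include hM in
lemma dpF_ge : ∀ i i' s, C i s = C i' s → C i s ≤ dpF C M i i' := by
  intro i i' s hs
  rw [dpF]
  split_ifs with hex
  · have hii : i ≠ i' := fun h => hex.choose_spec (by subst h; rfl)
    have hss : hex.choose ≠ s := fun h => hex.choose_spec (by rw [h]; exact hs)
    exact minTwice_L2 (hP2 i i' hex.choose s hii hss) hex.choose_spec hs
  · exact le_of_lt (hM i s)

include hM in
lemma dqF_ge : ∀ s s' i, C i s = C i s' → C i s ≤ dqF C M s s' := by
  intro s s' i hi
  rw [dqF]
  split_ifs with hex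
  · have hss : s ≠ s' := fun h => hex.choose_spec (by subst h; rfl)
    have hii : hex.choose ≠ i := fun h => hex.choose_spec (by rw [h]; exact hi)
    exact minTwice_L2 (minTwice_swap_mid (hP2 hex.choose i s s' hii hss))
      hex.choose_spec hi
  · exact le_of_lt (hM i s)

end

include hC0 hM0 in
lemma dpF_nonneg : ∀ i i', 0 ≤ dpF C M i i' := by
  intro i i'
  rw [dpF]
  split_ifs with hex
  · exact le_min (hC0 _ _) (hC0 _ _)
  · exact hM0

include hC0 hM0 in
lemma dqF_nonneg : ∀ s s', 0 ≤ dqF C M s s' := by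
  intro s s'
  rw [dqF]
  split_ifs with hex
  · exact le_min (hC0 _ _) (hC0 _ _)
  · exact hM0

include hC0 hM0 in
lemma eF_nonneg : ∀ a b, 0 ≤ eF C M a b := by
  rintro (i|s) (i'|s') <;> simp only [eF]
  · split_ifs; exacts [hM0, dpF_nonneg C M hC0 hM0 i i']
  · exact hC0 _ _
  · exact hC0 _ _
  · split_ifs; exacts [hM0, dqF_nonneg C M hC0 hM0 s s']

include hM hP2 in
lemma eF_star : ∀ (i : Fin k) (s : Fin l) (b : Fin k ⊕ Fin l),
    eF C M (.inl i) b ≠ eF C M (.inr s) b →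
    C i s ≤ eF C M (.inl i) b ∧ C i s ≤ eF C M (.inr s) b := by
  intro i s b
  match b with
  | .inl i' =>
    intro hne
    simp only [eF] at hne ⊢
    by_cases hii : i = i'
    · rw [if_pos hii] at *
      exact ⟨le_of_lt (hM i s), le_of_eq (by rw [hii])⟩
    · rw [if_neg hii] at *
      by_cases hcs : C i s = C i' s
      · exact ⟨hcs ▸ dpF_ge C M hM hP2 i i' s hcs, le_of_eq hcs⟩
      · have hd : dpF C M i i' = min (C i s) (C i' s) := dpF_diff C M hP2 i i' s hcs
        have hmin : min (C i s) (C i' s) = C i s := by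
          rcases min_cases (C i s) (C i' s) with ⟨h1, _⟩ | ⟨h1, _⟩
          · exact h1
          · exact absurd (hd.trans h1) hne
        constructor
        · rw [hd, hmin]
        · exact min_eq_left_iff.mp hmin
  | .inr s' =>
    intro hne
    simp only [eF] at hne ⊢
    by_cases hss : s = s'
    · rw [if_pos (by rw [hss])] at *
      exact ⟨le_of_eq (by rw [hss]), le_of_lt (hM i s)⟩
    · rw [if_neg (fun h => hss h)] at *
      by_cases hcs : C i s = C i s'
      · exact ⟨le_of_eq hcs, hcs ▸ dqF_ge C M hM hP2 s s' i hcs⟩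
      · have hd : dqF C M s s' = min (C i s) (C i s') := dqF_diff C M hP2 s s' i hcs
        have hmin : min (C i s) (C i s') = C i s := by
          rcases min_cases (C i s) (C i s') with ⟨h1, _⟩ | ⟨h1, _⟩
          · exact h1
          · exact absurd (h1 ▸ hd).symm hne
        exact ⟨min_eq_left_iff.mp hmin, by rw [hd, hmin]⟩

lemma fF_coeff (a : Fin k ⊕ Fin l) (r : ℝ) :
    (fF C M a).coeff r = ∑ b : Fin k ⊕ Fin l,
      if r = eF C M a b then ((2^(idxF b) : ℕ) : ℂ) else 0 := by
  rw [fF, aux_coeff_sum]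
  exact Finset.sum_congr rfl fun b _ => HahnSeries.coeff_single

lemma fF_coeff_nat (a : Fin k ⊕ Fin l) (r : ℝ) :
    ∃ m : ℕ, (fF C M a).coeff r = (m : ℂ) := by
  classical
  refine ⟨∑ b : Fin k ⊕ Fin l, if r = eF C M a b then 2^(idxF b) else 0, ?_⟩
  rw [fF_coeff]
  push_cast
  exact Finset.sum_congr rfl fun b _ => by split_ifs <;> simp

include hC0 hM0 in
lemma fF_coeff_neg (a : Fin k ⊕ Fin l) (r : ℝ) (hr : r < 0) :
    (fF C M a).coeff r = 0 := by
  rw [fF_coeff]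
  refine Finset.sum_eq_zero fun b _ => ?_
  rw [if_neg]
  intro h
  exact absurd (h ▸ eF_nonneg C M hC0 hM0 a b) (not_le.mpr hr)

include hC0 hM hM0 hP2 in
lemma order_PQ (i : Fin k) (s : Fin l) :
    fF C M (.inl i) - fF C M (.inr s) ≠ 0 ∧
      (fF C M (.inl i) - fF C M (.inr s)).order = C i s := by
  classical
  set γ := C i s with hγ
  apply aux_order_eq
  · -- coefficient at γ is nonzero
    rw [HahnSeries.coeff_sub, fF_coeff, fF_coeff, ← Finset.sum_sub_distrib]
    rw [Finset.sum_sub_distrib, ← Finset.sum_filter, ← Finset.sum_filter]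
    set F1 := Finset.univ.filter (fun b => γ = eF C M (.inl i) b) with hF1
    set F2 := Finset.univ.filter (fun b => γ = eF C M (.inr s) b) with hF2
    have hc1 : ∑ b ∈ F1, ((2^(idxF b) : ℕ) : ℂ) = ((∑ b ∈ F1, 2^(idxF b) : ℕ) : ℂ) := by
      push_cast; rfl
    have hc2 : ∑ b ∈ F2, ((2^(idxF b) : ℕ) : ℂ) = ((∑ b ∈ F2, 2^(idxF b) : ℕ) : ℂ) := by
      push_cast; rfl
    rw [hc1, hc2, sub_ne_zero]
    intro hcast
    have hnat : (∑ b ∈ F1, 2^(idxF b)) = ∑ b ∈ F2, 2^(idxF b) := Nat.cast_injective hcast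
    have him1 : ∑ b ∈ F1, 2^(idxF b) = ∑ j ∈ F1.image idxF, 2^j :=
      (Finset.sum_image (fun x _ y _ h => idxF_inj h)).symm
    have him2 : ∑ b ∈ F2, 2^(idxF b) = ∑ j ∈ F2.image idxF, 2^j :=
      (Finset.sum_image (fun x _ y _ h => idxF_inj h)).symm
    have himeq : F1.image idxF = F2.image idxF := by
      apply aux_pow2_inj
      rw [← him1, ← him2, hnat]
    have hmem1 : (Sum.inr s : Fin k ⊕ Fin l) ∈ F1 := by
      rw [hF1, Finset.mem_filter]
      exact ⟨Finset.mem_univ _, rfl⟩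
    have : idxF (Sum.inr s : Fin k ⊕ Fin l) ∈ F2.image idxF := by
      rw [← himeq]
      exact Finset.mem_image_of_mem _ hmem1
    obtain ⟨b, hb, hbeq⟩ := Finset.mem_image.mp this
    have hbs : b = Sum.inr s := idxF_inj hbeq
    rw [hbs, hF2, Finset.mem_filter] at hb
    have : γ = M := by
      have := hb.2
      simpa only [eF, if_pos rfl, if_true] using this
    exact absurd (this ▸ hM i s) (lt_irrefl M)
  · -- coefficients below γ vanish
    intro δ hδ
    rw [HahnSeries.coeff_sub, fF_coeff, fF_coeff, ← Finset.sum_sub_distrib]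
    refine Finset.sum_eq_zero fun b _ => ?_
    by_cases hb : eF C M (.inl i) b = eF C M (.inr s) b
    · rw [hb, sub_self]
    · obtain ⟨g1, g2⟩ := eF_star C M hM hP2 i s b hb
      rw [if_neg (by intro h; rw [← h] at g1; exact absurd g1 (not_le.mpr hδ)),
          if_neg (by intro h; rw [← h] at g2; exact absurd g2 (not_le.mpr hδ)), sub_self]

end Construction


/-- the vector of Hahn series used to build the rank-two lift -/
def muF (k l : ℕ) (C : Matrix (Fin k) (Fin l) ℝ) (M : ℝ) : Fin (k+1+l) → K := fun j =>
  if h : (j : ℕ) < k then HahnSeries.single (0:ℝ) (1:ℂ) + fF C M (.inl ⟨(j:ℕ), h⟩)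
  else if h' : (j : ℕ) = k then HahnSeries.single (0:ℝ) Complex.I
  else -(HahnSeries.single (0:ℝ) (1:ℂ)) -
    fF C M (.inr ⟨(j:ℕ) - (k+1), by have := j.isLt; omega⟩)

lemma muF_P {k l : ℕ} (C : Matrix (Fin k) (Fin l) ℝ) (M : ℝ) (i : Fin k) :
    muF k l C M (iEmb k l i) =
      HahnSeries.single (0:ℝ) (1:ℂ) + fF C M (.inl i) := by
  have h : ((iEmb k l i : Fin (k+1+l)) : ℕ) < k := i.isLt
  rw [muF, dif_pos h]
  congr 1

lemma muF_m {k l : ℕ} (C : Matrix (Fin k) (Fin l) ℝ) (M : ℝ) :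
    muF k l C M (mEmb k l) = HahnSeries.single (0:ℝ) Complex.I := by
  rw [muF, dif_neg (by simp only [mEmb_val]; omega), dif_pos (mEmb_val k l)]

lemma muF_Q {k l : ℕ} (C : Matrix (Fin k) (Fin l) ℝ) (M : ℝ) (s : Fin l) :
    muF k l C M (sEmb k l s) =
      -(HahnSeries.single (0:ℝ) (1:ℂ)) - fF C M (.inr s) := by
  rw [muF, dif_neg (by simp only [sEmb_val]; omega),
    dif_neg (by simp only [sEmb_val]; omega)]
  congr 2
  exact congrArg Sum.inr (Fin.ext (by simp only [sEmb_val]; omega))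

section Mu

variable {k l : ℕ} (C : Matrix (Fin k) (Fin l) ℝ) (M : ℝ)
variable (hC0 : ∀ i s, 0 ≤ C i s) (hM0 : 0 ≤ M)

include hC0 hM0 in
lemma order_PP (i i' : Fin k) :
    (HahnSeries.single (0:ℝ) (1:ℂ) + fF C M (.inl i)) +
      (HahnSeries.single (0:ℝ) (1:ℂ) + fF C M (.inl i')) ≠ 0 ∧
    ((HahnSeries.single (0:ℝ) (1:ℂ) + fF C M (.inl i)) +
      (HahnSeries.single (0:ℝ) (1:ℂ) + fF C M (.inl i'))).order = 0 := by
  obtain ⟨m1, hm1⟩ := fF_coeff_nat C M (.inl i) 0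
  obtain ⟨m2, hm2⟩ := fF_coeff_nat C M (.inl i') 0
  apply aux_order_eq
  · rw [HahnSeries.coeff_add, HahnSeries.coeff_add, HahnSeries.coeff_add,
      HahnSeries.coeff_single_same, hm1, hm2]
    rw [show (1 : ℂ) + m1 + (1 + m2) = ((1 + m1 + (1 + m2) : ℕ) : ℂ) by push_cast; ring]
    exact Nat.cast_ne_zero.mpr (by omega)
  · intro δ hδ
    rw [HahnSeries.coeff_add, HahnSeries.coeff_add, HahnSeries.coeff_add,
      HahnSeries.coeff_single_of_ne (ne_of_lt hδ), fF_coeff_neg C M hC0 hM0 _ _ hδ,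
      fF_coeff_neg C M hC0 hM0 _ _ hδ]
    ring

include hC0 hM0 in
lemma order_QQ (s s' : Fin l) :
    (-(HahnSeries.single (0:ℝ) (1:ℂ)) - fF C M (.inr s)) +
      (-(HahnSeries.single (0:ℝ) (1:ℂ)) - fF C M (.inr s')) ≠ 0 ∧
    ((-(HahnSeries.single (0:ℝ) (1:ℂ)) - fF C M (.inr s)) +
      (-(HahnSeries.single (0:ℝ) (1:ℂ)) - fF C M (.inr s'))).order = 0 := by
  obtain ⟨m1, hm1⟩ := fF_coeff_nat C M (.inr s) 0
  obtain ⟨m2, hm2⟩ := fF_coeff_nat C M (.inr s') 0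
  apply aux_order_eq
  · rw [HahnSeries.coeff_add, HahnSeries.coeff_sub, HahnSeries.coeff_sub,
      HahnSeries.coeff_neg, HahnSeries.coeff_single_same, hm1, hm2]
    rw [show -(1 : ℂ) - m1 + (-1 - m2) = -((1 + m1 + (1 + m2) : ℕ) : ℂ) by push_cast; ring]
    exact neg_ne_zero.mpr (Nat.cast_ne_zero.mpr (by omega))
  · intro δ hδ
    rw [HahnSeries.coeff_add, HahnSeries.coeff_sub, HahnSeries.coeff_sub,
      HahnSeries.coeff_neg, HahnSeries.coeff_single_of_ne (ne_of_lt hδ),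
      fF_coeff_neg C M hC0 hM0 _ _ hδ, fF_coeff_neg C M hC0 hM0 _ _ hδ]
    ring

include hC0 hM0 in
lemma order_Pm (i : Fin k) :
    (HahnSeries.single (0:ℝ) (1:ℂ) + fF C M (.inl i)) +
      HahnSeries.single (0:ℝ) Complex.I ≠ 0 ∧
    ((HahnSeries.single (0:ℝ) (1:ℂ) + fF C M (.inl i)) +
      HahnSeries.single (0:ℝ) Complex.I).order = 0 := by
  obtain ⟨m1, hm1⟩ := fF_coeff_nat C M (.inl i) 0
  apply aux_order_eq
  · rw [HahnSeries.coeff_add, HahnSeries.coeff_add, HahnSeries.coeff_single_same,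
      HahnSeries.coeff_single_same, hm1]
    intro h
    have := congrArg Complex.im h
    simp at this
  · intro δ hδ
    rw [HahnSeries.coeff_add, HahnSeries.coeff_add,
      HahnSeries.coeff_single_of_ne (ne_of_lt hδ),
      HahnSeries.coeff_single_of_ne (ne_of_lt hδ), fF_coeff_neg C M hC0 hM0 _ _ hδ]
    ring

include hC0 hM0 in
lemma order_Qm (s : Fin l) :
    (-(HahnSeries.single (0:ℝ) (1:ℂ)) - fF C M (.inr s)) +
      HahnSeries.single (0:ℝ) Complex.I ≠ 0 ∧
    ((-(HahnSeries.single (0:ℝ) (1:ℂ)) - fF C M (.inr s)) +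
      HahnSeries.single (0:ℝ) Complex.I).order = 0 := by
  obtain ⟨m1, hm1⟩ := fF_coeff_nat C M (.inr s) 0
  apply aux_order_eq
  · rw [HahnSeries.coeff_add, HahnSeries.coeff_sub, HahnSeries.coeff_neg,
      HahnSeries.coeff_single_same, HahnSeries.coeff_single_same, hm1]
    intro h
    have := congrArg Complex.im h
    simp at this
  · intro δ hδ
    rw [HahnSeries.coeff_add, HahnSeries.coeff_sub, HahnSeries.coeff_neg,
      HahnSeries.coeff_single_of_ne (ne_of_lt hδ),
      HahnSeries.coeff_single_of_ne (ne_of_lt hδ), fF_coeff_neg C M hC0 hM0 _ _ hδ]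
    ring

lemma order_mm :
    HahnSeries.single (0:ℝ) Complex.I + HahnSeries.single (0:ℝ) Complex.I ≠ 0 ∧
    (HahnSeries.single (0:ℝ) Complex.I + HahnSeries.single (0:ℝ) Complex.I).order = 0 := by
  apply aux_order_eq
  · rw [HahnSeries.coeff_add, HahnSeries.coeff_single_same]
    intro h
    have := congrArg Complex.im h
    simp at this
  · intro δ hδ
    rw [HahnSeries.coeff_add, HahnSeries.coeff_single_of_ne (ne_of_lt hδ)]
    simp

end Mu


lemma order_PQfull {k l : ℕ} (C : Matrix (Fin k) (Fin l) ℝ) (M : ℝ)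
    (hC0 : ∀ i s, 0 ≤ C i s) (hM : ∀ i s, C i s < M) (hM0 : 0 ≤ M)
    (hP2 : ∀ i i' s s', i ≠ i' → s ≠ s' →
      MinTwice (C i s) (C i s') (C i' s) (C i' s')) (i : Fin k) (s : Fin l) :
    (HahnSeries.single (0:ℝ) (1:ℂ) + fF C M (.inl i)) +
      (-(HahnSeries.single (0:ℝ) (1:ℂ)) - fF C M (.inr s)) ≠ 0 ∧
    ((HahnSeries.single (0:ℝ) (1:ℂ) + fF C M (.inl i)) +
      (-(HahnSeries.single (0:ℝ) (1:ℂ)) - fF C M (.inr s))).order = C i s := by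
  have heq : (HahnSeries.single (0:ℝ) (1:ℂ) + fF C M (.inl i)) +
      (-(HahnSeries.single (0:ℝ) (1:ℂ)) - fF C M (.inr s)) =
      fF C M (.inl i) - fF C M (.inr s) := by ring
  rw [heq]
  exact order_PQ C M hC0 hM hM0 hP2 i s

lemma rank_ge_two {k l : ℕ} (C : Matrix (Fin k) (Fin l) ℝ)
    (A : Matrix (Fin (k+1+l)) (Fin (k+1+l)) ℝ)
    (i0 : Fin k) (s0 : Fin l) (hpos : 0 < C i0 s0)
    (hAii : A (iEmb k l i0) (iEmb k l i0) = 0)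
    (hAis : A (iEmb k l i0) (sEmb k l s0) = C i0 s0)
    (hAmi : A (mEmb k l) (iEmb k l i0) = 0)
    (hAms : A (mEmb k l) (sEmb k l s0) = 0)
    (B : Matrix (Fin (k+1+l)) (Fin (k+1+l)) K) (hB : IsLift A B) :
    2 ≤ B.rank := by
  classical
  set rv : Fin 2 → Fin (k+1+l) := ![iEmb k l i0, mEmb k l] with hrv
  set cv : Fin 2 → Fin (k+1+l) := ![iEmb k l i0, sEmb k l s0] with hcv
  set R2 : Matrix (Fin 2) (Fin (k+1+l)) K := Matrix.of (fun t j => if j = rv t then 1 else 0)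
    with hR2
  set C2 : Matrix (Fin (k+1+l)) (Fin 2) K := Matrix.of (fun j t => if j = cv t then 1 else 0)
    with hC2
  have hE : ∀ t u : Fin 2, (R2 * B * C2) t u = B (rv t) (cv u) := by
    intro t u
    have h1 : ∀ j, (R2 * B) t j = B (rv t) j := by
      intro j
      simp [hR2, Matrix.mul_apply, ite_mul, Finset.sum_ite_eq]
    rw [Matrix.mul_apply]
    simp only [h1, hC2, Matrix.of_apply]
    simp [Finset.sum_ite_eq', mul_ite]
  have hdet : (R2 * B * C2).det ≠ 0 := by
    rw [Matrix.det_fin_two, hE, hE, hE, hE]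
    simp only [Matrix.cons_val_zero, Matrix.cons_val_one, Matrix.head_cons, hrv, hcv]
    have h00 := hB (iEmb k l i0) (iEmb k l i0)
    have h01 := hB (iEmb k l i0) (sEmb k l s0)
    have h10 := hB (mEmb k l) (iEmb k l i0)
    have h11 := hB (mEmb k l) (sEmb k l s0)
    intro h
    have heq : B (iEmb k l i0) (iEmb k l i0) * B (mEmb k l) (sEmb k l s0) =
        B (iEmb k l i0) (sEmb k l s0) * B (mEmb k l) (iEmb k l i0) := by
      linear_combination h
    have ho := congrArg HahnSeries.order heq
    rw [HahnSeries.order_mul h00.1 h11.1, HahnSeries.order_mul h01.1 h10.1,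
      h00.2, h11.2, h01.2, h10.2, hAii, hAis, hAmi, hAms] at ho
    simp at ho
    linarith
  have hunit : IsUnit (R2 * B * C2) := by
    rw [Matrix.isUnit_iff_isUnit_det]
    exact isUnit_iff_ne_zero.mpr hdet
  have hr2 : (R2 * B * C2).rank = 2 := by
    rw [Matrix.rank_of_isUnit _ hunit]
    simp
  calc (2 : ℕ) = (R2 * B * C2).rank := hr2.symm
    _ ≤ (R2 * B).rank := Matrix.rank_mul_le_left _ _
    _ ≤ B.rank := Matrix.rank_mul_le_right _ _

end StmtTenAux

/-- Lemma 1 of the paper: Let `C` be a `k × l` nonnegative matrix with no zero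
column, and `A` the `(k+1+l) × (k+1+l)` symmetric matrix with top-right block `C`, bottom-left
block `Cᵀ`, and zeros elsewhere. If `A` has symmetric tropical rank two, it has symmetric
Kapranov rank two. -/
theorem stmt10 (k l : ℕ) (hk : 1 ≤ k) (hl : 1 ≤ l)
    (C : Matrix (Fin k) (Fin l) ℝ)
    (hC0 : ∀ i j, 0 ≤ C i j)
    (hCcol : ∀ j, ∃ i, C i j ≠ 0)
    (A : Matrix (Fin (k + 1 + l)) (Fin (k + 1 + l)) ℝ)
    (hABlocks : ∀ i j : Fin (k + 1 + l),
      A i j =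
        if h : (i : ℕ) < k ∧ k + 1 ≤ (j : ℕ) then
          C ⟨(i : ℕ), h.1⟩ ⟨(j : ℕ) - (k + 1), by have := j.isLt; omega⟩
        else if h' : (j : ℕ) < k ∧ k + 1 ≤ (i : ℕ) then
          C ⟨(j : ℕ), h'.1⟩ ⟨(i : ℕ) - (k + 1), by have := i.isLt; omega⟩
        else 0)
    (htrop : symTropicalRank A = 2) :
    symKapranovRank A = 2 := by
  classical
  -- entry lemmas for A
  have hAii : ∀ i i', A (iEmb k l i) (iEmb k l i') = 0 := by
    intro i i'
    have g1 := i.isLt; have g2 := i'.isLt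
    rw [hABlocks, dif_neg (by simp only [iEmb_val]; omega),
      dif_neg (by simp only [iEmb_val]; omega)]
  have hAis : ∀ i s, A (iEmb k l i) (sEmb k l s) = C i s := by
    intro i s
    have g1 := i.isLt; have g2 := s.isLt
    rw [hABlocks, dif_pos (by simp only [iEmb_val, sEmb_val]; omega)]
    congr 1 <;> apply Fin.ext <;> simp only [iEmb_val, sEmb_val] <;> omega
  have hAsi : ∀ s i, A (sEmb k l s) (iEmb k l i) = C i s := by
    intro s i
    have g1 := i.isLt; have g2 := s.isLt
    rw [hABlocks, dif_neg (by simp only [iEmb_val, sEmb_val]; omega),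
      dif_pos (by simp only [iEmb_val, sEmb_val]; omega)]
    congr 1 <;> apply Fin.ext <;> simp only [iEmb_val, sEmb_val] <;> omega
  have hAim : ∀ i, A (iEmb k l i) (mEmb k l) = 0 := by
    intro i
    have g1 := i.isLt
    rw [hABlocks, dif_neg (by simp only [iEmb_val, mEmb_val]; omega),
      dif_neg (by simp only [iEmb_val, mEmb_val]; omega)]
  have hAmi : ∀ i, A (mEmb k l) (iEmb k l i) = 0 := by
    intro i
    have g1 := i.isLt
    rw [hABlocks, dif_neg (by simp only [iEmb_val, mEmb_val]; omega),
      dif_neg (by simp only [iEmb_val, mEmb_val]; omega)]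
  have hAmm : A (mEmb k l) (mEmb k l) = 0 := by
    rw [hABlocks, dif_neg (by simp only [mEmb_val]; omega),
      dif_neg (by simp only [mEmb_val]; omega)]
  have hAms : ∀ s, A (mEmb k l) (sEmb k l s) = 0 := by
    intro s
    have g2 := s.isLt
    rw [hABlocks, dif_neg (by simp only [mEmb_val, sEmb_val]; omega),
      dif_neg (by simp only [mEmb_val, sEmb_val]; omega)]
  have hAsm : ∀ s, A (sEmb k l s) (mEmb k l) = 0 := by
    intro s
    have g2 := s.isLt
    rw [hABlocks, dif_neg (by simp only [mEmb_val, sEmb_val]; omega),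
      dif_neg (by simp only [mEmb_val, sEmb_val]; omega)]
  have hAss : ∀ s s', A (sEmb k l s) (sEmb k l s') = 0 := by
    intro s s'
    have g1 := s.isLt; have g2 := s'.isLt
    rw [hABlocks, dif_neg (by simp only [sEmb_val]; omega),
      dif_neg (by simp only [sEmb_val]; omega)]
  -- every 3×3 submatrix is symmetrically tropically singular
  have hbdd : BddAbove {r | ∃ row col : Fin r → Fin (k+1+l),
      StrictMono row ∧ StrictMono col ∧ ¬ SymTropSing A row col} := by
    refine ⟨k+1+l, fun r hr => ?_⟩
    obtain ⟨row, col, hrow, _, _⟩ := hr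
    have := Fintype.card_le_of_injective row hrow.injective
    simpa using this
  have hsing : ∀ row col : Fin 3 → Fin (k+1+l), StrictMono row → StrictMono col →
      SymTropSing A row col := by
    intro row col h1 h2
    by_contra hno
    have h3 : 3 ≤ symTropicalRank A := le_csSup hbdd ⟨row, col, h1, h2, hno⟩
    rw [htrop] at h3
    omega
  have hP2 : ∀ i i' s s', i ≠ i' → s ≠ s' →
      MinTwice (C i s) (C i s') (C i' s) (C i' s') :=
    P2_from_trop C hC0 A hAim hAis hAsm hAss hsing
  -- the bound M
  set M : ℝ := 1 + ∑ i, ∑ s, C i s with hMdef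
  have hM : ∀ i s, C i s < M := by
    intro i s
    have h1 : C i s ≤ ∑ s', C i s' :=
      Finset.single_le_sum (fun s' _ => hC0 i s') (Finset.mem_univ s)
    have h2 : (∑ s', C i s') ≤ ∑ i', ∑ s', C i' s' :=
      Finset.single_le_sum (fun i' _ => Finset.sum_nonneg fun s' _ => hC0 i' s')
        (Finset.mem_univ i)
    rw [hMdef]; linarith
  have hM0 : 0 ≤ M := by
    have : (0:ℝ) ≤ ∑ i, ∑ s, C i s :=
      Finset.sum_nonneg fun i _ => Finset.sum_nonneg fun s _ => hC0 i s
    rw [hMdef]; linarith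
  -- the lift
  set μ : Fin (k+1+l) → K := muF k l C M with hμ
  set B : Matrix (Fin (k+1+l)) (Fin (k+1+l)) K :=
    Matrix.of (fun i j => μ i + μ j) with hB
  have hBapply : ∀ i j, B i j = μ i + μ j := fun i j => rfl
  have hcases : ∀ j : Fin (k+1+l), (∃ i : Fin k, j = iEmb k l i) ∨ j = mEmb k l ∨
      (∃ s : Fin l, j = sEmb k l s) := by
    intro j
    rcases lt_trichotomy (j:ℕ) k with h | h | h
    · exact Or.inl ⟨⟨(j:ℕ), h⟩, Fin.ext rfl⟩
    · exact Or.inr (Or.inl (Fin.ext h))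
    · refine Or.inr (Or.inr ⟨⟨(j:ℕ) - (k+1), by have := j.isLt; omega⟩, Fin.ext ?_⟩)
      simp only [sEmb_val]
      omega
  have hlift : IsLift A B := by
    intro i j
    rw [hBapply, hμ]
    rcases hcases i with ⟨i1, rfl⟩ | rfl | ⟨s1, rfl⟩ <;>
      rcases hcases j with ⟨i2, rfl⟩ | rfl | ⟨s2, rfl⟩
    · rw [muF_P, muF_P, hAii]
      exact order_PP C M hC0 hM0 i1 i2
    · rw [muF_P, muF_m, hAim]
      exact order_Pm C M hC0 hM0 i1
    · rw [muF_P, muF_Q, hAis]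
      exact order_PQfull C M hC0 hM hM0 hP2 i1 s2
    · rw [muF_m, muF_P, hAmi, add_comm]
      exact order_Pm C M hC0 hM0 i2
    · rw [muF_m, hAmm]
      exact order_mm
    · rw [muF_m, muF_Q, hAms, add_comm]
      exact order_Qm C M hC0 hM0 s2
    · rw [muF_Q, muF_P, hAsi, add_comm]
      exact order_PQfull C M hC0 hM hM0 hP2 i2 s1
    · rw [muF_Q, muF_m, hAsm]
      exact order_Qm C M hC0 hM0 s1
    · rw [muF_Q, muF_Q, hAss]
      exact order_QQ C M hC0 hM0 s1 s2
  have hsymm : B.IsSymm := by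
    apply Matrix.IsSymm.ext
    intro i j
    rw [hBapply, hBapply]
    exact add_comm _ _
  -- rank ≤ 2
  have hle2 : B.rank ≤ 2 := by
    set P2 : Matrix (Fin (k+1+l)) (Fin 2) K :=
      Matrix.of (fun i t => if t = 0 then μ i else 1) with hP2m
    set Q2 : Matrix (Fin 2) (Fin (k+1+l)) K :=
      Matrix.of (fun t j => if t = 0 then 1 else μ j) with hQ2m
    have hfact : B = P2 * Q2 := by
      ext i j
      rw [hBapply, Matrix.mul_apply, Fin.sum_univ_two]
      simp [hP2m, hQ2m]
    calc B.rank = (P2 * Q2).rank := by rw [hfact]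
      _ ≤ P2.rank := Matrix.rank_mul_le_left _ _
      _ ≤ Fintype.card (Fin 2) := Matrix.rank_le_card_width _
      _ = 2 := by simp
  -- rank lower bound for any lift
  obtain ⟨i0, hi0⟩ := hCcol ⟨0, hl⟩
  have hpos : 0 < C i0 ⟨0, hl⟩ := lt_of_le_of_ne (hC0 i0 ⟨0, hl⟩) (Ne.symm hi0)
  have hge2 : ∀ B' : Matrix (Fin (k+1+l)) (Fin (k+1+l)) K, IsLift A B' → 2 ≤ B'.rank :=
    fun B' hB' => rank_ge_two C A i0 ⟨0, hl⟩ hpos (hAii i0 i0) (hAis i0 ⟨0, hl⟩)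
      (hAmi i0) (hAms ⟨0, hl⟩) B' hB'
  have hBrank : B.rank = 2 := le_antisymm hle2 (hge2 B hlift)
  have hmem : 2 ∈ {r | ∃ B : Matrix (Fin (k+1+l)) (Fin (k+1+l)) K,
      IsLift A B ∧ B.IsSymm ∧ B.rank = r} := ⟨B, hlift, hsymm, hBrank⟩
  rw [symKapranovRank]
  refine le_antisymm (Nat.sInf_le hmem) (le_csInf ⟨2, hmem⟩ ?_)
  rintro r ⟨B', h1, _, rfl⟩
  exact hge2 B' h1

end
end

section
/- Let A be an n×n real symmetric matrix with symmetric tropical rank two in which every row (equivalently, every column) has 0 as its minimal entry. Then there is a permutation π of {1,…,n} such that the matrix B defined by B_{s,t} = A_{π(s),π(t)} has the following block structure: the index set {1,…,n} is partitioned into consecutive intervals Z, I₁, I₂, J, K (any of which may be empty) such that every row of B indexed by Z is zero; the restrictions of B to I₁×I₁ and to I₂×I₂ are symmetric matrices with all entries positive; the restriction of B to J×K is a nonnegative matrix with no column identically zero, and the restriction to K×J is its transpose; and every other entry of B is 0. Moreover, A is not the zero matrix, and the decomposition does not consist of a single positive block (it is not the case that I₁ = {1,…,n} or I₂ = {1,…,n}).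 -/
/-!
Common definitions for tropical geometry of symmetric matrices, following
Develin–Santos–Sturmfels and the paper under formalization.
-/

open Matrix

noncomputable section

namespace Stmt13

variable {n r : ℕ}

variable {n r : ℕ} (A : Matrix (Fin n) (Fin n) ℝ)

lemma tropVal_comp (row col : Fin r → Fin n) (e e' σ : Equiv.Perm (Fin r)) :
    tropVal A (row ∘ e) (col ∘ e') σ = tropVal A row col (e.symm.trans (σ.trans e')) := by
  unfold tropVal
  rw [← Equiv.sum_comp e (fun s => A (row s) (col ((e.symm.trans (σ.trans e')) s)))]
  simp [Equiv.trans]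

lemma tropPairs_comp (row col : Fin r → Fin n) (e e' σ : Equiv.Perm (Fin r)) :
    tropPairs (row ∘ e) (col ∘ e') σ = tropPairs row col (e.symm.trans (σ.trans e')) := by
  have huniv : (Finset.univ.val : Multiset (Fin r)).map ⇑e = Finset.univ.val := by
    conv_rhs => rw [← Finset.map_univ_equiv e]
    rfl
  unfold tropPairs
  conv_rhs => rw [← huniv]
  rw [Multiset.map_map]
  refine Multiset.map_congr rfl ?_
  intro x _
  simp [Equiv.trans]

lemma minimizing_comp (row col : Fin r → Fin n) (e e' σ : Equiv.Perm (Fin r))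
    (h : Minimizing A (row ∘ e) (col ∘ e') σ) :
    Minimizing A row col (e.symm.trans (σ.trans e')) := by
  intro τ'
  have h1 := h (e.trans (τ'.trans e'.symm))
  have e1 := tropVal_comp A row col e e' σ
  have e2 : tropVal A (row ∘ ⇑e) (col ∘ ⇑e') (e.trans (τ'.trans e'.symm)) =
      tropVal A row col τ' := by
    rw [tropVal_comp]
    congr 1
    ext x
    simp
  rw [← e1, ← e2]
  exact h1

lemma symTropSing_comp (row col : Fin r → Fin n) (e e' : Equiv.Perm (Fin r))
    (h : SymTropSing A (row ∘ e) (col ∘ e')) : SymTropSing A row col := by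
  obtain ⟨σ, τ, hne, hσ, hτ⟩ := h
  exact ⟨e.symm.trans (σ.trans e'), e.symm.trans (τ.trans e'),
    by rw [← tropPairs_comp, ← tropPairs_comp]; exact hne,
    minimizing_comp A row col e e' σ hσ, minimizing_comp A row col e e' τ hτ⟩


lemma perm2_cases : ∀ σ : Equiv.Perm (Fin 2), σ = 1 ∨ σ = Equiv.swap 0 1 := by decide

lemma rank_facts (A : Matrix (Fin n) (Fin n) ℝ) (htrop : symTropicalRank A = 2) :
    (∀ row col : Fin 3 → Fin n, Function.Injective row → Function.Injective col →
      SymTropSing A row col) ∧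
    ∃ i j k l : Fin n, i < j ∧ k < l ∧ A i k + A j l ≠ A i l + A j k := by
  set S := {r | ∃ row col : Fin r → Fin n, StrictMono row ∧ StrictMono col ∧
    ¬ SymTropSing A row col} with hS
  have hbdd : BddAbove S := by
    refine ⟨n, fun r hr => ?_⟩
    obtain ⟨row, _, hrow, _, _⟩ := hr
    simpa using Fintype.card_le_of_injective row hrow.injective
  have hne : S.Nonempty := by
    refine ⟨0, Fin.elim0, Fin.elim0, fun a => a.elim0, fun a => a.elim0, ?_⟩
    rintro ⟨σ, τ, hne, -, -⟩
    exact hne (by simp [tropPairs])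
  have h2mem : 2 ∈ S := by
    have := Nat.sSup_mem hne hbdd
    rwa [show sSup S = 2 from htrop] at this
  have h3 : 3 ∉ S := by
    intro h
    have := le_csSup hbdd h
    rw [show sSup S = 2 from htrop] at this
    omega
  constructor
  · intro row col hr hc
    set e := Tuple.sort row with he
    set e' := Tuple.sort col with he'
    have hm : StrictMono (row ∘ e) :=
      (Tuple.monotone_sort row).strictMono_of_injective (hr.comp e.injective)
    have hm' : StrictMono (col ∘ e') :=
      (Tuple.monotone_sort col).strictMono_of_injective (hc.comp e'.injective)
    have hsing : SymTropSing A (row ∘ e) (col ∘ e') := by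
      by_contra h
      exact h3 ⟨row ∘ e, col ∘ e', hm, hm', h⟩
    exact symTropSing_comp A row col e e' hsing
  · obtain ⟨row, col, hrow, hcol, hns⟩ := h2mem
    refine ⟨row 0, row 1, col 0, col 1, hrow (by decide), hcol (by decide), ?_⟩
    intro heq
    apply hns
    have tv : ∀ σ : Equiv.Perm (Fin 2),
        tropVal A row col σ = A (row 0) (col (σ 0)) + A (row 1) (col (σ 1)) :=
      fun σ => Fin.sum_univ_two _
    have hmin : ∀ σ τ : Equiv.Perm (Fin 2), tropVal A row col σ ≤ tropVal A row col τ := by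
      intro σ τ
      rcases perm2_cases σ with rfl | rfl <;> rcases perm2_cases τ with rfl | rfl <;>
        simp only [tv] <;>
        simp only [Equiv.Perm.one_apply, Equiv.swap_apply_left, Equiv.swap_apply_right] <;>
        linarith
    refine ⟨1, Equiv.swap 0 1, ?_, fun τ => hmin _ τ, fun τ => hmin _ τ⟩
    have hpe : tropPairs row col (1 : Equiv.Perm (Fin 2)) =
        {Sym2.mk (row 0) (col 0), Sym2.mk (row 1) (col 1)} := by
      simp [tropPairs, show (Finset.univ.val : Multiset (Fin 2)) = {0, 1} from rfl]
    have hps : tropPairs row col (Equiv.swap 0 1 : Equiv.Perm (Fin 2)) =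
        {Sym2.mk (row 0) (col 1), Sym2.mk (row 1) (col 0)} := by
      simp [tropPairs, show (Finset.univ.val : Multiset (Fin 2)) = {0, 1} from rfl]
    rw [hpe, hps]
    intro hmeq
    have hrne : row 0 ≠ row 1 := (hrow (show (0:Fin 2) < 1 by decide)).ne
    have hcne : col 0 ≠ col 1 := (hcol (show (0:Fin 2) < 1 by decide)).ne
    have hmem : Sym2.mk (row 0) (col 0) ∈
        ({Sym2.mk (row 0) (col 1), Sym2.mk (row 1) (col 0)} : Multiset (Sym2 (Fin n))) := by
      rw [← hmeq]
      exact Multiset.mem_cons_self _ _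
    rcases Multiset.mem_cons.mp hmem with h | h
    · rcases Sym2.eq_iff.mp h with ⟨h1, h2⟩ | ⟨h1, h2⟩
      · exact hcne h2
      · exact hcne (h2.trans h1)
    · rw [Multiset.mem_singleton] at h
      rcases Sym2.eq_iff.mp h with ⟨h1, h2⟩ | ⟨h1, h2⟩
      · exact hrne h1
      · exact hrne (h1.trans h2)

def c3a : Equiv.Perm (Fin 3) := (Equiv.swap 0 1).trans (Equiv.swap 0 2)
def c3b : Equiv.Perm (Fin 3) := (Equiv.swap 0 2).trans (Equiv.swap 0 1)

lemma perm3_cases : ∀ σ : Equiv.Perm (Fin 3), σ = 1 ∨ σ = Equiv.swap 0 1 ∨ σ = Equiv.swap 0 2 ∨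
    σ = Equiv.swap 1 2 ∨ σ = c3a ∨ σ = c3b := by decide

lemma inj3 {i j k : Fin n} (hij : i ≠ j) (hik : i ≠ k) (hjk : j ≠ k) :
    Function.Injective ![i, j, k] := by
  intro a b h
  fin_cases a <;> fin_cases b <;> simp_all

variable (A : Matrix (Fin n) (Fin n) ℝ)

lemma tv_one (row col : Fin 3 → Fin n) : tropVal A row col 1 =
    A (row 0) (col 0) + A (row 1) (col 1) + A (row 2) (col 2) := by
  simp [tropVal, Fin.sum_univ_three]

lemma tv_s01 (row col : Fin 3 → Fin n) : tropVal A row col (Equiv.swap 0 1) =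
    A (row 0) (col 1) + A (row 1) (col 0) + A (row 2) (col 2) := by
  simp [tropVal, Fin.sum_univ_three,
    show (Equiv.swap (0:Fin 3) 1) 0 = 1 by decide,
    show (Equiv.swap (0:Fin 3) 1) 1 = 0 by decide,
    show (Equiv.swap (0:Fin 3) 1) 2 = 2 by decide]

lemma tv_s02 (row col : Fin 3 → Fin n) : tropVal A row col (Equiv.swap 0 2) =
    A (row 0) (col 2) + A (row 1) (col 1) + A (row 2) (col 0) := by
  simp [tropVal, Fin.sum_univ_three,
    show (Equiv.swap (0:Fin 3) 2) 0 = 2 by decide,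
    show (Equiv.swap (0:Fin 3) 2) 1 = 1 by decide,
    show (Equiv.swap (0:Fin 3) 2) 2 = 0 by decide]

lemma tv_s12 (row col : Fin 3 → Fin n) : tropVal A row col (Equiv.swap 1 2) =
    A (row 0) (col 0) + A (row 1) (col 2) + A (row 2) (col 1) := by
  simp [tropVal, Fin.sum_univ_three,
    show (Equiv.swap (1:Fin 3) 2) 0 = 0 by decide,
    show (Equiv.swap (1:Fin 3) 2) 1 = 2 by decide,
    show (Equiv.swap (1:Fin 3) 2) 2 = 1 by decide]

lemma tv_c3a (row col : Fin 3 → Fin n) : tropVal A row col c3a =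
    A (row 0) (col 1) + A (row 1) (col 2) + A (row 2) (col 0) := by
  simp [tropVal, Fin.sum_univ_three,
    show (c3a : Equiv.Perm (Fin 3)) 0 = 1 by decide,
    show (c3a : Equiv.Perm (Fin 3)) 1 = 2 by decide,
    show (c3a : Equiv.Perm (Fin 3)) 2 = 0 by decide]

lemma tv_c3b (row col : Fin 3 → Fin n) : tropVal A row col c3b =
    A (row 0) (col 2) + A (row 1) (col 0) + A (row 2) (col 1) := by
  simp [tropVal, Fin.sum_univ_three,
    show (c3b : Equiv.Perm (Fin 3)) 0 = 2 by decide,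
    show (c3b : Equiv.Perm (Fin 3)) 1 = 0 by decide,
    show (c3b : Equiv.Perm (Fin 3)) 2 = 1 by decide]

lemma tp3 (row col : Fin 3 → Fin n) (σ : Equiv.Perm (Fin 3)) : tropPairs row col σ =
    {Sym2.mk (row 0) (col (σ 0)), Sym2.mk (row 1) (col (σ 1)), Sym2.mk (row 2) (col (σ 2))} := by
  simp [tropPairs, show (Finset.univ.val : Multiset (Fin 3)) = {0, 1, 2} from rfl]

lemma rot3 (a b c : Sym2 (Fin n)) : ({a, b, c} : Multiset (Sym2 (Fin n))) = {c, a, b} := by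
  change a ::ₘ b ::ₘ c ::ₘ 0 = c ::ₘ a ::ₘ b ::ₘ 0
  rw [Multiset.cons_swap b c, Multiset.cons_swap a c]

lemma unique_min {row col : Fin 3 → Fin n} (hsing : SymTropSing A row col)
    (σ₀ : Equiv.Perm (Fin 3))
    (h : ∀ σ : Equiv.Perm (Fin 3), σ ≠ σ₀ → tropVal A row col σ₀ < tropVal A row col σ) :
    False := by
  obtain ⟨σ, τ, hne, hσ, hτ⟩ := hsing
  have hs : σ = σ₀ := by
    by_contra hc
    exact absurd (hσ σ₀) (not_le.mpr (h σ hc))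
  have ht : τ = σ₀ := by
    by_contra hc
    exact absurd (hτ σ₀) (not_le.mpr (h τ hc))
  exact hne (by rw [hs, ht])

lemma cycles_min {row col : Fin 3 → Fin n} (hsing : SymTropSing A row col)
    (h : ∀ σ : Equiv.Perm (Fin 3), σ ≠ c3a → σ ≠ c3b →
      tropVal A row col c3a < tropVal A row col σ)
    (hpairs : tropPairs row col c3a = tropPairs row col c3b) : False := by
  obtain ⟨σ, τ, hne, hσ, hτ⟩ := hsing
  have key : ∀ ρ : Equiv.Perm (Fin 3), Minimizing A row col ρ → ρ = c3a ∨ ρ = c3b := by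
    intro ρ hρ
    by_contra hc
    push_neg at hc
    exact absurd (hρ c3a) (not_le.mpr (h ρ hc.1 hc.2))
  rcases key σ hσ with rfl | rfl <;> rcases key τ hτ with rfl | rfl <;>
    first
      | exact hne rfl
      | exact hne hpairs
      | exact hne hpairs.symm


section FC
variable (hall : ∀ row col : Fin 3 → Fin n, Function.Injective row → Function.Injective col →
    SymTropSing A row col)
  (hnn : ∀ a b : Fin n, 0 ≤ A a b) (hsym : A.IsSymm)

include hall hnn hsym

lemma FC1 {i j k : Fin n} (hij : i ≠ j) (hik : i ≠ k) (hjk : j ≠ k)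
    (ha : 0 < A i i) (hb : 0 < A j j) (hc : 0 < A k k)
    (hp : A i j = 0) (hq : A i k = 0) (hr : A j k = 0) : False := by
  have e1 : A j i = A i j := hsym.apply i j
  have e2 : A k i = A i k := hsym.apply i k
  have e3 : A k j = A j k := hsym.apply j k
  refine cycles_min A (hall ![i,j,k] ![i,j,k] (inj3 hij hik hjk) (inj3 hij hik hjk)) ?_ ?_
  · intro σ h1 h2
    rcases perm3_cases σ with rfl | rfl | rfl | rfl | rfl | rfl <;>
      first
        | exact absurd rfl h1
        | exact absurd rfl h2
        | (simp only [tv_one, tv_s01, tv_s02, tv_s12, tv_c3a, tv_c3b,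
            Matrix.cons_val_zero, Matrix.cons_val_one, Matrix.head_cons, Matrix.cons_val_two,
            Matrix.tail_cons] ; linarith)
  · rw [tp3, tp3]
    simp only [Matrix.cons_val_zero, Matrix.cons_val_one, Matrix.head_cons, Matrix.cons_val_two,
      Matrix.tail_cons, show (c3a : Equiv.Perm (Fin 3)) 0 = 1 by decide,
      show (c3a : Equiv.Perm (Fin 3)) 1 = 2 by decide,
      show (c3a : Equiv.Perm (Fin 3)) 2 = 0 by decide,
      show (c3b : Equiv.Perm (Fin 3)) 0 = 2 by decide,
      show (c3b : Equiv.Perm (Fin 3)) 1 = 0 by decide,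
      show (c3b : Equiv.Perm (Fin 3)) 2 = 1 by decide]
    rw [show Sym2.mk j i = Sym2.mk i j from Sym2.eq_swap,
      show Sym2.mk k j = Sym2.mk j k from Sym2.eq_swap,
      show Sym2.mk k i = Sym2.mk i k from Sym2.eq_swap]
    exact rot3 _ _ _

lemma FC2 {i j k : Fin n} (hij : i ≠ j) (hik : i ≠ k) (hjk : j ≠ k)
    (ha : 0 < A i i) (hp : 0 < A i j) (hb : A j j = 0) (hq : A i k = 0) : False := by
  have e1 : A j i = A i j := hsym.apply i j
  have e2 : A k i = A i k := hsym.apply i k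
  have e3 : A k j = A j k := hsym.apply j k
  have n1 := hnn j k
  have n2 := hnn k k
  refine unique_min A (hall ![i,j,k] ![i,j,k] (inj3 hij hik hjk) (inj3 hij hik hjk))
    (Equiv.swap 0 2) ?_
  intro σ hσ
  rcases perm3_cases σ with rfl | rfl | rfl | rfl | rfl | rfl <;>
    first
      | exact absurd rfl hσ
      | (simp only [tv_one, tv_s01, tv_s02, tv_s12, tv_c3a, tv_c3b,
          Matrix.cons_val_zero, Matrix.cons_val_one, Matrix.head_cons, Matrix.cons_val_two,
          Matrix.tail_cons] ; linarith)

lemma FC3 {i j k l : Fin n} (hij : i ≠ j) (hik : i ≠ k) (hil : i ≠ l) (hjk : j ≠ k)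
    (hjl : j ≠ l) (hkl : k ≠ l)
    (hp : 0 < A i j) (hq : 0 < A i k) (hb : 0 < A j j) (hc : 0 < A k k)
    (hz1 : A i l = 0) (hz2 : A j k = 0) : False := by
  have e3 : A k j = A j k := hsym.apply j k
  have n1 := hnn j l
  have n2 := hnn k l
  refine unique_min A (hall ![i,j,k] ![j,k,l] (inj3 hij hik hjk) (inj3 hjk hjl hkl))
    (Equiv.swap 0 2) ?_
  intro σ hσ
  rcases perm3_cases σ with rfl | rfl | rfl | rfl | rfl | rfl <;>
    first
      | exact absurd rfl hσ
      | (simp only [tv_one, tv_s01, tv_s02, tv_s12, tv_c3a, tv_c3b,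
          Matrix.cons_val_zero, Matrix.cons_val_one, Matrix.head_cons, Matrix.cons_val_two,
          Matrix.tail_cons] ; linarith)

lemma FC4 {i j k : Fin n} (hij : i ≠ j) (hik : i ≠ k) (hjk : j ≠ k)
    (ha : A i i = 0) (hb : A j j = 0) (hc : A k k = 0)
    (hp : 0 < A i j) (hq : 0 < A i k) (hr : 0 < A j k) : False := by
  have e1 : A j i = A i j := hsym.apply i j
  have e2 : A k i = A i k := hsym.apply i k
  have e3 : A k j = A j k := hsym.apply j k
  refine unique_min A (hall ![i,j,k] ![i,j,k] (inj3 hij hik hjk) (inj3 hij hik hjk)) 1 ?_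
  intro σ hσ
  rcases perm3_cases σ with rfl | rfl | rfl | rfl | rfl | rfl <;>
    first
      | exact absurd rfl hσ
      | (simp only [tv_one, tv_s01, tv_s02, tv_s12, tv_c3a, tv_c3b,
          Matrix.cons_val_zero, Matrix.cons_val_one, Matrix.head_cons, Matrix.cons_val_two,
          Matrix.tail_cons] ; linarith)

lemma FC5 {i j k l : Fin n} (hij : i ≠ j) (hik : i ≠ k) (hil : i ≠ l) (hjk : j ≠ k)
    (hjl : j ≠ l) (hkl : k ≠ l)
    (hp : 0 < A i j) (hq : 0 < A j k) (hr : 0 < A k l)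
    (hz1 : A i k = 0) (hz2 : A i l = 0) (hz3 : A j l = 0)
    (hb : A j j = 0) (hc : A k k = 0) : False := by
  have e3 : A k j = A j k := hsym.apply j k
  refine unique_min A (hall ![i,j,k] ![j,k,l] (inj3 hij hik hjk) (inj3 hjk hjl hkl)) c3b ?_
  intro σ hσ
  rcases perm3_cases σ with rfl | rfl | rfl | rfl | rfl | rfl <;>
    first
      | exact absurd rfl hσ
      | (simp only [tv_one, tv_s01, tv_s02, tv_s12, tv_c3a, tv_c3b,
          Matrix.cons_val_zero, Matrix.cons_val_one, Matrix.head_cons, Matrix.cons_val_two,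
          Matrix.tail_cons] ; linarith)

end FC

lemma assemble {n : ℕ} (A : Matrix (Fin n) (Fin n) ℝ)
    (hnn : ∀ a b : Fin n, 0 ≤ A a b)
    (Z I₁ I₂ J KK : Finset (Fin n))
    (d12 : Disjoint Z I₁) (d13 : Disjoint Z I₂) (d14 : Disjoint Z J) (d15 : Disjoint Z KK)
    (d23 : Disjoint I₁ I₂) (d24 : Disjoint I₁ J) (d25 : Disjoint I₁ KK)
    (d34 : Disjoint I₂ J) (d35 : Disjoint I₂ KK) (d45 : Disjoint J KK)
    (hcover : Z ∪ I₁ ∪ I₂ ∪ J ∪ KK = Finset.univ)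
    (hI1 : ∀ i ∈ I₁, ∀ j ∈ I₁, 0 < A i j)
    (hI2 : ∀ i ∈ I₂, ∀ j ∈ I₂, 0 < A i j)
    (hKcol : ∀ k ∈ KK, ∃ j ∈ J, A j k ≠ 0)
    (hzero : ∀ i j : Fin n, ¬(i ∈ I₁ ∧ j ∈ I₁) → ¬(i ∈ I₂ ∧ j ∈ I₂) →
      ¬(i ∈ J ∧ j ∈ KK) → ¬(i ∈ KK ∧ j ∈ J) → A i j = 0)
    (hA0 : A ≠ 0) (hI1u : I₁ ≠ Finset.univ) (hI2u : I₂ ≠ Finset.univ) :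
    ∃ (π : Equiv.Perm (Fin n)) (z a b c d : ℕ), z + a + b + c + d = n ∧
      (∀ s t : Fin n, (s : ℕ) < z → A (π s) (π t) = 0) ∧
      (∀ s t : Fin n, z ≤ (s : ℕ) → (s : ℕ) < z + a → z ≤ (t : ℕ) → (t : ℕ) < z + a →
        0 < A (π s) (π t)) ∧
      (∀ s t : Fin n, z + a ≤ (s : ℕ) → (s : ℕ) < z + a + b → z + a ≤ (t : ℕ) →
        (t : ℕ) < z + a + b → 0 < A (π s) (π t)) ∧
      (∀ s t : Fin n, z + a + b ≤ (s : ℕ) → (s : ℕ) < z + a + b + c →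
        z + a + b + c ≤ (t : ℕ) → 0 ≤ A (π s) (π t)) ∧
      (∀ t : Fin n, z + a + b + c ≤ (t : ℕ) →
        ∃ s : Fin n, z + a + b ≤ (s : ℕ) ∧ (s : ℕ) < z + a + b + c ∧ A (π s) (π t) ≠ 0) ∧
      (∀ s t : Fin n,
        ¬(z ≤ (s : ℕ) ∧ (s : ℕ) < z + a ∧ z ≤ (t : ℕ) ∧ (t : ℕ) < z + a) →
        ¬(z + a ≤ (s : ℕ) ∧ (s : ℕ) < z + a + b ∧ z + a ≤ (t : ℕ) ∧ (t : ℕ) < z + a + b) →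
        ¬(z + a + b ≤ (s : ℕ) ∧ (s : ℕ) < z + a + b + c ∧ z + a + b + c ≤ (t : ℕ)) →
        ¬(z + a + b + c ≤ (s : ℕ) ∧ z + a + b ≤ (t : ℕ) ∧ (t : ℕ) < z + a + b + c) →
        A (π s) (π t) = 0) ∧
      A ≠ 0 ∧ a ≠ n ∧ b ≠ n := by
  classical
  set z := Z.card with hz
  set a := I₁.card with ha
  set b := I₂.card with hb
  set c := J.card with hc
  set d := KK.card with hd
  -- card sum
  have hn : z + a + b + c + d = n := by
    have e1 : ((Z ∪ I₁ ∪ I₂ ∪ J ∪ KK).card : ℕ) = n := by rw [hcover]; simp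
    rw [Finset.card_union_of_disjoint, Finset.card_union_of_disjoint,
      Finset.card_union_of_disjoint, Finset.card_union_of_disjoint] at e1
    · omega
    · exact d12
    · rw [Finset.disjoint_union_left]; exact ⟨d13, d23⟩
    · rw [Finset.disjoint_union_left, Finset.disjoint_union_left]
      exact ⟨⟨d14, d24⟩, d34⟩
    · rw [Finset.disjoint_union_left, Finset.disjoint_union_left,
        Finset.disjoint_union_left]
      exact ⟨⟨⟨d15, d25⟩, d35⟩, d45⟩
  set l1 := Z.sort (·≤·) with hl1
  set l2 := I₁.sort (·≤·) with hl2
  set l3 := I₂.sort (·≤·) with hl3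
  set l4 := J.sort (·≤·) with hl4
  set l5 := KK.sort (·≤·) with hl5
  set l : List (Fin n) := l1 ++ (l2 ++ (l3 ++ (l4 ++ l5))) with hl
  have len1 : l1.length = z := Finset.length_sort _
  have len2 : l2.length = a := Finset.length_sort _
  have len3 : l3.length = b := Finset.length_sort _
  have len4 : l4.length = c := Finset.length_sort _
  have len5 : l5.length = d := Finset.length_sort _
  have hlen : l.length = n := by simp [hl, len1, len2, len3, len4, len5]; omega
  have hmem1 : ∀ x, x ∈ l1 ↔ x ∈ Z := fun x => Finset.mem_sort _
  have hmem2 : ∀ x, x ∈ l2 ↔ x ∈ I₁ := fun x => Finset.mem_sort _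
  have hmem3 : ∀ x, x ∈ l3 ↔ x ∈ I₂ := fun x => Finset.mem_sort _
  have hmem4 : ∀ x, x ∈ l4 ↔ x ∈ J := fun x => Finset.mem_sort _
  have hmem5 : ∀ x, x ∈ l5 ↔ x ∈ KK := fun x => Finset.mem_sort _
  have hnd : l.Nodup := by
    refine List.Nodup.append (Finset.sort_nodup _ _) ?_ ?_
    · refine List.Nodup.append (Finset.sort_nodup _ _) ?_ ?_
      · refine List.Nodup.append (Finset.sort_nodup _ _) ?_ ?_
        · refine List.Nodup.append (Finset.sort_nodup _ _) (Finset.sort_nodup _ _) ?_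
          intro x hx hy
          exact Finset.disjoint_left.mp d45 ((hmem4 x).mp hx) ((hmem5 x).mp hy)
        · intro x hx hy
          rcases List.mem_append.mp hy with h | h
          · exact Finset.disjoint_left.mp d34 ((hmem3 x).mp hx) ((hmem4 x).mp h)
          · exact Finset.disjoint_left.mp d35 ((hmem3 x).mp hx) ((hmem5 x).mp h)
      · intro x hx hy
        rcases List.mem_append.mp hy with h | h
        · exact Finset.disjoint_left.mp d23 ((hmem2 x).mp hx) ((hmem3 x).mp h)
        · rcases List.mem_append.mp h with h' | h'
          · exact Finset.disjoint_left.mp d24 ((hmem2 x).mp hx) ((hmem4 x).mp h')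
          · exact Finset.disjoint_left.mp d25 ((hmem2 x).mp hx) ((hmem5 x).mp h')
    · intro x hx hy
      rcases List.mem_append.mp hy with h | h
      · exact Finset.disjoint_left.mp d12 ((hmem1 x).mp hx) ((hmem2 x).mp h)
      · rcases List.mem_append.mp h with h' | h'
        · exact Finset.disjoint_left.mp d13 ((hmem1 x).mp hx) ((hmem3 x).mp h')
        · rcases List.mem_append.mp h' with h'' | h''
          · exact Finset.disjoint_left.mp d14 ((hmem1 x).mp hx) ((hmem4 x).mp h'')
          · exact Finset.disjoint_left.mp d15 ((hmem1 x).mp hx) ((hmem5 x).mp h'')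
  have hinj : Function.Injective (fun s : Fin n => l.get (Fin.cast hlen.symm s)) := by
    intro s t h
    have h2 := List.nodup_iff_injective_get.mp hnd h
    exact Fin.cast_injective hlen.symm h2
  let π : Equiv.Perm (Fin n) :=
    Equiv.ofBijective _ ((Finite.injective_iff_bijective).mp hinj)
  have hπ : ∀ s : Fin n, π s = l[(s:ℕ)]'(by rw [hlen]; exact s.isLt) := fun s => rfl
  have g1 : ∀ s : Fin n, (s:ℕ) < z → π s ∈ Z := by
    intro s hs
    rw [hπ, List.getElem_append_left (by omega : (s:ℕ) < l1.length)]
    exact (hmem1 _).mp (List.getElem_mem _)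
  have g2 : ∀ s : Fin n, z ≤ (s:ℕ) → (s:ℕ) < z + a → π s ∈ I₁ := by
    intro s hs1 hs2
    rw [hπ, List.getElem_append_right (by omega : l1.length ≤ (s:ℕ)),
      List.getElem_append_left (by omega : (s:ℕ) - l1.length < l2.length)]
    exact (hmem2 _).mp (List.getElem_mem _)
  have g3 : ∀ s : Fin n, z + a ≤ (s:ℕ) → (s:ℕ) < z + a + b → π s ∈ I₂ := by
    intro s hs1 hs2
    rw [hπ, List.getElem_append_right (by omega : l1.length ≤ (s:ℕ)),
      List.getElem_append_right (by omega : l2.length ≤ (s:ℕ) - l1.length),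
      List.getElem_append_left (by omega : (s:ℕ) - l1.length - l2.length < l3.length)]
    exact (hmem3 _).mp (List.getElem_mem _)
  have g4 : ∀ s : Fin n, z + a + b ≤ (s:ℕ) → (s:ℕ) < z + a + b + c → π s ∈ J := by
    intro s hs1 hs2
    rw [hπ, List.getElem_append_right (by omega : l1.length ≤ (s:ℕ)),
      List.getElem_append_right (by omega : l2.length ≤ (s:ℕ) - l1.length),
      List.getElem_append_right (by omega : l3.length ≤ (s:ℕ) - l1.length - l2.length),
      List.getElem_append_left
        (by omega : (s:ℕ) - l1.length - l2.length - l3.length < l4.length)]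
    exact (hmem4 _).mp (List.getElem_mem _)
  have g5 : ∀ s : Fin n, z + a + b + c ≤ (s:ℕ) → π s ∈ KK := by
    intro s hs1
    have hs2 := s.isLt
    rw [hπ, List.getElem_append_right (by omega : l1.length ≤ (s:ℕ)),
      List.getElem_append_right (by omega : l2.length ≤ (s:ℕ) - l1.length),
      List.getElem_append_right (by omega : l3.length ≤ (s:ℕ) - l1.length - l2.length),
      List.getElem_append_right
        (by omega : l4.length ≤ (s:ℕ) - l1.length - l2.length - l3.length)]
    exact (hmem5 _).mp (List.getElem_mem _)
  have hcases : ∀ s : Fin n, (s:ℕ) < z ∨ (z ≤ (s:ℕ) ∧ (s:ℕ) < z + a) ∨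
      (z + a ≤ (s:ℕ) ∧ (s:ℕ) < z + a + b) ∨ (z + a + b ≤ (s:ℕ) ∧ (s:ℕ) < z + a + b + c) ∨
      z + a + b + c ≤ (s:ℕ) := by
    intro s; omega
  have m2 : ∀ s : Fin n, π s ∈ I₁ ↔ (z ≤ (s:ℕ) ∧ (s:ℕ) < z + a) := by
    intro s
    refine ⟨fun h => ?_, fun h => g2 s h.1 h.2⟩
    rcases hcases s with h' | h' | h' | h' | h'
    · exact absurd h (Finset.disjoint_left.mp d12 (g1 s h'))
    · exact h'
    · exact absurd h (Finset.disjoint_right.mp d23 (g3 s h'.1 h'.2))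
    · exact absurd h (Finset.disjoint_right.mp d24 (g4 s h'.1 h'.2))
    · exact absurd h (Finset.disjoint_right.mp d25 (g5 s h'))
  have m3 : ∀ s : Fin n, π s ∈ I₂ ↔ (z + a ≤ (s:ℕ) ∧ (s:ℕ) < z + a + b) := by
    intro s
    refine ⟨fun h => ?_, fun h => g3 s h.1 h.2⟩
    rcases hcases s with h' | h' | h' | h' | h'
    · exact absurd h (Finset.disjoint_left.mp d13 (g1 s h'))
    · exact absurd h (Finset.disjoint_left.mp d23 (g2 s h'.1 h'.2))
    · exact h'
    · exact absurd h (Finset.disjoint_right.mp d34 (g4 s h'.1 h'.2))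
    · exact absurd h (Finset.disjoint_right.mp d35 (g5 s h'))
  have m4 : ∀ s : Fin n, π s ∈ J ↔ (z + a + b ≤ (s:ℕ) ∧ (s:ℕ) < z + a + b + c) := by
    intro s
    refine ⟨fun h => ?_, fun h => g4 s h.1 h.2⟩
    rcases hcases s with h' | h' | h' | h' | h'
    · exact absurd h (Finset.disjoint_left.mp d14 (g1 s h'))
    · exact absurd h (Finset.disjoint_left.mp d24 (g2 s h'.1 h'.2))
    · exact absurd h (Finset.disjoint_left.mp d34 (g3 s h'.1 h'.2))
    · exact h'
    · exact absurd h (Finset.disjoint_right.mp d45 (g5 s h'))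
  have m5 : ∀ s : Fin n, π s ∈ KK ↔ z + a + b + c ≤ (s:ℕ) := by
    intro s
    refine ⟨fun h => ?_, fun h => g5 s h⟩
    rcases hcases s with h' | h' | h' | h' | h'
    · exact absurd h (Finset.disjoint_left.mp d15 (g1 s h'))
    · exact absurd h (Finset.disjoint_left.mp d25 (g2 s h'.1 h'.2))
    · exact absurd h (Finset.disjoint_left.mp d35 (g3 s h'.1 h'.2))
    · exact absurd h (Finset.disjoint_left.mp d45 (g4 s h'.1 h'.2))
    · exact h'
  refine ⟨π, z, a, b, c, d, hn, ?_, ?_, ?_, ?_, ?_, ?_, hA0, ?_, ?_⟩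
  · intro s t hs
    have hsZ := g1 s hs
    refine hzero _ _ ?_ ?_ ?_ ?_
    · rintro ⟨h1, -⟩; exact Finset.disjoint_left.mp d12 hsZ h1
    · rintro ⟨h1, -⟩; exact Finset.disjoint_left.mp d13 hsZ h1
    · rintro ⟨h1, -⟩; exact Finset.disjoint_left.mp d14 hsZ h1
    · rintro ⟨h1, -⟩; exact Finset.disjoint_left.mp d15 hsZ h1
  · intro s t h1 h2 h3 h4
    exact hI1 _ (g2 s h1 h2) _ (g2 t h3 h4)
  · intro s t h1 h2 h3 h4
    exact hI2 _ (g3 s h1 h2) _ (g3 t h3 h4)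
  · intro s t _ _ _
    exact hnn _ _
  · intro t ht
    obtain ⟨j, hjJ, hjne⟩ := hKcol _ (g5 t ht)
    have hj : π (π.symm j) = j := Equiv.apply_symm_apply _ _
    have hr := (m4 (π.symm j)).mp (by rw [hj]; exact hjJ)
    exact ⟨π.symm j, hr.1, hr.2, by rw [hj]; exact hjne⟩
  · intro s t h1 h2 h3 h4
    refine hzero _ _ ?_ ?_ ?_ ?_
    · rintro ⟨u1, u2⟩
      obtain ⟨v1, v2⟩ := (m2 s).mp u1
      obtain ⟨v3, v4⟩ := (m2 t).mp u2
      exact h1 ⟨v1, v2, v3, v4⟩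
    · rintro ⟨u1, u2⟩
      obtain ⟨v1, v2⟩ := (m3 s).mp u1
      obtain ⟨v3, v4⟩ := (m3 t).mp u2
      exact h2 ⟨v1, v2, v3, v4⟩
    · rintro ⟨u1, u2⟩
      obtain ⟨v1, v2⟩ := (m4 s).mp u1
      exact h3 ⟨v1, v2, (m5 t).mp u2⟩
    · rintro ⟨u1, u2⟩
      obtain ⟨v1, v2⟩ := (m4 t).mp u2
      exact h4 ⟨(m5 s).mp u1, v1, v2⟩
  · intro hcontra
    apply hI1u
    apply (Finset.card_eq_iff_eq_univ _).mp
    rw [Fintype.card_fin]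
    exact hcontra
  · intro hcontra
    apply hI2u
    apply (Finset.card_eq_iff_eq_univ _).mp
    rw [Fintype.card_fin]
    exact hcontra


end Stmt13

open Stmt13

/-- Lemma 4 of the paper: A symmetric matrix of symmetric tropical rank two, every
row of which has `0` as its minimal entry, can be brought by a diagonal permutation into a block
form with consecutive blocks `Z`, `I₁`, `I₂`, `J`, `K` (of sizes `z`, `a`, `b`, `c`, `d`): the
rows indexed by `Z` are zero, the `I₁ × I₁` and `I₂ × I₂` blocks are positive, the `J × K` block
is nonnegative with no zero column (its transpose sits in `K × J`), and all other entries vanish.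
Moreover `A` is not the zero matrix and is not a single positive block. -/
theorem stmt13 (n : ℕ) (A : Matrix (Fin n) (Fin n) ℝ) (hA : A.IsSymm)
    (htrop : symTropicalRank A = 2)
    (hmin : ∀ i : Fin n, (∀ j, 0 ≤ A i j) ∧ ∃ j, A i j = 0) :
    ∃ (π : Equiv.Perm (Fin n)) (z a b c d : ℕ), z + a + b + c + d = n ∧
      (∀ s t : Fin n, (s : ℕ) < z → A (π s) (π t) = 0) ∧
      (∀ s t : Fin n, z ≤ (s : ℕ) → (s : ℕ) < z + a → z ≤ (t : ℕ) → (t : ℕ) < z + a →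
        0 < A (π s) (π t)) ∧
      (∀ s t : Fin n, z + a ≤ (s : ℕ) → (s : ℕ) < z + a + b → z + a ≤ (t : ℕ) →
        (t : ℕ) < z + a + b → 0 < A (π s) (π t)) ∧
      (∀ s t : Fin n, z + a + b ≤ (s : ℕ) → (s : ℕ) < z + a + b + c →
        z + a + b + c ≤ (t : ℕ) → 0 ≤ A (π s) (π t)) ∧
      (∀ t : Fin n, z + a + b + c ≤ (t : ℕ) →
        ∃ s : Fin n, z + a + b ≤ (s : ℕ) ∧ (s : ℕ) < z + a + b + c ∧ A (π s) (π t) ≠ 0) ∧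
      (∀ s t : Fin n,
        ¬(z ≤ (s : ℕ) ∧ (s : ℕ) < z + a ∧ z ≤ (t : ℕ) ∧ (t : ℕ) < z + a) →
        ¬(z + a ≤ (s : ℕ) ∧ (s : ℕ) < z + a + b ∧ z + a ≤ (t : ℕ) ∧ (t : ℕ) < z + a + b) →
        ¬(z + a + b ≤ (s : ℕ) ∧ (s : ℕ) < z + a + b + c ∧ z + a + b + c ≤ (t : ℕ)) →
        ¬(z + a + b + c ≤ (s : ℕ) ∧ z + a + b ≤ (t : ℕ) ∧ (t : ℕ) < z + a + b + c) →
        A (π s) (π t) = 0) ∧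
      A ≠ 0 ∧ a ≠ n ∧ b ≠ n := by
  classical
  obtain ⟨hall, i0, j0, k0, l0, hlt1, hlt2, hne2⟩ := rank_facts A htrop
  have hnn : ∀ a b : Fin n, 0 ≤ A a b := fun a b => (hmin a).1 b
  have hA0 : A ≠ 0 := by
    intro h
    apply hne2
    simp [h]
  have psym : ∀ a b : Fin n, 0 < A a b → 0 < A b a := by
    intro a b h
    rwa [hA.apply a b]
  have zop : ∀ a b : Fin n, ¬ 0 < A a b → A a b = 0 :=
    fun a b h => le_antisymm (not_lt.mp h) (hnn a b)
  have pnz : ∀ a b : Fin n, 0 < A a b → a ≠ b ∨ True := fun _ _ _ => Or.inr trivial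
  -- D1: loop propagation
  have D1 : ∀ i j : Fin n, 0 < A i i → 0 < A i j → 0 < A j j := by
    intro i j ha hp
    by_cases hij : i = j
    · rwa [← hij]
    by_contra h
    obtain ⟨-, k, hk⟩ := hmin i
    have hki : k ≠ i := fun hh => by subst hh; linarith
    have hkj : k ≠ j := fun hh => by subst hh; linarith
    exact FC2 A hall hnn hA hij (Ne.symm hki) (Ne.symm hkj) ha hp (zop _ _ h) hk
  -- nloop
  have nloop : ∀ i j : Fin n, A i i = 0 → 0 < A i j → A j j = 0 := by
    intro i j hii hij
    by_contra h
    have hjj : 0 < A j j := lt_of_le_of_ne (hnn j j) (fun hh => h hh.symm)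
    have := D1 j i hjj (psym i j hij)
    rw [hii] at this
    exact lt_irrefl 0 this
  -- Ntri
  have Ntri : ∀ i j k : Fin n, A i i = 0 → 0 < A i j → 0 < A i k → 0 < A j k → False := by
    intro i j k hii hp hq hr
    have hjj := nloop i j hii hp
    have hkk := nloop i k hii hq
    have hij : i ≠ j := fun h => by subst h; linarith
    have hik : i ≠ k := fun h => by subst h; linarith
    have hjk : j ≠ k := fun h => by subst h; linarith
    exact FC4 A hall hnn hA hij hik hjk hii hjj hkk hp hq hr
  -- NP4
  have NP4 : ∀ i j k l : Fin n, A j j = 0 → A k k = 0 → 0 < A i j → 0 < A j k → 0 < A k l →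
      A i k = 0 → A j l = 0 → i ≠ l → 0 < A i l := by
    intro i j k l hjj hkk hp hq hr hik hjl hil
    by_cases hik' : i = k
    · rw [hik']; exact hr
    by_cases hjl' : j = l
    · rw [← hjl']; exact hp
    by_contra h
    have hij : i ≠ j := fun hh => by subst hh; linarith
    have hjk : j ≠ k := fun hh => by subst hh; linarith
    have hkl : k ≠ l := fun hh => by subst hh; linarith
    exact FC5 A hall hnn hA hij hik' hil hjk hjl' hkl hp hq hr hik (zop _ _ h) hjl hjj hkk
  -- ltrans : two loop-neighbors of a vertex are adjacent
  have ltrans : ∀ w x y : Fin n, 0 < A x x → 0 < A y y → 0 < A w x → 0 < A w y →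
      0 < A x y := by
    intro w x y hx hy hwx hwy
    by_cases hwx' : w = x
    · rw [← hwx']; exact hwy
    by_cases hwy' : w = y
    · rw [← hwy']; exact psym _ _ hwx
    by_cases hxy' : x = y
    · rw [← hxy']; exact hx
    by_contra h
    have hww : 0 < A w w := D1 x w hx (psym w x hwx)
    obtain ⟨-, l, hl⟩ := hmin w
    have hlw : l ≠ w := fun hh => by subst hh; linarith
    have hlx : l ≠ x := fun hh => by subst hh; linarith
    have hly : l ≠ y := fun hh => by subst hh; linarith
    exact FC3 A hall hnn hA hwx' hwy' (Ne.symm hlw) hxy' (Ne.symm hlx) (Ne.symm hly)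
      hwx hwy hx hy hl (zop _ _ h)
  -- the common-neighbor relation and its classes
  set R : Fin n → Fin n → Prop := fun i j => ∃ w, 0 < A i w ∧ 0 < A j w with hR
  have Rsym : ∀ a b : Fin n, R a b → R b a := by
    rintro a b ⟨u, h1, h2⟩; exact ⟨u, h2, h1⟩
  have Rtrans : ∀ i j l : Fin n, A i i = 0 → R i j → R j l → R i l := by
    rintro i j l hii ⟨k, hik, hjk⟩ ⟨m, hjm, hlm⟩
    have hkk : A k k = 0 := nloop i k hii hik
    have hjj : A j j = 0 := nloop k j hkk (psym j k hjk)
    by_cases hkm : k = m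
    · exact ⟨k, hik, by rw [hkm]; exact hlm⟩
    by_cases hij : i = j
    · exact ⟨m, by rw [hij]; exact hjm, hlm⟩
    have hkm0 : A k m = 0 := by
      by_contra h
      exact Ntri j k m hjj hjk hjm (lt_of_le_of_ne (hnn k m) (fun hh => h hh.symm))
    have hij0 : A i j = 0 := by
      by_contra h
      exact Ntri i j k hii (lt_of_le_of_ne (hnn i j) (fun hh => h hh.symm)) hik hjk
    have him : i ≠ m := by
      intro hh
      subst hh
      have e := hA.apply i j
      linarith
    exact ⟨m, NP4 i k j m hkk hjj hik (psym j k hjk) hjm hij0 hkm0 him, hlm⟩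
  set C : Fin n → Finset (Fin n) := fun i => Finset.univ.filter (fun j => R i j) with hC
  set P : Fin n → Finset (Fin n) :=
    fun i => Finset.univ.filter (fun j => ∃ w, 0 < A i w ∧ R w j) with hP
  have memC : ∀ i x : Fin n, x ∈ C i ↔ R i x := by
    intro i x; simp [hC]
  have memP : ∀ i x : Fin n, x ∈ P i ↔ ∃ w, 0 < A i w ∧ R w x := by
    intro i x; simp [hP]
  have Cswap : ∀ i j : Fin n, A i i = 0 → 0 < A i j → C j = P i := by
    intro i j hii hij
    ext x
    rw [memC, memP]
    constructor
    · intro hjx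
      exact ⟨j, hij, hjx⟩
    · rintro ⟨w, hiw, hwx⟩
      have hjj : A j j = 0 := nloop i j hii hij
      have hjw : R j w := ⟨i, psym i j hij, psym i w hiw⟩
      exact Rtrans j w x hjj hjw hwx
  set Z := Finset.univ.filter (fun i : Fin n => ∀ j, A i j = 0) with hZ
  set NN := Finset.univ.filter (fun i : Fin n => A i i = 0 ∧ ∃ j, 0 < A i j) with hNN
  have hNmem : ∀ i : Fin n, i ∈ NN ↔ (A i i = 0 ∧ ∃ j, 0 < A i j) := by
    intro i; simp [hNN]
  set J := NN.filter (fun i => (C i).min < (P i).min) with hJ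
  set KK := NN.filter (fun i => (P i).min < (C i).min) with hKK
  have hJNN : J ⊆ NN := Finset.filter_subset _ _
  have hKNN : KK ⊆ NN := Finset.filter_subset _ _
  have hCne : ∀ i ∈ NN, (C i).Nonempty := by
    intro i hi
    obtain ⟨hii, w, hw⟩ := (hNmem i).mp hi
    exact ⟨i, (memC i i).mpr ⟨w, hw, hw⟩⟩
  have hPne : ∀ i ∈ NN, (P i).Nonempty := by
    intro i hi
    obtain ⟨hii, w, hw⟩ := (hNmem i).mp hi
    exact ⟨w, (memP i w).mpr ⟨w, hw, ⟨i, psym i w hw, psym i w hw⟩⟩⟩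
  have hCPdisj : ∀ i ∈ NN, Disjoint (C i) (P i) := by
    intro i hi
    obtain ⟨hii, -⟩ := (hNmem i).mp hi
    rw [Finset.disjoint_left]
    intro x hx hx'
    obtain ⟨w, hiw, hwx⟩ := (memP i x).mp hx'
    obtain ⟨u, hiu, hwu⟩ := Rtrans i x w hii ((memC i x).mp hx) (Rsym w x hwx)
    exact Ntri i w u hii hiw hiu hwu
  have minne : ∀ i ∈ NN, (C i).min ≠ (P i).min := by
    intro i hi heq
    have hc := hCne i hi
    have hp := hPne i hi
    have e1 : ((C i).min' hc : WithTop (Fin n)) = (C i).min := Finset.coe_min' hc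
    have e2 : ((P i).min' hp : WithTop (Fin n)) = (P i).min := Finset.coe_min' hp
    have e3 : (C i).min' hc = (P i).min' hp := by
      apply WithTop.coe_injective
      rw [e1, e2, heq]
    exact Finset.disjoint_left.mp (hCPdisj i hi) (Finset.min'_mem _ hc)
      (e3 ▸ Finset.min'_mem _ hp)
  have NNJK : ∀ i ∈ NN, i ∈ J ∨ i ∈ KK := by
    intro i hi
    rcases lt_or_gt_of_ne (minne i hi) with h | h
    · exact Or.inl (Finset.mem_filter.mpr ⟨hi, h⟩)
    · exact Or.inr (Finset.mem_filter.mpr ⟨hi, h⟩)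
  have sideflip : ∀ i j : Fin n, i ∈ NN → 0 < A i j → (i ∈ J → j ∈ KK) ∧ (i ∈ KK → j ∈ J) := by
    intro i j hi hij
    obtain ⟨hii, -⟩ := (hNmem i).mp hi
    have hjj : A j j = 0 := nloop i j hii hij
    have hjNN : j ∈ NN := (hNmem j).mpr ⟨hjj, i, psym i j hij⟩
    have e1 : C j = P i := Cswap i j hii hij
    have e2 : C i = P j := Cswap j i hjj (psym i j hij)
    constructor
    · intro hiJ
      have hlt : (C i).min < (P i).min := (Finset.mem_filter.mp hiJ).2
      refine Finset.mem_filter.mpr ⟨hjNN, ?_⟩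
      rw [← e2, e1]
      exact hlt
    · intro hiK
      have hlt : (P i).min < (C i).min := (Finset.mem_filter.mp hiK).2
      refine Finset.mem_filter.mpr ⟨hjNN, ?_⟩
      rw [← e2, e1]
      exact hlt
  have hzeroN : ∀ i j : Fin n, A i i = 0 → 0 < A i j →
      (i ∈ J ∧ j ∈ KK) ∨ (i ∈ KK ∧ j ∈ J) := by
    intro i j hii hij
    have hiNN : i ∈ NN := (hNmem i).mpr ⟨hii, j, hij⟩
    rcases NNJK i hiNN with hiJ | hiK
    · exact Or.inl ⟨hiJ, (sideflip i j hiNN hij).1 hiJ⟩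
    · exact Or.inr ⟨hiK, (sideflip i j hiNN hij).2 hiK⟩
  have hKcol : ∀ k ∈ KK, ∃ j ∈ J, A j k ≠ 0 := by
    intro k hk
    have hkNN := hKNN hk
    obtain ⟨hkk, w, hw⟩ := (hNmem k).mp hkNN
    exact ⟨w, (sideflip k w hkNN hw).2 hk, (psym k w hw).ne'⟩
  have dZNN : Disjoint Z NN := by
    rw [Finset.disjoint_left]
    intro x hx hx'
    obtain ⟨-, w, hw⟩ := (hNmem x).mp hx'
    have := (Finset.mem_filter.mp hx).2 w
    linarith
  have dZJ : Disjoint Z J := dZNN.mono_right hJNN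
  have dZK : Disjoint Z KK := dZNN.mono_right hKNN
  have dJK : Disjoint J KK := by
    rw [Finset.disjoint_left]
    intro x hx hx'
    exact absurd ((Finset.mem_filter.mp hx').2) (not_lt.mpr (le_of_lt (Finset.mem_filter.mp hx).2))
  set L := Finset.univ.filter (fun i : Fin n => 0 < A i i) with hLdef
  have dLNN : Disjoint L NN := by
    rw [Finset.disjoint_left]
    intro x hx hx'
    have h1 := (Finset.mem_filter.mp hx).2
    have h2 := ((hNmem x).mp hx').1
    linarith
  have dZL : Disjoint Z L := by
    rw [Finset.disjoint_left]
    intro x hx hx'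
    have h1 := (Finset.mem_filter.mp hx).2 x
    have h2 := (Finset.mem_filter.mp hx').2
    linarith
  by_cases hL : L.Nonempty
  · -- there exist loop vertices
    set i₀ := L.min' hL with hi₀def
    have hi₀ : 0 < A i₀ i₀ := (Finset.mem_filter.mp (L.min'_mem hL)).2
    set I₁ := Finset.univ.filter (fun j => 0 < A i₀ j) with hI₁def
    set I₂ := L \ I₁ with hI₂def
    have memI₁ : ∀ j : Fin n, j ∈ I₁ ↔ 0 < A i₀ j := by intro j; simp [hI₁def]
    have hI₁L : I₁ ⊆ L := by
      intro j hj
      exact Finset.mem_filter.mpr ⟨Finset.mem_univ _, D1 i₀ j hi₀ ((memI₁ j).mp hj)⟩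
    have hI₂L : I₂ ⊆ L := Finset.sdiff_subset
    have loopL : ∀ i ∈ L, 0 < A i i := fun i hi => (Finset.mem_filter.mp hi).2
    have hI1pos : ∀ i ∈ I₁, ∀ j ∈ I₁, 0 < A i j := by
      intro i hi j hj
      exact ltrans i₀ i j (loopL i (hI₁L hi)) (loopL j (hI₁L hj))
        ((memI₁ i).mp hi) ((memI₁ j).mp hj)
    have hI2pos : ∀ i ∈ I₂, ∀ j ∈ I₂, 0 < A i j := by
      intro i hi j hj
      by_contra h
      have hij0 := zop _ _ h
      have hiL := hI₂L hi
      have hjL := hI₂L hj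
      have hii := loopL i hiL
      have hjj := loopL j hjL
      have h1 : A i₀ i = 0 := zop _ _ (fun hh => (Finset.mem_sdiff.mp hi).2 ((memI₁ i).mpr hh))
      have h2 : A i₀ j = 0 := zop _ _ (fun hh => (Finset.mem_sdiff.mp hj).2 ((memI₁ j).mpr hh))
      have n1 : i₀ ≠ i := fun hh => by rw [← hh] at h1; linarith
      have n2 : i₀ ≠ j := fun hh => by rw [← hh] at h2; linarith
      have n3 : i ≠ j := fun hh => by rw [← hh] at hij0; linarith
      exact FC1 A hall hnn hA n1 n2 n3 hi₀ hii hjj h1 h2 hij0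
    have dZI1 : Disjoint Z I₁ := dZL.mono_right hI₁L
    have dZI2 : Disjoint Z I₂ := dZL.mono_right hI₂L
    have dI1I2 : Disjoint I₁ I₂ := Finset.disjoint_sdiff
    have dI1J : Disjoint I₁ J := (dLNN.mono_left hI₁L).mono_right hJNN
    have dI1K : Disjoint I₁ KK := (dLNN.mono_left hI₁L).mono_right hKNN
    have dI2J : Disjoint I₂ J := (dLNN.mono_left hI₂L).mono_right hJNN
    have dI2K : Disjoint I₂ KK := (dLNN.mono_left hI₂L).mono_right hKNN
    have hcover : Z ∪ I₁ ∪ I₂ ∪ J ∪ KK = Finset.univ := by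
      apply Finset.eq_univ_of_forall
      intro i
      simp only [Finset.mem_union]
      by_cases h1 : ∀ j, A i j = 0
      · exact Or.inl (Or.inl (Or.inl (Or.inl (Finset.mem_filter.mpr ⟨Finset.mem_univ _, h1⟩))))
      · push_neg at h1
        obtain ⟨j, hj⟩ := h1
        have hij : 0 < A i j := lt_of_le_of_ne (hnn i j) (Ne.symm hj)
        by_cases hii : 0 < A i i
        · have hiL : i ∈ L := Finset.mem_filter.mpr ⟨Finset.mem_univ _, hii⟩
          by_cases hI1 : i ∈ I₁
          · exact Or.inl (Or.inl (Or.inl (Or.inr hI1)))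
          · exact Or.inl (Or.inl (Or.inr (Finset.mem_sdiff.mpr ⟨hiL, hI1⟩)))
        · have hii0 := zop _ _ hii
          have hiNN : i ∈ NN := (hNmem i).mpr ⟨hii0, j, hij⟩
          rcases NNJK i hiNN with h | h
          · exact Or.inl (Or.inr h)
          · exact Or.inr h
    have hzero : ∀ i j : Fin n, ¬(i ∈ I₁ ∧ j ∈ I₁) → ¬(i ∈ I₂ ∧ j ∈ I₂) →
        ¬(i ∈ J ∧ j ∈ KK) → ¬(i ∈ KK ∧ j ∈ J) → A i j = 0 := by
      intro i j h1 h2 h3 h4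
      by_contra hne
      have hij : 0 < A i j := lt_of_le_of_ne (hnn i j) (Ne.symm hne)
      by_cases hii : 0 < A i i
      · have hjj : 0 < A j j := D1 i j hii hij
        have hiL : i ∈ L := Finset.mem_filter.mpr ⟨Finset.mem_univ _, hii⟩
        have hjL : j ∈ L := Finset.mem_filter.mpr ⟨Finset.mem_univ _, hjj⟩
        by_cases hiI1 : i ∈ I₁
        · refine h1 ⟨hiI1, (memI₁ j).mpr ?_⟩
          exact ltrans i i₀ j hi₀ hjj (psym i₀ i ((memI₁ i).mp hiI1)) hij
        · have hjI1 : j ∉ I₁ := by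
            intro hjI1
            exact hiI1 ((memI₁ i).mpr
              (ltrans j i₀ i hi₀ hii (psym i₀ j ((memI₁ j).mp hjI1)) (psym i j hij)))
          exact h2 ⟨Finset.mem_sdiff.mpr ⟨hiL, hiI1⟩, Finset.mem_sdiff.mpr ⟨hjL, hjI1⟩⟩
      · rcases hzeroN i j (zop _ _ hii) hij with ⟨u, v⟩ | ⟨u, v⟩
        · exact h3 ⟨u, v⟩
        · exact h4 ⟨u, v⟩
    have hI1u : I₁ ≠ Finset.univ := by
      intro hu
      obtain ⟨-, l, hl⟩ := hmin i₀
      have : l ∈ I₁ := hu ▸ Finset.mem_univ l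
      have := (memI₁ l).mp this
      linarith
    have hI2u : I₂ ≠ Finset.univ := by
      intro hu
      have h1 : i₀ ∈ I₁ := (memI₁ i₀).mpr hi₀
      have h2 : i₀ ∈ I₂ := hu ▸ Finset.mem_univ i₀
      exact (Finset.mem_sdiff.mp h2).2 h1
    exact assemble A hnn Z I₁ I₂ J KK dZI1 dZI2 dZJ dZK dI1I2 dI1J dI1K dI2J dI2K dJK
      hcover hI1pos hI2pos hKcol hzero hA0 hI1u hI2u
  · -- no loop vertices
    have noloop : ∀ i : Fin n, A i i = 0 := by
      intro i
      apply zop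
      intro h
      exact hL ⟨i, Finset.mem_filter.mpr ⟨Finset.mem_univ _, h⟩⟩
    have hcover : Z ∪ ∅ ∪ ∅ ∪ J ∪ KK = Finset.univ := by
      apply Finset.eq_univ_of_forall
      intro i
      simp only [Finset.mem_union, Finset.notMem_empty, or_false, false_or]
      by_cases h1 : ∀ j, A i j = 0
      · exact Or.inl (Or.inl (Finset.mem_filter.mpr ⟨Finset.mem_univ _, h1⟩))
      · push_neg at h1
        obtain ⟨j, hj⟩ := h1
        have hij : 0 < A i j := lt_of_le_of_ne (hnn i j) (Ne.symm hj)
        have hiNN : i ∈ NN := (hNmem i).mpr ⟨noloop i, j, hij⟩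
        rcases NNJK i hiNN with h | h
        · exact Or.inl (Or.inr h)
        · exact Or.inr h
    have hzero : ∀ i j : Fin n, ¬(i ∈ (∅ : Finset (Fin n)) ∧ j ∈ (∅ : Finset (Fin n))) →
        ¬(i ∈ (∅ : Finset (Fin n)) ∧ j ∈ (∅ : Finset (Fin n))) →
        ¬(i ∈ J ∧ j ∈ KK) → ¬(i ∈ KK ∧ j ∈ J) → A i j = 0 := by
      intro i j h1 h2 h3 h4
      by_contra hne
      have hij : 0 < A i j := lt_of_le_of_ne (hnn i j) (Ne.symm hne)
      rcases hzeroN i j (noloop i) hij with ⟨u, v⟩ | ⟨u, v⟩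
      · exact h3 ⟨u, v⟩
      · exact h4 ⟨u, v⟩
    have huniv : (Finset.univ : Finset (Fin n)).Nonempty := ⟨i0, Finset.mem_univ _⟩
    have hEu : (∅ : Finset (Fin n)) ≠ Finset.univ := by
      intro h
      rw [← h] at huniv
      exact Finset.not_nonempty_empty huniv
    exact assemble A hnn Z ∅ ∅ J KK (Finset.disjoint_empty_right _)
      (Finset.disjoint_empty_right _) dZJ dZK (Finset.disjoint_empty_right _)
      (Finset.disjoint_empty_left _) (Finset.disjoint_empty_left _)
      (Finset.disjoint_empty_left _) (Finset.disjoint_empty_left _) dJK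
      hcover (by simp) (by simp) hKcol hzero hA0 hEu hEu

end
end
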